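/- arXiv:1411.7256 — 11 statements merged into one kernel-verified Lean document; each statement's English description precedes it below -/
import Mathlib

section
/- For every Borel set A ⊆ ℝ, the family of Gamma laws (γ_t)_{t>0} satisfies the large deviations bounds −inf_{x ∈ interior(A)} Λ*_V(x) ≤ liminf_{t→0⁺} t·log γ_t(A) ≤ limsup_{t→0⁺} t·log γ_t(A) ≤ −inf_{x ∈ closure(A)} Λ*_V(x), where Λ*_V(x) := 2x/ξ² for x ≥ 0 and Λ*_V(x) := +∞ for x < 0 (with the convention inf ∅ = +∞). -/
/-!
The Gamma law of shape `μ` and rate `r` has density `r ^ μ * exp (-(r - 1) * x)` with respect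
to the Gamma law of rate `1`. For `r ≥ 1` this density is at most `r ^ μ * exp (-(r - 1) * x₀)`
on `[x₀, ∞)`, and at least `r ^ μ * exp (-(r - 1) * v)` on an interval `(u, v)`, whose mass
under the rate-`1` law is positive once `v > 0`. Since `t * λ_t → 2 / ξ²` and
`t * log λ_t → 0` as `t → 0⁺`, taking `t * log` of these bounds gives `-2 x₀ / ξ²` from above
and `-2 v / ξ²` from below. Choosing `x₀` as the least nonnegative point of `closure A`, and
letting `v` decrease to a nonnegative point of `interior A`, gives the two bounds.
-/

open MeasureTheory Filter Topology Real Set ProbabilityTheory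
open scoped ENNReal

namespace ProbabilityTheory

lemma measurable_gammaPDF (a r : ℝ) : Measurable (gammaPDF a r) :=
  (measurable_gammaPDFReal a r).ennreal_ofReal

lemma gammaPDF_eq_ofReal_mul_gammaPDF_one (a : ℝ) {r : ℝ} (hr : 0 ≤ r) (x : ℝ) :
    gammaPDF a r x = ENNReal.ofReal (r ^ a * exp (-(r - 1) * x)) * gammaPDF a 1 x := by
  rw [gammaPDF, gammaPDF, ← ENNReal.ofReal_mul (by positivity), gammaPDFReal, gammaPDFReal]
  congr 1
  split_ifs
  · rw [one_rpow, show -(r * x) = -(r - 1) * x + -(1 * x) by ring, exp_add]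
    ring
  · rw [mul_zero]

lemma gammaMeasure_le_of_subset_Iio_union_Ici {a r x : ℝ} (ha : 0 < a) (hr : 1 ≤ r)
    {A : Set ℝ} (hA : A ⊆ Iio 0 ∪ Ici x) :
    gammaMeasure a r A ≤ ENNReal.ofReal (r ^ a * exp (-(r - 1) * x)) := by
  have hS : MeasurableSet (Iio (0 : ℝ) ∪ Ici x) := measurableSet_Iio.union measurableSet_Ici
  calc gammaMeasure a r A ≤ gammaMeasure a r (Iio 0 ∪ Ici x) := measure_mono hA
    _ = ∫⁻ y in Iio 0 ∪ Ici x, gammaPDF a r y := withDensity_apply _ hS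
    _ ≤ ∫⁻ y in Iio 0 ∪ Ici x,
          ENNReal.ofReal (r ^ a * exp (-(r - 1) * x)) * gammaPDF a 1 y := by
        refine setLIntegral_mono' hS fun y hy => ?_
        rcases hy with hy | hy
        · rw [gammaPDF_of_neg hy]
          exact bot_le
        · rw [gammaPDF_eq_ofReal_mul_gammaPDF_one a (by linarith)]
          gcongr ENNReal.ofReal (_ * exp ?_) * _
          exact mul_le_mul_of_nonpos_left hy (by linarith)
    _ ≤ ∫⁻ y, ENNReal.ofReal (r ^ a * exp (-(r - 1) * x)) * gammaPDF a 1 y :=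
        setLIntegral_le_lintegral _ _
    _ = ENNReal.ofReal (r ^ a * exp (-(r - 1) * x)) := by
        rw [lintegral_const_mul _ (measurable_gammaPDF a 1),
          lintegral_gammaPDF_eq_one ha one_pos, mul_one]

lemma ofReal_mul_gammaMeasure_one_le_gammaMeasure_Ioo (a : ℝ) {r : ℝ} (hr : 1 ≤ r)
    (u v : ℝ) :
    ENNReal.ofReal (r ^ a * exp (-(r - 1) * v)) * gammaMeasure a 1 (Ioo u v)
      ≤ gammaMeasure a r (Ioo u v) := by
  rw [gammaMeasure, gammaMeasure, withDensity_apply _ measurableSet_Ioo,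
    withDensity_apply _ measurableSet_Ioo,
    ← lintegral_const_mul _ (measurable_gammaPDF a 1)]
  refine setLIntegral_mono' measurableSet_Ioo fun y hy => ?_
  rw [gammaPDF_eq_ofReal_mul_gammaPDF_one a (by linarith : 0 ≤ r) y]
  gcongr ENNReal.ofReal (_ * exp ?_) * _
  exact mul_le_mul_of_nonpos_left hy.2.le (by linarith)

lemma gammaMeasure_Ioo_pos {a r u v : ℝ} (ha : 0 < a) (hr : 0 < r) (huv : u < v) (hv : 0 < v) :
    0 < gammaMeasure a r (Ioo u v) := by
  rw [gammaMeasure, withDensity_apply _ measurableSet_Ioo,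
    setLIntegral_pos_iff (measurable_gammaPDF a r)]
  have hsub : Ioo (max u 0) v ⊆ Function.support (gammaPDF a r) ∩ Ioo u v := fun y hy =>
    ⟨(ENNReal.ofReal_pos.mpr (gammaPDFReal_pos ha hr ((le_max_right _ _).trans_lt hy.1))).ne',
      (le_max_left _ _).trans_lt hy.1, hy.2⟩
  refine lt_of_lt_of_le ?_ (measure_mono hsub)
  simpa [Real.volume_Ioo] using max_lt huv hv

end ProbabilityTheory

lemma tendsto_div_one_sub_exp_mul {b : ℝ} (hb : b ≠ 0) :
    Tendsto (fun t => t / (1 - exp (b * t))) (𝓝[≠] 0) (𝓝 (-b⁻¹)) := by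
  have hslope : Tendsto (fun t => (exp (b * t) - 1) / t) (𝓝[≠] 0) (𝓝 b) := by
    have hderiv := ((hasDerivAt_id (0 : ℝ)).const_mul b).exp
    rw [hasDerivAt_iff_tendsto_slope] at hderiv
    simpa [slope_fun_def_field] using hderiv
  refine ((hslope.inv₀ hb).neg).congr fun t => ?_
  rw [inv_div, ← neg_sub, div_neg, neg_neg]

lemma tendsto_mul_neg_two_mul_div_one_sub_exp {ξ b : ℝ} (hξ : ξ ≠ 0) (hb : b ≠ 0) :
    Tendsto (fun t => t * (-2 * b / (ξ ^ 2 * (1 - exp (b * t))))) (𝓝[≠] 0)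
      (𝓝 (2 / ξ ^ 2)) := by
  have hlim := (tendsto_div_one_sub_exp_mul hb).const_mul (-2 * b / ξ ^ 2)
  rw [show -2 * b / ξ ^ 2 * -b⁻¹ = 2 / ξ ^ 2 by field_simp] at hlim
  refine hlim.congr fun t => ?_
  rw [div_mul_div_comm, mul_div_assoc', mul_comm t]

section RateAsymptotics

variable {lam : ℝ → ℝ} {c : ℝ}

lemma tendsto_atTop_of_tendsto_mul (hc : 0 < c)
    (hlam : Tendsto (fun t => t * lam t) (𝓝[>] 0) (𝓝 c)) :
    Tendsto lam (𝓝[>] 0) atTop := by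
  refine (hlam.pos_mul_atTop hc tendsto_inv_nhdsGT_zero).congr' ?_
  filter_upwards [self_mem_nhdsWithin] with t (ht : 0 < t)
  field_simp

lemma tendsto_mul_log_of_tendsto_mul (hc : 0 < c)
    (hlam : Tendsto (fun t => t * lam t) (𝓝[>] 0) (𝓝 c)) :
    Tendsto (fun t => t * log (lam t)) (𝓝[>] 0) (𝓝 0) := by
  have ht : Tendsto (fun t : ℝ => t) (𝓝[>] 0) (𝓝 0) :=
    tendsto_nhdsWithin_of_tendsto_nhds tendsto_id
  have hlog := ht.mul (hlam.log hc.ne')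
  have hlog_self : Tendsto (fun t => t * log t) (𝓝[>] 0) (𝓝 0) := by
    simpa using (continuous_mul_log.tendsto 0).mono_left nhdsWithin_le_nhds
  have hdiff := hlog.sub hlog_self
  rw [zero_mul, sub_zero] at hdiff
  refine hdiff.congr' ?_
  filter_upwards [self_mem_nhdsWithin,
    (tendsto_atTop_of_tendsto_mul hc hlam).eventually_gt_atTop 0] with t (ht : 0 < t) hlt
  rw [log_mul ht.ne' hlt.ne']
  ring

lemma tendsto_mul_log_rpow_mul_exp_mul (hc : 0 < c)
    (hlam : Tendsto (fun t => t * lam t) (𝓝[>] 0) (𝓝 c)) (a x : ℝ) {κ : ℝ} (hκ : 0 < κ) :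
    Tendsto (fun t => t * log (lam t ^ a * exp (-(lam t - 1) * x) * κ)) (𝓝[>] 0)
      (𝓝 (-(c * x))) := by
  have ht : Tendsto (fun t : ℝ => t) (𝓝[>] 0) (𝓝 0) :=
    tendsto_nhdsWithin_of_tendsto_nhds tendsto_id
  have hlim := (((tendsto_mul_log_of_tendsto_mul hc hlam).const_mul a).sub
    (hlam.mul_const x)).add ((ht.mul_const x).add (ht.mul_const (log κ)))
  rw [show a * 0 - c * x + (0 * x + 0 * log κ) = -(c * x) by ring] at hlim
  refine hlim.congr' ?_
  filter_upwards [(tendsto_atTop_of_tendsto_mul hc hlam).eventually_gt_atTop 0] with t hlt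
  rw [log_mul (by positivity) hκ.ne', log_mul (by positivity) (exp_ne_zero _), log_rpow hlt,
    log_exp]
  ring

end RateAsymptotics

section SpeedLogBounds

variable {l : Filter ℝ} [l.NeBot] {m : ℝ → ℝ≥0∞} {B : ℝ → ℝ} {y : ℝ}

lemma le_liminf_mul_log_of_ofReal_le (hB : Tendsto (fun t => t * log (B t)) l (𝓝 y))
    (hle : ∀ᶠ t in l, 0 ≤ t ∧ 0 < B t ∧ ENNReal.ofReal (B t) ≤ m t) :
    (y : EReal) ≤ liminf (fun t : ℝ => (t : EReal) * ENNReal.log (m t)) l := by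
  rw [← (EReal.tendsto_coe.mpr hB).liminf_eq]
  refine liminf_le_liminf (hle.mono fun t ⟨ht, hBt, hm⟩ => ?_)
  rw [EReal.coe_mul, ← ENNReal.log_ofReal_of_pos hBt]
  exact mul_le_mul_of_nonneg_left (ENNReal.log_monotone hm) (EReal.coe_nonneg.mpr ht)

lemma limsup_mul_log_le_of_le_ofReal (hB : Tendsto (fun t => t * log (B t)) l (𝓝 y))
    (hle : ∀ᶠ t in l, 0 ≤ t ∧ 0 < B t ∧ m t ≤ ENNReal.ofReal (B t)) :
    limsup (fun t : ℝ => (t : EReal) * ENNReal.log (m t)) l ≤ y := by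
  rw [← (EReal.tendsto_coe.mpr hB).limsup_eq]
  refine limsup_le_limsup (hle.mono fun t ⟨ht, hBt, hm⟩ => ?_)
  dsimp only
  rw [EReal.coe_mul, ← ENNReal.log_ofReal_of_pos hBt]
  exact mul_le_mul_of_nonneg_left (ENNReal.log_monotone hm) (EReal.coe_nonneg.mpr ht)

end SpeedLogBounds

section GammaLargeDeviations

variable {a c : ℝ} {lam : ℝ → ℝ} {A : Set ℝ}

lemma limsup_mul_log_gammaMeasure_le (ha : 0 < a) (hc : 0 < c)
    (hlam : Tendsto (fun t => t * lam t) (𝓝[>] 0) (𝓝 c)) {x : ℝ} (hA : A ⊆ Iio 0 ∪ Ici x) :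
    limsup (fun t : ℝ => (t : EReal) * ENNReal.log (gammaMeasure a (lam t) A)) (𝓝[>] 0)
      ≤ ((-(c * x) : ℝ) : EReal) := by
  refine limsup_mul_log_le_of_le_ofReal
    (tendsto_mul_log_rpow_mul_exp_mul hc hlam a x one_pos) ?_
  filter_upwards [self_mem_nhdsWithin,
    (tendsto_atTop_of_tendsto_mul hc hlam).eventually_ge_atTop 1] with t (ht : 0 < t) hr
  have hlam_pos : 0 < lam t := one_pos.trans_le hr
  refine ⟨ht.le, by positivity, ?_⟩
  rw [mul_one]
  exact gammaMeasure_le_of_subset_Iio_union_Ici ha hr hA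

lemma le_liminf_mul_log_gammaMeasure (ha : 0 < a) (hc : 0 < c)
    (hlam : Tendsto (fun t => t * lam t) (𝓝[>] 0) (𝓝 c)) {u v : ℝ} (huv : u < v) (hv : 0 < v)
    (hA : Ioo u v ⊆ A) :
    ((-(c * v) : ℝ) : EReal)
      ≤ liminf (fun t : ℝ => (t : EReal) * ENNReal.log (gammaMeasure a (lam t) A)) (𝓝[>] 0) := by
  have := isProbabilityMeasure_gammaMeasure ha one_pos
  set κ := (gammaMeasure a 1 (Ioo u v)).toReal
  have hκ : 0 < κ :=
    ENNReal.toReal_pos (gammaMeasure_Ioo_pos ha one_pos huv hv).ne' (measure_ne_top _ _)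
  refine le_liminf_mul_log_of_ofReal_le (tendsto_mul_log_rpow_mul_exp_mul hc hlam a v hκ) ?_
  filter_upwards [self_mem_nhdsWithin,
    (tendsto_atTop_of_tendsto_mul hc hlam).eventually_ge_atTop 1] with t (ht : 0 < t) hr
  have hlam_pos : 0 < lam t := one_pos.trans_le hr
  refine ⟨ht.le, by positivity, ?_⟩
  calc ENNReal.ofReal (lam t ^ a * exp (-(lam t - 1) * v) * κ)
      = ENNReal.ofReal (lam t ^ a * exp (-(lam t - 1) * v)) * ENNReal.ofReal κ :=
        ENNReal.ofReal_mul (by positivity)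
    _ ≤ ENNReal.ofReal (lam t ^ a * exp (-(lam t - 1) * v)) * gammaMeasure a 1 (Ioo u v) := by
        gcongr
        exact ENNReal.ofReal_toReal_le
    _ ≤ gammaMeasure a (lam t) (Ioo u v) :=
        ofReal_mul_gammaMeasure_one_le_gammaMeasure_Ioo a hr u v
    _ ≤ gammaMeasure a (lam t) A := measure_mono hA

end GammaLargeDeviations

noncomputable def linearRate (c x : ℝ) : EReal := if 0 ≤ x then ((c * x : ℝ) : EReal) else ⊤

lemma neg_iInf_interior_linearRate_le {c : ℝ} {A : Set ℝ} {L : EReal}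
    (h : ∀ u v, u < v → 0 < v → Ioo u v ⊆ A → ((-(c * v) : ℝ) : EReal) ≤ L) :
    -(⨅ x ∈ interior A, linearRate c x) ≤ L := by
  rw [EReal.neg_le]
  refine le_iInf₂ fun x hx => ?_
  unfold linearRate
  split_ifs with hx0
  · rw [EReal.neg_le, ← EReal.coe_neg]
    obtain ⟨l, u, ⟨hlx, hxu⟩, hsub⟩ :=
      mem_nhds_iff_exists_Ioo_subset.mp (mem_interior_iff_mem_nhds.mp hx)
    have hcont : Tendsto (fun v => ((-(c * v) : ℝ) : EReal)) (𝓝[>] x)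
        (𝓝 ((-(c * x) : ℝ) : EReal)) :=
      EReal.tendsto_coe.mpr (tendsto_nhdsWithin_of_tendsto_nhds
        ((continuous_const.mul continuous_id).neg.tendsto x))
    refine le_of_tendsto hcont ?_
    filter_upwards [Ioo_mem_nhdsGT hxu] with v hv
    exact h x v hv.1 (hx0.trans_lt hv.1) ((Ioo_subset_Ioo hlx.le hv.2.le).trans hsub)
  · exact le_top

lemma le_neg_iInf_closure_linearRate {c : ℝ} (hc : 0 < c) {A : Set ℝ} {U : EReal}
    (h : ∀ x, 0 ≤ x → A ⊆ Iio 0 ∪ Ici x → U ≤ ((-(c * x) : ℝ) : EReal)) :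
    U ≤ -(⨅ x ∈ closure A, linearRate c x) := by
  rw [EReal.le_neg]
  by_cases hS : (closure A ∩ Ici 0).Nonempty
  · have hbdd : BddBelow (closure A ∩ Ici 0) := ⟨0, fun y hy => hy.2⟩
    have hx0 := (isClosed_closure.inter isClosed_Ici).csInf_mem hS hbdd
    set x0 := sInf (closure A ∩ Ici 0)
    have hA : A ⊆ Iio 0 ∪ Ici x0 := fun y hy =>
      (lt_or_ge y 0).imp id fun hy0 => csInf_le hbdd ⟨subset_closure hy, hy0⟩
    calc ⨅ x ∈ closure A, linearRate c x ≤ linearRate c x0 := iInf₂_le x0 hx0.1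
      _ = ((c * x0 : ℝ) : EReal) := if_pos hx0.2
      _ ≤ -U := EReal.le_neg.mp (by simpa using h x0 hx0.2 hA)
  · -- `A ⊆ Iio 0`, so the hypothesis holds for every `x ≥ 0`, and `x → ∞` forces `U = ⊥`.
    have hA : A ⊆ Iio 0 := fun y hy =>
      mem_Iio.mpr <| not_le.mp fun hy0 => hS ⟨y, subset_closure hy, hy0⟩
    have hbot : Tendsto (fun x => ((-(c * x) : ℝ) : EReal)) atTop (𝓝 ⊥) :=
      EReal.tendsto_coe_atBot.comp
        (tendsto_neg_atTop_atBot.comp (tendsto_id.const_mul_atTop hc))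
    have hU : U ≤ ⊥ := ge_of_tendsto hbot (eventually_ge_atTop 0 |>.mono fun x hx =>
      h x hx (hA.trans subset_union_left))
    rw [le_bot_iff.mp hU, EReal.neg_bot]
    exact le_top

theorem gamma_small_time_LDP_general
    (ξ b : ℝ) (hξ : 0 < ξ) (hb : b < 0)
    (μ : ℝ) (hμ : 1 < μ)
    (lam : ℝ → ℝ) (hlam : ∀ t, lam t = -2 * b / (ξ ^ 2 * (1 - Real.exp (b * t))))
    (γ : ℝ → Measure ℝ)
    (hγ : ∀ t, 0 < t → γ t = ProbabilityTheory.gammaMeasure μ (lam t))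
    (Λstar : ℝ → EReal)
    (hΛstar : ∀ x, Λstar x = if 0 ≤ x then ((2 * x / ξ ^ 2 : ℝ) : EReal) else ⊤)
    (A : Set ℝ) :
    -(⨅ x ∈ interior A, Λstar x)
        ≤ liminf (fun t : ℝ => (t : EReal) * ENNReal.log (γ t A)) (𝓝[>] (0 : ℝ))
    ∧ liminf (fun t : ℝ => (t : EReal) * ENNReal.log (γ t A)) (𝓝[>] (0 : ℝ))
        ≤ limsup (fun t : ℝ => (t : EReal) * ENNReal.log (γ t A)) (𝓝[>] (0 : ℝ))
    ∧ limsup (fun t : ℝ => (t : EReal) * ENNReal.log (γ t A)) (𝓝[>] (0 : ℝ))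
        ≤ -(⨅ x ∈ closure A, Λstar x) := by
  have hμ_pos : 0 < μ := by linarith
  have hc : 0 < 2 / ξ ^ 2 := by positivity
  have hlim : Tendsto (fun t => t * lam t) (𝓝[>] 0) (𝓝 (2 / ξ ^ 2)) := by
    simpa only [hlam] using (tendsto_mul_neg_two_mul_div_one_sub_exp hξ.ne' hb.ne).mono_left
      (nhdsGT_le_nhdsNE 0)
  have hΛ : Λstar = linearRate (2 / ξ ^ 2) :=
    funext fun x => by rw [hΛstar, linearRate, div_mul_eq_mul_div]
  have hγA : (fun t : ℝ => (t : EReal) * ENNReal.log (γ t A)) =ᶠ[𝓝[>] 0]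
      fun t => (t : EReal) * ENNReal.log (gammaMeasure μ (lam t) A) :=
    eventually_nhdsWithin_of_forall fun t ht => by simp only [hγ t ht]
  rw [liminf_congr hγA, limsup_congr hγA, hΛ]
  exact ⟨neg_iInf_interior_linearRate_le fun u v huv hv hA =>
      le_liminf_mul_log_gammaMeasure hμ_pos hc hlim huv hv hA,
    liminf_le_limsup,
    le_neg_iInf_closure_linearRate hc fun _ _ hA =>
      limsup_mul_log_gammaMeasure_le hμ_pos hc hlim hA⟩

/-- Small-time large deviations principle for the Gamma laws `γ_t` (the time-`t`
marginals of the Feller diffusion started at 0), with the non-strictly-convex rate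
function `Λ*_V(x) = 2x/ξ²` for `x ≥ 0` and `+∞` for `x < 0`. -/
theorem gamma_small_time_LDP
    (a ξ b : ℝ) (ha : 0 < a) (hξ : 0 < ξ) (hb : b < 0)
    (μ : ℝ) (hμ_def : μ = 2 * a / ξ ^ 2) (hμ : 1 < μ)
    (lam : ℝ → ℝ) (hlam : ∀ t, lam t = -2 * b / (ξ ^ 2 * (1 - Real.exp (b * t))))
    (γ : ℝ → Measure ℝ)
    (hγ : ∀ t, 0 < t → γ t = ProbabilityTheory.gammaMeasure μ (lam t))
    (Λstar : ℝ → EReal)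
    (hΛstar : ∀ x, Λstar x = if 0 ≤ x then ((2 * x / ξ ^ 2 : ℝ) : EReal) else ⊤)
    (A : Set ℝ) (hA : MeasurableSet A) :
    -(⨅ x ∈ interior A, Λstar x)
        ≤ liminf (fun t : ℝ => (t : EReal) * ENNReal.log (γ t A)) (𝓝[>] (0 : ℝ))
    ∧ liminf (fun t : ℝ => (t : EReal) * ENNReal.log (γ t A)) (𝓝[>] (0 : ℝ))
        ≤ limsup (fun t : ℝ => (t : EReal) * ENNReal.log (γ t A)) (𝓝[>] (0 : ℝ))
    ∧ limsup (fun t : ℝ => (t : EReal) * ENNReal.log (γ t A)) (𝓝[>] (0 : ℝ))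
        ≤ -(⨅ x ∈ closure A, Λstar x) :=
  gamma_small_time_LDP_general ξ b hξ hb μ hμ lam hlam γ hγ Λstar hΛstar A
end

section
/- For every fixed x > 0, as t → 0⁺ one has the sharp tail asymptotic γ_t([x,∞)) = (e^{bx/ξ²}/Γ(μ)) · (2x/ξ²)^{μ−1} · t^{1−μ} · e^{−2x/(ξ² t)} · (1 + O(t)). -/
/-!
Write `λ = λ_t` and `p = μ - 1`. Then `γ_t([x, ∞)) = λ^μ / Γ(μ) · ∫_x^∞ z^p e^{-λz} dz`,
and bounding `z^p` below by `x^p` and above by `x^p e^{p(z - x)/x}` squeezes the integral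
between `x^p e^{-λx} / λ` and `x^p e^{-λx} / (λ - p/x)`. Hence the tail is
`(λx)^p e^{-λx} / Γ(μ) · (1 + O(1/λ))` as `λ → ∞`, and `1/λ_t = O(t)` because
`λ_t ≥ 2/(ξ² t)`. The Laurent expansion `1/(1 - e^{-s}) = 1/s + 1/2 + O(s)` gives
`λ_t x = 2x/(ξ² t) - bx/ξ² + O(t)`, and substituting this into `(λx)^p e^{-λx}` only changes
it by a factor `1 + O(t)`.
-/

open MeasureTheory Filter Topology Real Set ProbabilityTheory Asymptotics

section TailIntegral

variable {p x z lam : ℝ}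

lemma rpow_le_mul_exp_mul_sub (hp : 0 ≤ p) (hx : 0 < x) (hz : 0 ≤ z) :
    z ^ p ≤ x ^ p * exp (p / x * (z - x)) := by
  have hratio : (z / x) ^ p ≤ exp (p / x * (z - x)) := by
    calc (z / x) ^ p ≤ exp (z / x - 1) ^ p := by
          gcongr
          linarith [add_one_le_exp (z / x - 1)]
      _ = exp (p / x * (z - x)) := by
          rw [← exp_mul]
          congr 1
          field_simp
  rwa [div_rpow hz hx.le, div_le_iff₀ (by positivity), mul_comm] at hratio

lemma integral_exp_neg_mul_Ioi (hlam : 0 < lam) (x : ℝ) :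
    ∫ z in Ioi x, exp (-lam * z) = exp (-lam * x) / lam := by
  rw [integral_exp_mul_Ioi (neg_neg_of_pos hlam), neg_div_neg_eq]

lemma integrableOn_rpow_mul_exp_neg_mul_Ioi (hp : -1 < p) (hx : 0 ≤ x) (hlam : 0 < lam) :
    IntegrableOn (fun z => z ^ p * exp (-lam * z)) (Ioi x) := by
  refine ((integrableOn_rpow_mul_exp_neg_mul_rpow hp one_pos hlam).mono_set
    (Ioi_subset_Ioi hx)).congr_fun (fun z _ => ?_) measurableSet_Ioi
  simp only [rpow_one]

lemma le_integral_rpow_mul_exp_neg_mul_Ioi (hp : 0 ≤ p) (hx : 0 < x) (hlam : 0 < lam) :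
    x ^ p * exp (-lam * x) / lam ≤ ∫ z in Ioi x, z ^ p * exp (-lam * z) := by
  rw [mul_div_assoc, ← integral_exp_neg_mul_Ioi hlam, ← integral_const_mul]
  refine setIntegral_mono_on ((exp_neg_integrableOn_Ioi x hlam).const_mul _)
    (integrableOn_rpow_mul_exp_neg_mul_Ioi (by linarith) hx.le hlam) measurableSet_Ioi
    fun z hz => ?_
  gcongr
  exact le_of_lt hz

lemma integral_rpow_mul_exp_neg_mul_Ioi_le (hp : 0 ≤ p) (hx : 0 < x) (hlam : p / x < lam) :
    ∫ z in Ioi x, z ^ p * exp (-lam * z) ≤ x ^ p * exp (-lam * x) / (lam - p / x) := by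
  have hgap : 0 < lam - p / x := sub_pos.mpr hlam
  have hlam0 : 0 < lam := (div_nonneg hp hx.le).trans_lt hlam
  have hbound : ∀ z ∈ Ioi x, z ^ p * exp (-lam * z)
      ≤ x ^ p * exp (-(p / x) * x) * exp (-(lam - p / x) * z) := fun z hz => by
    calc z ^ p * exp (-lam * z) ≤ x ^ p * exp (p / x * (z - x)) * exp (-lam * z) := by
          gcongr
          exact rpow_le_mul_exp_mul_sub hp hx (hx.trans hz).le
      _ = x ^ p * exp (-(p / x) * x) * exp (-(lam - p / x) * z) := by
          rw [mul_assoc, mul_assoc, ← exp_add, ← exp_add]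
          ring_nf
  calc ∫ z in Ioi x, z ^ p * exp (-lam * z)
      ≤ ∫ z in Ioi x, x ^ p * exp (-(p / x) * x) * exp (-(lam - p / x) * z) :=
        setIntegral_mono_on (integrableOn_rpow_mul_exp_neg_mul_Ioi (by linarith) hx.le hlam0)
          ((exp_neg_integrableOn_Ioi x hgap).const_mul _) measurableSet_Ioi hbound
    _ = x ^ p * exp (-lam * x) / (lam - p / x) := by
        rw [integral_const_mul, integral_exp_neg_mul_Ioi hgap, mul_div_assoc', mul_assoc,
          ← exp_add]
        ring_nf

end TailIntegral

section GammaTail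

variable {a r x : ℝ}

lemma gammaMeasure_Ici_toReal (ha : 0 < a) (hr : 0 < r) (hx : 0 ≤ x) :
    (gammaMeasure a r (Ici x)).toReal
      = r ^ a / Gamma a * ∫ z in Ioi x, z ^ (a - 1) * exp (-r * z) := by
  unfold gammaMeasure gammaPDF
  rw [withDensity_apply _ measurableSet_Ici,
    ← integral_eq_lintegral_of_nonneg_ae (ae_of_all _ (gammaPDFReal_nonneg ha hr))
      (by fun_prop),
    integral_Ici_eq_integral_Ioi, ← integral_const_mul]
  refine setIntegral_congr_fun measurableSet_Ioi fun z hz => ?_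
  rw [gammaPDFReal, if_pos (hx.trans (le_of_lt hz)), neg_mul, mul_assoc]

theorem isBigO_gammaMeasure_Ici_sub_atTop (ha : 1 ≤ a) (hx : 0 < x) :
    (fun r => (gammaMeasure a r (Ici x)).toReal - (r * x) ^ (a - 1) * exp (-(r * x)) / Gamma a)
      =O[atTop] fun r => (r * x) ^ (a - 1) * exp (-(r * x)) / Gamma a / r := by
  set c := (a - 1) / x
  have hc : 0 ≤ c := div_nonneg (by linarith) hx.le
  refine IsBigO.of_bound (2 * c) ?_
  filter_upwards [eventually_ge_atTop (2 * c), eventually_gt_atTop 0] with r hr hr0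
  have hK : 0 < r ^ a / Gamma a := div_pos (rpow_pos_of_pos hr0 _) (Gamma_pos_of_pos (by linarith))
  have hE : 0 < x ^ (a - 1) * exp (-r * x) := by positivity
  have hmain : (r * x) ^ (a - 1) * exp (-(r * x)) / Gamma a
      = r ^ a / Gamma a * (x ^ (a - 1) * exp (-r * x) / r) := by
    rw [mul_rpow hr0.le hx.le, rpow_sub_one hr0.ne', neg_mul]
    field_simp
  have hlow := le_integral_rpow_mul_exp_neg_mul_Ioi (sub_nonneg.mpr ha) hx hr0
  have hup := integral_rpow_mul_exp_neg_mul_Ioi_le (sub_nonneg.mpr ha) hx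
    (show c < r by linarith)
  have hgap : x ^ (a - 1) * exp (-r * x) / (r - c) - x ^ (a - 1) * exp (-r * x) / r
      ≤ 2 * c / r * (x ^ (a - 1) * exp (-r * x) / r) := by
    generalize x ^ (a - 1) * exp (-r * x) = E at hE ⊢
    have hrc : 0 < r - c := by linarith
    rw [div_sub_div _ _ hrc.ne' hr0.ne', div_le_iff₀ (by positivity)]
    have : 0 ≤ c * E * (r - 2 * c) := by have := sub_nonneg.mpr hr; positivity
    field_simp
    nlinarith
  rw [hmain, gammaMeasure_Ici_toReal (by linarith) hr0 hx.le, ← mul_sub, norm_mul,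
    norm_of_nonneg hK.le, norm_of_nonneg (sub_nonneg.mpr hlow), norm_of_nonneg (by positivity)]
  calc r ^ a / Gamma a * ((∫ z in Ioi x, z ^ (a - 1) * exp (-r * z))
        - x ^ (a - 1) * exp (-r * x) / r)
      ≤ r ^ a / Gamma a * (2 * c / r * (x ^ (a - 1) * exp (-r * x) / r)) := by
        gcongr
        linarith
    _ = 2 * c * (r ^ a / Gamma a * (x ^ (a - 1) * exp (-r * x) / r) / r) := by ring

end GammaTail

section RelativeError

variable {α : Type*} {l : Filter α} {f g h ε : α → ℝ}

lemma isBigO_mul_sub_one (hf : (fun a => f a - 1) =O[l] ε) (hg : (fun a => g a - 1) =O[l] ε)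
    (hε : Tendsto ε l (𝓝 0)) : (fun a => f a * g a - 1) =O[l] ε := by
  have hg_one : Tendsto g l (𝓝 1) := by
    simpa using (hg.trans_tendsto hε).add_const 1
  have hfg : (fun a => (f a - 1) * g a) =O[l] ε := by
    simpa using hf.mul (hg_one.isBigO_one ℝ)
  exact (hfg.add hg).congr_left fun a => by ring

lemma isBigO_sub_of_isBigO_sub_mul (hfg : (fun a => f a - g a) =O[l] fun a => ε a * g a)
    (hgh : (fun a => g a - h a) =O[l] fun a => ε a * h a) (hε : Tendsto ε l (𝓝 0)) :
    (fun a => f a - h a) =O[l] fun a => ε a * h a := by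
  have hg : g =O[l] h := by
    have hεh : (fun a => ε a * h a) =O[l] h := by
      simpa using (hε.isBigO_one ℝ).mul (isBigO_refl h l)
    simpa using (hgh.trans hεh).add (isBigO_refl h l)
  have hεg : (fun a => ε a * g a) =O[l] fun a => ε a * h a := (isBigO_refl ε l).mul hg
  exact ((hfg.trans hεg).add hgh).congr_left fun a => by ring

lemma isBigO_rpow_sub_one (hf : (fun a => f a - 1) =O[l] ε) (hε : Tendsto ε l (𝓝 0))
    (p : ℝ) : (fun a => f a ^ p - 1) =O[l] ε := by
  have hf_one : Tendsto f l (𝓝 1) := by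
    simpa using (hf.trans_tendsto hε).add_const 1
  have h := (hasDerivAt_rpow_const (p := p) (Or.inl one_ne_zero)).isBigO_sub.comp_tendsto hf_one
  simp only [Function.comp_def, one_rpow] at h
  exact h.trans hf

lemma isBigO_exp_sub_one (hf : f =O[l] ε) (hε : Tendsto ε l (𝓝 0)) :
    (fun a => exp (f a) - 1) =O[l] ε := by
  have h := (hasDerivAt_exp 0).isBigO_sub.comp_tendsto (hf.trans_tendsto hε)
  simp only [Function.comp_def, sub_zero, exp_zero] at h
  exact h.trans hf

end RelativeError

lemma exists_pos_forall_abs_le_of_isBigO_nhdsGT {f g : ℝ → ℝ} {a : ℝ}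
    (h : f =O[𝓝[>] a] g) (hg : ∀ t, a < t → 0 ≤ g t) :
    ∃ C > 0, ∃ t₀ > a, ∀ t, a < t → t < t₀ → |f t| ≤ C * g t := by
  obtain ⟨C, hC, hbound⟩ := h.exists_pos
  obtain ⟨t₀, ht₀, hforall⟩ := (nhdsGT_basis a).eventually_iff.mp hbound.bound
  refine ⟨C, hC, t₀, ht₀, fun t ht htt => ?_⟩
  simpa [norm_of_nonneg (hg t ht)] using hforall ⟨ht, htt⟩

lemma tendsto_nhdsGT_zero_id : Tendsto (fun t : ℝ => t) (𝓝[>] 0) (𝓝 0) :=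
  tendsto_nhdsWithin_of_tendsto_nhds tendsto_id

theorem isBigO_rpow_mul_exp_neg_sub_of_isBigO {u : ℝ → ℝ} {A B p : ℝ} (hA : 0 < A)
    (hu : (fun t => u t - (A / t + B)) =O[𝓝[>] 0] fun t => t) :
    (fun t => u t ^ p * exp (-u t) - (A / t) ^ p * exp (-(A / t + B)))
      =O[𝓝[>] 0] fun t => t * ((A / t) ^ p * exp (-(A / t + B))) := by
  -- `u^p e^{-u} = (A/t)^p e^{-(A/t + B)} · (u / (A/t))^p · e^{-(u - (A/t + B))}`,
  -- and both correction factors are `1 + O(t)`.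
  have hscaled : (fun t => u t / (A / t) - 1) =O[𝓝[>] 0] fun t => t := by
    have hsmall : (fun t => t / A * (u t - (A / t + B))) =O[𝓝[>] 0] fun t => t := by
      have : Tendsto (fun t : ℝ => t / A) (𝓝[>] 0) (𝓝 0) := by
        simpa using tendsto_nhdsGT_zero_id.div_const A
      simpa using (this.isBigO_one ℝ).mul hu
    refine (hsmall.add ((isBigO_refl _ _).const_mul_left (B / A))).congr' ?_ EventuallyEq.rfl
    filter_upwards [self_mem_nhdsWithin] with t (ht : 0 < t)
    field_simp
    ring
  have hscaled_lim : Tendsto (fun t => u t / (A / t)) (𝓝[>] 0) (𝓝 1) := by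
    simpa using (hscaled.trans_tendsto tendsto_nhdsGT_zero_id).add_const 1
  have hrpow := isBigO_rpow_sub_one hscaled tendsto_nhdsGT_zero_id p
  have hexp := isBigO_exp_sub_one hu.neg_left tendsto_nhdsGT_zero_id
  have hratio := isBigO_mul_sub_one hrpow hexp tendsto_nhdsGT_zero_id
  refine ((isBigO_refl (fun t => (A / t) ^ p * exp (-(A / t + B))) _).mul hratio).congr' ?_
    (Eventually.of_forall fun t => mul_comm _ _)
  filter_upwards [self_mem_nhdsWithin, hscaled_lim.eventually (lt_mem_nhds one_pos)]
    with t (ht : 0 < t) hut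
  have hu0 : 0 < u t := by
    simpa using (div_pos_iff_of_pos_right (div_pos hA ht)).mp hut
  rw [div_rpow hu0.le (div_pos hA ht).le,
    show -(u t - (A / t + B)) = -u t - -(A / t + B) by ring, exp_sub]
  field_simp

lemma abs_exp_neg_sub_taylor_le {s : ℝ} (hs0 : 0 ≤ s) (hs : s ≤ 1) :
    |exp (-s) - (1 - s + s ^ 2 / 2)| ≤ 2 / 9 * s ^ 3 := by
  have h := exp_bound (x := -s) (by rwa [abs_neg, abs_of_nonneg hs0]) (n := 3) (by norm_num)
  simp only [Finset.sum_range_succ, Finset.sum_range_zero, abs_neg, abs_of_nonneg hs0] at h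
  norm_num at h
  rw [show 1 - s + s ^ 2 / 2 = 1 + -s + s ^ 2 / 2 by ring]
  linarith

lemma abs_inv_one_sub_exp_neg_sub_le {s : ℝ} (hs0 : 0 < s) (hs : s ≤ 1 / 2) :
    |(1 - exp (-s))⁻¹ - s⁻¹ - 1 / 2| ≤ 2 * s := by
  have hR := abs_le.mp (abs_exp_neg_sub_taylor_le hs0.le (by linarith))
  have hD : s / 2 ≤ 1 - exp (-s) := by nlinarith
  have hnum : |2 * s - (2 + s) * (1 - exp (-s))| ≤ 2 * s ^ 3 := by
    rw [abs_le]; constructor <;> nlinarith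
  have hD0 : 1 - exp (-s) ≠ 0 := by linarith
  have hden : 0 < 2 * s * (1 - exp (-s)) := mul_pos (by positivity) (by linarith)
  rw [show (1 - exp (-s))⁻¹ - s⁻¹ - 1 / 2
      = (2 * s - (2 + s) * (1 - exp (-s))) / (2 * s * (1 - exp (-s))) by field_simp; ring,
    abs_div, abs_of_pos hden, div_le_iff₀ hden]
  nlinarith [mul_le_mul_of_nonneg_left hD (by positivity : (0 : ℝ) ≤ 4 * s ^ 2)]

theorem isBigO_inv_one_sub_exp_neg_sub :
    (fun s => (1 - exp (-s))⁻¹ - s⁻¹ - 1 / 2) =O[𝓝[>] 0] fun s => s := by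
  refine IsBigO.of_bound 2 ?_
  filter_upwards [Ioo_mem_nhdsGT (show (0 : ℝ) < 1 / 2 by norm_num)] with s hs
  rw [norm_eq_abs, norm_eq_abs, abs_of_pos hs.1]
  exact abs_inv_one_sub_exp_neg_sub_le hs.1 hs.2.le

/-- The rate `λ_t` of the Gamma law `γ_t`. -/
noncomputable def gammaRate (b ξ t : ℝ) : ℝ := -2 * b / (ξ ^ 2 * (1 - exp (b * t)))

section Rate

variable {b ξ : ℝ}

lemma two_div_le_gammaRate (hb : b < 0) (hξ : ξ ≠ 0) {t : ℝ} (ht : 0 < t) :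
    2 / (ξ ^ 2 * t) ≤ gammaRate b ξ t := by
  have hexp : exp (b * t) < 1 := Real.exp_lt_one_iff.mpr (mul_neg_of_neg_of_pos hb ht)
  have hlin : 1 - exp (b * t) ≤ -(b * t) := by linarith [add_one_le_exp (b * t)]
  rw [gammaRate, div_le_div_iff₀ (by positivity) (mul_pos (by positivity) (by linarith))]
  nlinarith [mul_le_mul_of_nonneg_left hlin (by positivity : (0 : ℝ) ≤ 2 * ξ ^ 2)]

lemma tendsto_gammaRate_atTop (hb : b < 0) (hξ : ξ ≠ 0) :
    Tendsto (gammaRate b ξ) (𝓝[>] 0) atTop := by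
  have hinv : Tendsto (fun t : ℝ => 2 / ξ ^ 2 * t⁻¹) (𝓝[>] 0) atTop :=
    tendsto_inv_nhdsGT_zero.const_mul_atTop (by positivity)
  refine tendsto_atTop_mono' _ ?_ hinv
  filter_upwards [self_mem_nhdsWithin] with t (ht : 0 < t)
  calc 2 / ξ ^ 2 * t⁻¹ = 2 / (ξ ^ 2 * t) := by field_simp
    _ ≤ _ := two_div_le_gammaRate hb hξ ht

lemma isBigO_gammaRate_inv (hb : b < 0) (hξ : ξ ≠ 0) :
    (fun t => (gammaRate b ξ t)⁻¹) =O[𝓝[>] 0] fun t => t := by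
  refine IsBigO.of_bound (ξ ^ 2 / 2) ?_
  filter_upwards [self_mem_nhdsWithin] with t (ht : 0 < t)
  have hle := two_div_le_gammaRate hb hξ ht
  rw [norm_inv, norm_of_nonneg ((by positivity : (0 : ℝ) ≤ 2 / (ξ ^ 2 * t)).trans hle),
    norm_of_nonneg ht.le]
  calc _ ≤ (2 / (ξ ^ 2 * t))⁻¹ := inv_anti₀ (by positivity) hle
    _ = ξ ^ 2 / 2 * t := by field_simp

theorem isBigO_gammaRate_mul_sub (hb : b < 0) (hξ : ξ ≠ 0) (x : ℝ) :
    (fun t => gammaRate b ξ t * x - (2 * x / ξ ^ 2 / t + -b * x / ξ ^ 2))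
      =O[𝓝[>] 0] fun t => t := by
  have hs : Tendsto (fun t => -b * t) (𝓝[>] 0) (𝓝[>] 0) := by
    refine tendsto_nhdsWithin_iff.mpr ⟨by simpa using tendsto_nhdsGT_zero_id.const_mul (-b), ?_⟩
    filter_upwards [self_mem_nhdsWithin] with t (ht : 0 < t)
    exact mul_pos (neg_pos.mpr hb) ht
  have h := ((isBigO_inv_one_sub_exp_neg_sub.comp_tendsto hs).trans
    ((isBigO_refl _ _).const_mul_left (-b))).const_mul_left (-2 * b * x / ξ ^ 2)
  refine h.congr' ?_ EventuallyEq.rfl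
  filter_upwards [self_mem_nhdsWithin] with t (ht : 0 < t)
  have hb0 : b ≠ 0 := hb.ne
  have hD : 1 - exp (b * t) ≠ 0 :=
    (sub_pos.mpr (Real.exp_lt_one_iff.mpr (mul_neg_of_neg_of_pos hb ht))).ne'
  simp only [Function.comp_apply, gammaRate]
  field_simp
  ring_nf

theorem isBigO_gammaMeasure_Ici_gammaRate_sub {μ x : ℝ} (hμ : 1 ≤ μ) (hx : 0 < x)
    (hb : b < 0) (hξ : ξ ≠ 0) :
    (fun t => (gammaMeasure μ (gammaRate b ξ t) (Ici x)).toReal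
        - (gammaRate b ξ t * x) ^ (μ - 1) * exp (-(gammaRate b ξ t * x)) / Gamma μ)
      =O[𝓝[>] 0] fun t => t * ((gammaRate b ξ t * x) ^ (μ - 1)
        * exp (-(gammaRate b ξ t * x)) / Gamma μ) :=
  ((isBigO_gammaMeasure_Ici_sub_atTop hμ hx).comp_tendsto (tendsto_gammaRate_atTop hb hξ)).trans
    (((isBigO_gammaRate_inv hb hξ).mul (isBigO_refl _ _)).congr_left fun _ =>
      (div_eq_inv_mul _ _).symm)

theorem isBigO_gammaRate_main_sub {μ x : ℝ} (hμ : 0 < μ) (hx : 0 < x) (hb : b < 0)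
    (hξ : 0 < ξ) :
    (fun t => (gammaRate b ξ t * x) ^ (μ - 1) * exp (-(gammaRate b ξ t * x)) / Gamma μ
        - exp (b * x / ξ ^ 2) / Gamma μ * (2 * x / ξ ^ 2) ^ (μ - 1) * t ^ (1 - μ)
          * exp (-(2 * x) / (ξ ^ 2 * t)))
      =O[𝓝[>] 0] fun t => t * (exp (b * x / ξ ^ 2) / Gamma μ * (2 * x / ξ ^ 2) ^ (μ - 1)
          * t ^ (1 - μ) * exp (-(2 * x) / (ξ ^ 2 * t))) := by
  have hΓ : (Gamma μ)⁻¹ ≠ 0 := inv_ne_zero (Gamma_pos_of_pos hμ).ne'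
  have hS : ∀ t, 0 < t → (Gamma μ)⁻¹ * ((2 * x / ξ ^ 2 / t) ^ (μ - 1)
      * exp (-(2 * x / ξ ^ 2 / t + -b * x / ξ ^ 2))) = exp (b * x / ξ ^ 2) / Gamma μ
        * (2 * x / ξ ^ 2) ^ (μ - 1) * t ^ (1 - μ) * exp (-(2 * x) / (ξ ^ 2 * t)) := by
    intro t ht
    rw [div_rpow (by positivity) ht.le, show 1 - μ = -(μ - 1) by ring, rpow_neg ht.le,
      show -(2 * x / ξ ^ 2 / t + -b * x / ξ ^ 2) = b * x / ξ ^ 2 + -(2 * x) / (ξ ^ 2 * t) by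
        field_simp; ring, exp_add]
    ring
  refine (((isBigO_rpow_mul_exp_neg_sub_of_isBigO (p := μ - 1) (by positivity)
    (isBigO_gammaRate_mul_sub hb hξ.ne' x)).const_mul_left (Gamma μ)⁻¹).const_mul_right
      hΓ).congr' ?_ ?_
  all_goals filter_upwards [self_mem_nhdsWithin] with t (ht : 0 < t)
  · rw [mul_sub, hS t ht]
    ring
  · rw [mul_left_comm, hS t ht]

end Rate

theorem gamma_small_time_sharp_tail_general
    (ξ b : ℝ) (hξ : 0 < ξ) (hb : b < 0)
    (μ : ℝ) (hμ : 1 < μ)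
    (lam : ℝ → ℝ) (hlam : ∀ t, lam t = -2 * b / (ξ ^ 2 * (1 - Real.exp (b * t))))
    (γ : ℝ → Measure ℝ)
    (hγ : ∀ t, 0 < t → γ t = ProbabilityTheory.gammaMeasure μ (lam t))
    (x : ℝ) (hx : 0 < x) :
    ∃ C > (0 : ℝ), ∃ t₀ > (0 : ℝ), ∀ t, 0 < t → t < t₀ →
      |((γ t) (Set.Ici x)).toReal
          - Real.exp (b * x / ξ ^ 2) / Real.Gamma μ * (2 * x / ξ ^ 2) ^ (μ - 1)
            * t ^ (1 - μ) * Real.exp (-(2 * x) / (ξ ^ 2 * t))|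
        ≤ C * t * (Real.exp (b * x / ξ ^ 2) / Real.Gamma μ * (2 * x / ξ ^ 2) ^ (μ - 1)
            * t ^ (1 - μ) * Real.exp (-(2 * x) / (ξ ^ 2 * t))) := by
  obtain rfl : lam = gammaRate b ξ := funext hlam
  obtain ⟨C, hC, t₀, ht₀, hbound⟩ := exists_pos_forall_abs_le_of_isBigO_nhdsGT
    (isBigO_sub_of_isBigO_sub_mul (isBigO_gammaMeasure_Ici_gammaRate_sub hμ.le hx hb hξ.ne')
      (isBigO_gammaRate_main_sub (by linarith) hx hb hξ) tendsto_nhdsGT_zero_id)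
    fun t ht => by positivity
  refine ⟨C, hC, t₀, ht₀, fun t ht htt => ?_⟩
  rw [hγ t ht, mul_assoc C]
  exact hbound t ht htt

/-- Sharp small-time tail asymptotics for the Gamma laws `γ_t`:
`γ_t([x,∞)) = (e^{bx/ξ²}/Γ(μ)) (2x/ξ²)^{μ-1} t^{1-μ} e^{-2x/(ξ²t)} (1 + O(t))` as `t → 0⁺`. -/
theorem gamma_small_time_sharp_tail
    (a ξ b : ℝ) (ha : 0 < a) (hξ : 0 < ξ) (hb : b < 0)
    (μ : ℝ) (hμ_def : μ = 2 * a / ξ ^ 2) (hμ : 1 < μ)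
    (lam : ℝ → ℝ) (hlam : ∀ t, lam t = -2 * b / (ξ ^ 2 * (1 - Real.exp (b * t))))
    (γ : ℝ → Measure ℝ)
    (hγ : ∀ t, 0 < t → γ t = ProbabilityTheory.gammaMeasure μ (lam t))
    (x : ℝ) (hx : 0 < x) :
    ∃ C > (0 : ℝ), ∃ t₀ > (0 : ℝ), ∀ t, 0 < t → t < t₀ →
      |((γ t) (Set.Ici x)).toReal
          - Real.exp (b * x / ξ ^ 2) / Real.Gamma μ * (2 * x / ξ ^ 2) ^ (μ - 1)
            * t ^ (1 - μ) * Real.exp (-(2 * x) / (ξ ^ 2 * t))|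
        ≤ C * t * (Real.exp (b * x / ξ ^ 2) / Real.Gamma μ * (2 * x / ξ ^ 2) ^ (μ - 1)
            * t ^ (1 - μ) * Real.exp (-(2 * x) / (ξ ^ 2 * t))) :=
  gamma_small_time_sharp_tail_general ξ b hξ hb μ hμ lam hlam γ hγ x hx
end

section
/- For every x ≥ 0, the infimum of (1/(2ξ²)) ∫₀¹ (g(s)²/φ(s)) · 1_{φ(s)>0} ds over all integrable g : [0,1] → ℝ such that the function φ(s) := v₀ + ∫₀^s g(r) dr is nonnegative on [0,1] and satisfies φ(1) = x, equals (2/ξ²)(√x − √v₀)². If x < 0 the constraint set is empty and the infimum (taken in [0,∞]) equals +∞. -/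
open MeasureTheory Filter Topology Set
open scoped ENNReal

/-!
The optimal path is `φ(s) = ((1 - s)√v₀ + s√x)²`: its square root is affine, so its energy
density `φ'²/φ = 4(√x - √v₀)²` is constant.

For the lower bound, `g²/φ ≥ 2lg - l²φ` for every weight `l`, and `g = 0` a.e. on `{φ = 0}`
because `φ` attains its minimum there. If `l' = -l²/2`, then `2lφ' - l²φ = 2(lφ)'`, so the
lower bound integrates to the boundary term `2(l(1)φ(1) - l(0)φ(0))`. The weights
`l(s) = 2(c - a)/((1 - s)a + sc)`, with `a = √v₀`, solve this Riccati equation, and their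
boundary terms tend to `4(√x - √v₀)²` as `c ↓ √x`.
-/

theorem ofReal_integral_le_lintegral_ofReal {α : Type*} [MeasurableSpace α] {μ : Measure α}
    {f : α → ℝ} (hf : Integrable f μ) :
    ENNReal.ofReal (∫ x, f x ∂μ) ≤ ∫⁻ x, ENNReal.ofReal (f x) ∂μ := by
  rw [integral_eq_lintegral_pos_part_sub_lintegral_neg_part hf]
  exact (ENNReal.ofReal_le_ofReal (sub_le_self _ ENNReal.toReal_nonneg)).trans
    ENNReal.ofReal_toReal_le

theorem continuousAt_sq_div_self {u : ℝ} : ContinuousAt (fun c => u ^ 2 / c) u := by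
  rcases eq_or_ne u 0 with rfl | hu
  · simpa using continuousAt_const
  · exact continuousAt_const.div continuousAt_id hu

theorem ae_deriv_eq_zero_of_eq_zero {φ : ℝ → ℝ} {a b : ℝ} (hφ₀ : ∀ s ∈ Icc a b, 0 ≤ φ s) :
    ∀ᵐ s ∂volume.restrict (Icc a b), φ s = 0 → deriv φ s = 0 := by
  rw [← Measure.restrict_congr_set Ioo_ae_eq_Icc]
  filter_upwards [ae_restrict_mem measurableSet_Ioo] with s hs hφs
  have hmin : IsMinOn φ (Icc a b) s := fun t ht => by simpa [hφs] using hφ₀ t ht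
  exact (hmin.isLocalMin (Icc_mem_nhds hs.1 hs.2)).deriv_eq_zero

theorem AbsolutelyContinuousOnInterval.integral_mul_deriv_sub_sq_mul {φ l : ℝ → ℝ} {a b : ℝ}
    (hφ : AbsolutelyContinuousOnInterval φ a b) (hl : AbsolutelyContinuousOnInterval l a b)
    (hl' : ∀ s ∈ uIcc a b, HasDerivAt l (-(l s ^ 2 / 2)) s) :
    ∫ s in a..b, (2 * l s * deriv φ s - l s ^ 2 * φ s) = 2 * (l b * φ b - l a * φ a) := by
  rw [← hl.integral_deriv_mul_eq_sub hφ, ← intervalIntegral.integral_const_mul]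
  refine intervalIntegral.integral_congr fun s hs => ?_
  simp only [(hl' s hs).deriv]
  ring

theorem hasDerivAt_lineMap (a c s : ℝ) :
    HasDerivAt (fun t => (1 - t) * a + t * c) (c - a) s :=
  (((hasDerivAt_id' s).const_sub 1).mul_const a).add ((hasDerivAt_id' s).mul_const c)
    |>.congr_deriv (by ring)

noncomputable def energyDensity (φ g : ℝ) : ℝ := if 0 < φ then g ^ 2 / φ else 0

noncomputable def pathEnergy (φ : ℝ → ℝ) : ℝ≥0∞ :=
  ∫⁻ s in Icc 0 1, ENNReal.ofReal (energyDensity (φ s) (deriv φ s))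

theorem two_mul_mul_sub_sq_mul_le_energyDensity {φ g l : ℝ} (hφ : 0 ≤ φ) (hg : φ = 0 → g = 0) :
    2 * l * g - l ^ 2 * φ ≤ energyDensity φ g := by
  rcases hφ.lt_or_eq with hφ | hφ
  · rw [energyDensity, if_pos hφ, le_div_iff₀ hφ]
    nlinarith [sq_nonneg (g - l * φ)]
  · simp [energyDensity, ← hφ, hg hφ.symm]

theorem AbsolutelyContinuousOnInterval.ofReal_four_mul_sub_mul_le_pathEnergy {φ : ℝ → ℝ}
    (hφ : AbsolutelyContinuousOnInterval φ 0 1) (hφ₀ : ∀ s ∈ Icc 0 1, 0 ≤ φ s)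
    {a c : ℝ} (ha : 0 < a) (hc : 0 < c) :
    ENNReal.ofReal (4 * (c - a) * (φ 1 / c - φ 0 / a)) ≤ pathEnergy φ := by
  set l : ℝ → ℝ := fun s => 2 * (c - a) / ((1 - s) * a + s * c)
  have hpos : ∀ s ∈ uIcc (0 : ℝ) 1, 0 < (1 - s) * a + s * c := by
    intro s hs
    rw [uIcc_of_le zero_le_one] at hs
    rcases le_total a c with h | h
    · nlinarith [mul_nonneg hs.1 (sub_nonneg.2 h)]
    · nlinarith [mul_nonneg (sub_nonneg.2 hs.2) (sub_nonneg.2 h)]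
  have hl' : ∀ s ∈ uIcc (0 : ℝ) 1, HasDerivAt l (-(l s ^ 2 / 2)) s := by
    intro s hs
    have hne := (hpos s hs).ne'
    refine ((hasDerivAt_const s (2 * (c - a))).div (hasDerivAt_lineMap a c s) hne).congr_deriv ?_
    simp only [l]
    field_simp
    ring
  have hl : AbsolutelyContinuousOnInterval l 0 1 :=
    (contDiffOn_const.div (by fun_prop) fun s hs => (hpos s hs).ne').absolutelyContinuousOnInterval
  have hint : IntegrableOn (fun s => 2 * l s * deriv φ s - l s ^ 2 * φ s) (Icc 0 1) := by
    have hl_cont : ContinuousOn l (Icc 0 1) := by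
      simpa [uIcc_of_le] using hl.continuousOn
    have hφ_cont : ContinuousOn φ (Icc 0 1) := by
      simpa [uIcc_of_le] using hφ.continuousOn
    have hφ' : IntegrableOn (deriv φ) (Icc 0 1) :=
      (intervalIntegrable_iff_integrableOn_Icc_of_le zero_le_one).1 hφ.intervalIntegrable_deriv
    exact (IntegrableOn.continuousOn_mul (continuousOn_const.mul hl_cont) hφ' isCompact_Icc).sub
      ((hl_cont.pow 2).mul hφ_cont).integrableOn_Icc
  calc ENNReal.ofReal (4 * (c - a) * (φ 1 / c - φ 0 / a))
      = ENNReal.ofReal (∫ s in Icc 0 1, (2 * l s * deriv φ s - l s ^ 2 * φ s)) := by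
        rw [integral_Icc_eq_integral_Ioc, ← intervalIntegral.integral_of_le zero_le_one,
          hφ.integral_mul_deriv_sub_sq_mul hl hl']
        have hl0 : l 0 = 2 * (c - a) / a := by simp [l]
        have hl1 : l 1 = 2 * (c - a) / c := by simp [l]
        rw [hl0, hl1]
        congr 1
        field_simp
        ring
    _ ≤ ∫⁻ s in Icc 0 1, ENNReal.ofReal (2 * l s * deriv φ s - l s ^ 2 * φ s) :=
        ofReal_integral_le_lintegral_ofReal hint
    _ ≤ pathEnergy φ := by
        refine lintegral_mono_ae ?_
        filter_upwards [ae_deriv_eq_zero_of_eq_zero hφ₀, ae_restrict_mem measurableSet_Icc]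
          with s hs hsI
        exact ENNReal.ofReal_le_ofReal (two_mul_mul_sub_sq_mul_le_energyDensity (hφ₀ s hsI) hs)

theorem AbsolutelyContinuousOnInterval.ofReal_four_mul_sqrt_sub_sq_le_pathEnergy {φ : ℝ → ℝ}
    (hφ : AbsolutelyContinuousOnInterval φ 0 1) (hφ₀ : ∀ s ∈ Icc 0 1, 0 ≤ φ s) (h0 : 0 < φ 0) :
    ENNReal.ofReal (4 * (√(φ 1) - √(φ 0)) ^ 2) ≤ pathEnergy φ := by
  set a := √(φ 0)
  set u := √(φ 1)
  have ha : 0 < a := Real.sqrt_pos.2 h0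
  have hu : 0 ≤ u := Real.sqrt_nonneg _
  have hbound : ∀ c ∈ Ioi u, ENNReal.ofReal (4 * (c - a) * (u ^ 2 / c - a)) ≤ pathEnergy φ := by
    intro c hc
    have := hφ.ofReal_four_mul_sub_mul_le_pathEnergy hφ₀ ha (hu.trans_lt hc)
    rwa [← Real.sq_sqrt h0.le, pow_two, mul_self_div_self,
      ← Real.sq_sqrt (hφ₀ 1 (right_mem_Icc.2 zero_le_one))] at this
  -- `c = u` itself is excluded: for `u = 0` the weight blows up at `s = 1`.
  have hlim : Tendsto (fun c => ENNReal.ofReal (4 * (c - a) * (u ^ 2 / c - a))) (𝓝[>] u)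
      (𝓝 (ENNReal.ofReal (4 * (u - a) ^ 2))) := by
    have hcont : ContinuousAt (fun c => 4 * (c - a) * (u ^ 2 / c - a)) u :=
      (continuousAt_const.mul (continuousAt_id.sub continuousAt_const)).mul
        (continuousAt_sq_div_self.sub continuousAt_const)
    have hval : 4 * (u - a) * (u ^ 2 / u - a) = 4 * (u - a) ^ 2 := by
      rw [pow_two u, mul_self_div_self]
      ring
    rw [← hval]
    exact (ENNReal.continuous_ofReal.continuousAt.comp hcont).tendsto.mono_left nhdsWithin_le_nhds
  exact le_of_tendsto hlim (eventually_nhdsWithin_of_forall hbound)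

theorem pathEnergy_const_add_integral {g : ℝ → ℝ} (hg : IntervalIntegrable g volume 0 1)
    (v₀ : ℝ) :
    pathEnergy (fun s => v₀ + ∫ r in 0..s, g r) =
      ∫⁻ s in Icc 0 1, ENNReal.ofReal (energyDensity (v₀ + ∫ r in 0..s, g r) (g s)) := by
  refine setLIntegral_congr_fun_ae measurableSet_Icc ?_
  filter_upwards [hg.ae_hasDerivAt_integral] with s hs hsI
  rw [uIcc_of_le zero_le_one] at hs
  rw [((hs hsI 0 (left_mem_Icc.2 zero_le_one)).const_add v₀).deriv]

theorem ofReal_four_mul_sqrt_sub_sq_le_lintegral_energyDensity {g : ℝ → ℝ} {v₀ : ℝ}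
    (hv₀ : 0 < v₀) (hg : IntegrableOn g (Icc 0 1))
    (hφ₀ : ∀ s ∈ Icc (0 : ℝ) 1, 0 ≤ v₀ + ∫ r in 0..s, g r) :
    ENNReal.ofReal (4 * (√(v₀ + ∫ r in 0..1, g r) - √v₀) ^ 2) ≤
      ∫⁻ s in Icc 0 1, ENNReal.ofReal (energyDensity (v₀ + ∫ r in 0..s, g r) (g s)) := by
  have hg' : IntervalIntegrable g volume 0 1 :=
    (intervalIntegrable_iff_integrableOn_Icc_of_le zero_le_one).2 hg
  have hφ : AbsolutelyContinuousOnInterval (fun s => v₀ + ∫ r in 0..s, g r) 0 1 :=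
    (contDiffOn_const (c := v₀)).absolutelyContinuousOnInterval.add
      (hg'.absolutelyContinuousOnInterval_intervalIntegral left_mem_uIcc)
  rw [← pathEnergy_const_add_integral hg']
  simpa using hφ.ofReal_four_mul_sqrt_sub_sq_le_pathEnergy hφ₀ (by simpa using hv₀)

theorem integral_two_mul_sub_mul_lineMap (a c s : ℝ) :
    ∫ r in 0..s, 2 * (c - a) * ((1 - r) * a + r * c) = ((1 - s) * a + s * c) ^ 2 - a ^ 2 := by
  have hderiv : ∀ r ∈ uIcc 0 s, HasDerivAt (fun r : ℝ => ((1 - r) * a + r * c) ^ 2)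
      (2 * (c - a) * ((1 - r) * a + r * c)) r := fun r _ =>
    (hasDerivAt_lineMap a c r).pow 2 |>.congr_deriv (by ring)
  rw [intervalIntegral.integral_eq_sub_of_hasDerivAt hderiv
    ((by fun_prop : Continuous _).intervalIntegrable _ _)]
  simp

theorem lintegral_energyDensity_sq_lineMap {a c : ℝ} (ha : 0 < a) (hc : 0 ≤ c) :
    ∫⁻ s in Icc 0 1, ENNReal.ofReal
        (energyDensity (((1 - s) * a + s * c) ^ 2) (2 * (c - a) * ((1 - s) * a + s * c))) =
      ENNReal.ofReal (4 * (c - a) ^ 2) := by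
  rw [← Measure.restrict_congr_set Ico_ae_eq_Icc,
    setLIntegral_congr_fun measurableSet_Ico (g := fun _ => ENNReal.ofReal (4 * (c - a) ^ 2)),
    setLIntegral_const, Real.volume_Ico]
  · simp
  · intro s hs
    have hp : 0 < (1 - s) * a + s * c :=
      add_pos_of_pos_of_nonneg (mul_pos (sub_pos.2 hs.2) ha) (mul_nonneg hs.1 hc)
    simp only [energyDensity, if_pos (pow_pos hp 2)]
    rw [mul_pow, mul_div_assoc, div_self (pow_pos hp 2).ne']
    ring_nf

theorem contracted_rate_function_eq_general
    (ξ v₀ : ℝ) (hv₀ : 0 < v₀) (x : ℝ) :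
    (0 ≤ x →
      sInf {E : ℝ≥0∞ | ∃ g : ℝ → ℝ, IntegrableOn g (Set.Icc 0 1) ∧
          (∀ s ∈ Set.Icc (0 : ℝ) 1, 0 ≤ v₀ + ∫ r in (0 : ℝ)..s, g r) ∧
          (v₀ + ∫ r in (0 : ℝ)..1, g r) = x ∧
          E = ENNReal.ofReal (1 / (2 * ξ ^ 2)) *
              ∫⁻ s in Set.Icc (0 : ℝ) 1,
                ENNReal.ofReal
                  (if 0 < v₀ + ∫ r in (0 : ℝ)..s, g r
                    then g s ^ 2 / (v₀ + ∫ r in (0 : ℝ)..s, g r) else 0)}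
        = ENNReal.ofReal (2 / ξ ^ 2 * (Real.sqrt x - Real.sqrt v₀) ^ 2))
    ∧ (x < 0 →
      {E : ℝ≥0∞ | ∃ g : ℝ → ℝ, IntegrableOn g (Set.Icc 0 1) ∧
          (∀ s ∈ Set.Icc (0 : ℝ) 1, 0 ≤ v₀ + ∫ r in (0 : ℝ)..s, g r) ∧
          (v₀ + ∫ r in (0 : ℝ)..1, g r) = x ∧
          E = ENNReal.ofReal (1 / (2 * ξ ^ 2)) *
              ∫⁻ s in Set.Icc (0 : ℝ) 1,
                ENNReal.ofReal
                  (if 0 < v₀ + ∫ r in (0 : ℝ)..s, g r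
                    then g s ^ 2 / (v₀ + ∫ r in (0 : ℝ)..s, g r) else 0)} = ∅
      ∧ sInf {E : ℝ≥0∞ | ∃ g : ℝ → ℝ, IntegrableOn g (Set.Icc 0 1) ∧
          (∀ s ∈ Set.Icc (0 : ℝ) 1, 0 ≤ v₀ + ∫ r in (0 : ℝ)..s, g r) ∧
          (v₀ + ∫ r in (0 : ℝ)..1, g r) = x ∧
          E = ENNReal.ofReal (1 / (2 * ξ ^ 2)) *
              ∫⁻ s in Set.Icc (0 : ℝ) 1,
                ENNReal.ofReal
                  (if 0 < v₀ + ∫ r in (0 : ℝ)..s, g r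
                    then g s ^ 2 / (v₀ + ∫ r in (0 : ℝ)..s, g r) else 0)} = ⊤) := by
  have hscale : ∀ d : ℝ, ENNReal.ofReal (2 / ξ ^ 2 * d ^ 2) =
      ENNReal.ofReal (1 / (2 * ξ ^ 2)) * ENNReal.ofReal (4 * d ^ 2) := fun d => by
    rw [← ENNReal.ofReal_mul (by positivity)]
    ring_nf
  refine ⟨fun hx => le_antisymm ?_ ?_, fun hx => ?_⟩
  · obtain ⟨a, ha, rfl⟩ : ∃ a, 0 < a ∧ v₀ = a ^ 2 :=
      ⟨√v₀, Real.sqrt_pos.2 hv₀, (Real.sq_sqrt hv₀.le).symm⟩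
    obtain ⟨c, hc, rfl⟩ : ∃ c, 0 ≤ c ∧ x = c ^ 2 := ⟨√x, Real.sqrt_nonneg x, (Real.sq_sqrt hx).symm⟩
    refine sInf_le ⟨fun s => 2 * (c - a) * ((1 - s) * a + s * c),
      (by fun_prop : Continuous _).integrableOn_Icc, ?_, ?_, ?_⟩
    all_goals simp only [integral_two_mul_sub_mul_lineMap, add_sub_cancel]
    · exact fun s _ => by positivity
    · ring
    · rw [Real.sqrt_sq ha.le, Real.sqrt_sq hc, hscale, ← lintegral_energyDensity_sq_lineMap ha hc]
      rfl
  · refine le_sInf ?_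
    rintro E ⟨g, hg, hφ₀, rfl, rfl⟩
    rw [hscale]
    gcongr
    exact ofReal_four_mul_sqrt_sub_sq_le_lintegral_energyDensity hv₀ hg hφ₀
  · rw [and_iff_left_of_imp fun h => by rw [h, sInf_empty]]
    exact eq_empty_of_forall_notMem fun E ⟨g, _, hφ₀, hφ₁, _⟩ =>
      hx.not_ge (hφ₁ ▸ hφ₀ 1 (right_mem_Icc.2 zero_le_one))

/-- Contraction of the Freidlin–Wentzell rate function for the square-root diffusion:
the minimal energy `(1/(2ξ²)) ∫₀¹ φ'(s)²/φ(s) 1_{φ(s)>0} ds` over nonnegative absolutely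
continuous paths `φ` with `φ(0) = v₀` and `φ(1) = x` equals `(2/ξ²)(√x − √v₀)²` for
`x ≥ 0`, and is `+∞` (infimum over the empty set) for `x < 0`. -/
theorem contracted_rate_function_eq
    (ξ v₀ : ℝ) (hξ : 0 < ξ) (hv₀ : 0 < v₀) (x : ℝ) :
    (0 ≤ x →
      sInf {E : ℝ≥0∞ | ∃ g : ℝ → ℝ, IntegrableOn g (Set.Icc 0 1) ∧
          (∀ s ∈ Set.Icc (0 : ℝ) 1, 0 ≤ v₀ + ∫ r in (0 : ℝ)..s, g r) ∧
          (v₀ + ∫ r in (0 : ℝ)..1, g r) = x ∧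
          E = ENNReal.ofReal (1 / (2 * ξ ^ 2)) *
              ∫⁻ s in Set.Icc (0 : ℝ) 1,
                ENNReal.ofReal
                  (if 0 < v₀ + ∫ r in (0 : ℝ)..s, g r
                    then g s ^ 2 / (v₀ + ∫ r in (0 : ℝ)..s, g r) else 0)}
        = ENNReal.ofReal (2 / ξ ^ 2 * (Real.sqrt x - Real.sqrt v₀) ^ 2))
    ∧ (x < 0 →
      {E : ℝ≥0∞ | ∃ g : ℝ → ℝ, IntegrableOn g (Set.Icc 0 1) ∧
          (∀ s ∈ Set.Icc (0 : ℝ) 1, 0 ≤ v₀ + ∫ r in (0 : ℝ)..s, g r) ∧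
          (v₀ + ∫ r in (0 : ℝ)..1, g r) = x ∧
          E = ENNReal.ofReal (1 / (2 * ξ ^ 2)) *
              ∫⁻ s in Set.Icc (0 : ℝ) 1,
                ENNReal.ofReal
                  (if 0 < v₀ + ∫ r in (0 : ℝ)..s, g r
                    then g s ^ 2 / (v₀ + ∫ r in (0 : ℝ)..s, g r) else 0)} = ∅
      ∧ sInf {E : ℝ≥0∞ | ∃ g : ℝ → ℝ, IntegrableOn g (Set.Icc 0 1) ∧
          (∀ s ∈ Set.Icc (0 : ℝ) 1, 0 ≤ v₀ + ∫ r in (0 : ℝ)..s, g r) ∧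
          (v₀ + ∫ r in (0 : ℝ)..1, g r) = x ∧
          E = ENNReal.ofReal (1 / (2 * ξ ^ 2)) *
              ∫⁻ s in Set.Icc (0 : ℝ) 1,
                ENNReal.ofReal
                  (if 0 < v₀ + ∫ r in (0 : ℝ)..s, g r
                    then g s ^ 2 / (v₀ + ∫ r in (0 : ℝ)..s, g r) else 0)} = ⊤) :=
  contracted_rate_function_eq_general ξ v₀ hv₀ x
end

section
/- For every x ≥ 0, the infimum of ∫₀¹ (g(s)²/φ(s)) 1_{φ(s)>0} ds over all integrable g : [0,1] → ℝ such that φ(s) := v₀ + ∫₀^s g(r) dr is nonnegative on [0,1] with φ(1) = x, is equal to 4 times the infimum of ∫₀¹ h(s)² ds over all square-integrable h : [0,1] → ℝ such that ψ(s) := √v₀ + ∫₀^s h(r) dr is nonnegative on [0,1] with ψ(1) = √x. -/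
/-!
Both infima are computed explicitly. Under `ψ = √φ` the first energy becomes `4 ∫₀¹ ψ'²`, and by
Cauchy–Schwarz `∫₀¹ ψ'² ≥ (ψ 1 - ψ 0)²`, with equality for affine `ψ`; so the two infima are
`4 (√x - √v₀)²` and `(√x - √v₀)²`.

For a merely absolutely continuous `φ` the substitution is made with `√(φ + ε)`, which is
absolutely continuous because `√` is Lipschitz on `[ε, ∞)`, and then `ε → 0`. Comparing
`g² / (φ + ε)` with the energy density needs `φ > 0`, so when `φ` has zeros the bound is applied
only up to the first zero and from the last one on, which gives the larger bound `4 v₀ + 4 x`.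
-/

open MeasureTheory Filter Topology Set
open scoped ENNReal NNReal

theorem ENNReal.ofReal_sq_eq_enorm_sq (r : ℝ) : ENNReal.ofReal (r ^ 2) = ‖r‖ₑ ^ 2 := by
  rw [Real.enorm_eq_ofReal_abs, ← ENNReal.ofReal_pow (abs_nonneg r), sq_abs]

theorem MeasureTheory.ofReal_sq_integral_le {α : Type*} [MeasurableSpace α] {μ : Measure α}
    {f : α → ℝ} (hf : AEStronglyMeasurable f μ) :
    ENNReal.ofReal ((∫ x, f x ∂μ) ^ 2) ≤ μ univ * ∫⁻ x, ENNReal.ofReal (f x ^ 2) ∂μ := by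
  have holder := ENNReal.lintegral_mul_le_Lp_mul_Lq μ Real.HolderConjugate.two_two
    hf.enorm aemeasurable_const (g := fun _ => 1)
  simp only [Pi.mul_apply, mul_one, lintegral_const, ENNReal.rpow_two, one_pow,
    one_mul] at holder
  simp only [ENNReal.ofReal_sq_eq_enorm_sq]
  calc ‖∫ x, f x ∂μ‖ₑ ^ 2 ≤ (∫⁻ x, ‖f x‖ₑ ∂μ) ^ 2 := by
        gcongr; exact enorm_integral_le_lintegral_enorm f
    _ ≤ ((∫⁻ x, ‖f x‖ₑ ^ 2 ∂μ) ^ (1 / 2 : ℝ) * μ univ ^ (1 / 2 : ℝ)) ^ 2 := by gcongr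
    _ = μ univ * ∫⁻ x, ‖f x‖ₑ ^ 2 ∂μ := by
        rw [mul_pow, ← ENNReal.rpow_natCast, ← ENNReal.rpow_natCast, ← ENNReal.rpow_mul,
          ← ENNReal.rpow_mul]
        norm_num [mul_comm]

theorem intervalIntegral.ofReal_sq_integral_le {f : ℝ → ℝ} {a b : ℝ} (hab : a ≤ b)
    (hf : AEStronglyMeasurable f (volume.restrict (Ioc a b))) :
    ENNReal.ofReal ((∫ x in a..b, f x) ^ 2)
      ≤ ENNReal.ofReal (b - a) * ∫⁻ x in Ioc a b, ENNReal.ofReal (f x ^ 2) := by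
  simpa [intervalIntegral.integral_of_le hab] using MeasureTheory.ofReal_sq_integral_le hf

theorem LipschitzOnWith.comp_absolutelyContinuousOnInterval {X Y : Type*} [PseudoMetricSpace X]
    [PseudoMetricSpace Y] {f : ℝ → X} {h : X → Y} {a b : ℝ} {K : ℝ≥0} {s : Set X}
    (hh : LipschitzOnWith K h s) (hf : AbsolutelyContinuousOnInterval f a b)
    (hfs : MapsTo f (uIcc a b) s) : AbsolutelyContinuousOnInterval (h ∘ f) a b := by
  rw [absolutelyContinuousOnInterval_iff] at hf ⊢
  intro ε hε
  obtain ⟨δ, hδ, hfδ⟩ := hf (ε / (K + 1)) (by positivity)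
  refine ⟨δ, hδ, fun E hE hsum => ?_⟩
  calc ∑ i ∈ Finset.range E.1, dist (h (f (E.2 i).1)) (h (f (E.2 i).2))
      ≤ ∑ i ∈ Finset.range E.1, K * dist (f (E.2 i).1) (f (E.2 i).2) := by
        gcongr with i hi
        exact hh.dist_le_mul _ (hfs (hE.1 i hi).1) _ (hfs (hE.1 i hi).2)
    _ = K * ∑ i ∈ Finset.range E.1, dist (f (E.2 i).1) (f (E.2 i).2) := by
        rw [Finset.mul_sum]
    _ ≤ K * (ε / (K + 1)) := by gcongr; exact (hfδ E hE hsum).le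
    _ < ε := by
        rw [mul_div_assoc', div_lt_iff₀ (by positivity)]
        nlinarith

theorem Real.lipschitzOnWith_sqrt_Ici {ε : ℝ} (hε : 0 < ε) :
    LipschitzOnWith (Real.toNNReal (1 / (2 * √ε))) Real.sqrt (Ici ε) := by
  refine LipschitzOnWith.of_dist_le_mul fun x hx y hy => ?_
  have hsx : √ε ≤ √x := Real.sqrt_le_sqrt hx
  have hsy : √ε ≤ √y := Real.sqrt_le_sqrt hy
  have hs : 0 < √ε := Real.sqrt_pos.2 hε
  have hxy : x - y = (√x - √y) * (√x + √y) := by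
    nlinarith [Real.sq_sqrt (le_trans hε.le hx), Real.sq_sqrt (le_trans hε.le hy)]
  rw [Real.coe_toNNReal _ (by positivity), Real.dist_eq, Real.dist_eq, hxy, abs_mul,
    abs_of_pos (by linarith : 0 < √x + √y), div_mul_eq_mul_div, one_mul,
    le_div_iff₀ (by positivity)]
  nlinarith [abs_nonneg (√x - √y)]

noncomputable def weightedEnergy (φ g : ℝ → ℝ) (s : Set ℝ) : ℝ≥0∞ :=
  ∫⁻ x in s, ENNReal.ofReal (if 0 < φ x then g x ^ 2 / φ x else 0)

theorem weightedEnergy_mono {φ g : ℝ → ℝ} {s t : Set ℝ} (hst : s ⊆ t) :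
    weightedEnergy φ g s ≤ weightedEnergy φ g t :=
  lintegral_mono_set hst

section EnergyBound

variable {φ g : ℝ → ℝ} {a b : ℝ}

theorem ofReal_four_mul_sq_sqrt_add_sub_le_of_pos {ε : ℝ} (hab : a ≤ b) (hε : 0 < ε)
    (hφ : AbsolutelyContinuousOnInterval φ a b)
    (hφ' : ∀ᵐ x, x ∈ Ioc a b → HasDerivAt φ (g x) x)
    (hnn : ∀ x ∈ Icc a b, 0 ≤ φ x) (hpos : ∀ x ∈ Ioo a b, 0 < φ x) :
    ENNReal.ofReal (4 * (√(φ b + ε) - √(φ a + ε)) ^ 2)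
      ≤ ENNReal.ofReal (b - a) * weightedEnergy φ g (Ioc a b) := by
  set u : ℝ → ℝ := fun x => √(φ x + ε)
  have hu : AbsolutelyContinuousOnInterval u a b := by
    refine (Real.lipschitzOnWith_sqrt_Ici hε).comp_absolutelyContinuousOnInterval
      (hφ.add (contDiffOn_const.absolutelyContinuousOnInterval)) fun x hx => ?_
    rw [uIcc_of_le hab] at hx
    simpa using hnn x hx
  have hu' : ∀ᵐ x, x ∈ Ioc a b →
      4 * ENNReal.ofReal (deriv u x ^ 2)
        ≤ ENNReal.ofReal (if 0 < φ x then g x ^ 2 / φ x else 0) := by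
    have hb : ∀ᵐ x : ℝ, x ≠ b := by simp [ae_iff, measure_singleton]
    filter_upwards [hφ', hb] with x hx hxb hxab
    have hφx : 0 < φ x := hpos x ⟨hxab.1, lt_of_le_of_ne hxab.2 hxb⟩
    have hsq : √(φ x + ε) ^ 2 = φ x + ε := Real.sq_sqrt (by linarith)
    have hdensity : 4 * (g x / (2 * √(φ x + ε))) ^ 2 ≤ g x ^ 2 / φ x :=
      calc 4 * (g x / (2 * √(φ x + ε))) ^ 2 = g x ^ 2 / (φ x + ε) := by
            rw [div_pow, mul_pow, hsq]; field_simp; ring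
        _ ≤ g x ^ 2 / φ x := by gcongr; linarith
    rw [((hx hxab).add_const ε).sqrt (by linarith) |>.deriv, if_pos hφx,
      ← ENNReal.ofReal_ofNat 4, ← ENNReal.ofReal_mul (by norm_num)]
    exact ENNReal.ofReal_le_ofReal hdensity
  calc ENNReal.ofReal (4 * (u b - u a) ^ 2)
      = 4 * ENNReal.ofReal ((∫ x in a..b, deriv u x) ^ 2) := by
        rw [hu.integral_deriv_eq_sub, ENNReal.ofReal_mul (by norm_num), ENNReal.ofReal_ofNat]
    _ ≤ 4 * (ENNReal.ofReal (b - a) * ∫⁻ x in Ioc a b, ENNReal.ofReal (deriv u x ^ 2)) := by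
        gcongr
        exact intervalIntegral.ofReal_sq_integral_le hab (aestronglyMeasurable_deriv _ _)
    _ = ENNReal.ofReal (b - a) * ∫⁻ x in Ioc a b, 4 * ENNReal.ofReal (deriv u x ^ 2) := by
        rw [lintegral_const_mul' _ _ ENNReal.ofNat_ne_top, mul_left_comm]
    _ ≤ ENNReal.ofReal (b - a) * weightedEnergy φ g (Ioc a b) := by
        gcongr 1
        exact lintegral_mono_ae ((ae_restrict_iff' measurableSet_Ioc).2 hu')

theorem ofReal_four_mul_sq_sqrt_sub_le_of_pos (hab : a ≤ b)
    (hφ : AbsolutelyContinuousOnInterval φ a b)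
    (hφ' : ∀ᵐ x, x ∈ Ioc a b → HasDerivAt φ (g x) x)
    (hnn : ∀ x ∈ Icc a b, 0 ≤ φ x) (hpos : ∀ x ∈ Ioo a b, 0 < φ x) :
    ENNReal.ofReal (4 * (√(φ b) - √(φ a)) ^ 2)
      ≤ ENNReal.ofReal (b - a) * weightedEnergy φ g (Ioc a b) := by
  have hlim : Tendsto (fun ε => ENNReal.ofReal (4 * (√(φ b + ε) - √(φ a + ε)) ^ 2))
      (𝓝[>] 0) (𝓝 (ENNReal.ofReal (4 * (√(φ b) - √(φ a)) ^ 2))) := by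
    refine tendsto_nhdsWithin_of_tendsto_nhds ?_
    have hcont : Continuous fun ε : ℝ => 4 * (√(φ b + ε) - √(φ a + ε)) ^ 2 := by fun_prop
    simpa [Function.comp_def] using (ENNReal.continuous_ofReal.comp hcont).tendsto 0
  refine le_of_tendsto hlim ?_
  filter_upwards [self_mem_nhdsWithin] with ε hε
  exact ofReal_four_mul_sq_sqrt_add_sub_le_of_pos hab hε hφ hφ' hnn hpos

theorem ContinuousOn.exists_extreme_zeros (hφ : ContinuousOn φ (Icc a b))
    (hzero : ∃ z ∈ Icc a b, φ z = 0) :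
    ∃ α β, a ≤ α ∧ α ≤ β ∧ β ≤ b ∧ φ α = 0 ∧ φ β = 0 ∧
      (∀ x ∈ Ioo a α, φ x ≠ 0) ∧ ∀ x ∈ Ioo β b, φ x ≠ 0 := by
  set Z := Icc a b ∩ φ ⁻¹' {0}
  have hZ : IsCompact Z := isCompact_Icc.of_isClosed_subset
    (hφ.preimage_isClosed_of_isClosed isClosed_Icc isClosed_singleton) inter_subset_left
  have hZne : Z.Nonempty := hzero
  obtain ⟨α, ⟨hαI, hα⟩, hαmin⟩ := hZ.exists_isLeast hZne
  obtain ⟨β, ⟨hβI, hβ⟩, hβmax⟩ := hZ.exists_isGreatest hZne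
  refine ⟨α, β, hαI.1, hαmin ⟨hβI, hβ⟩, hβI.2, hα, hβ, fun x hx h0 => ?_, fun x hx h0 => ?_⟩
  · exact (hαmin ⟨⟨hx.1.le, hx.2.le.trans hαI.2⟩, h0⟩).not_gt hx.2
  · exact (hβmax ⟨⟨hβI.1.trans hx.1.le, hx.2.le⟩, h0⟩).not_gt hx.1

theorem ofReal_four_mul_sq_sqrt_sub_le (hab : a ≤ b)
    (hφ : AbsolutelyContinuousOnInterval φ a b)
    (hφ' : ∀ᵐ x, x ∈ Ioc a b → HasDerivAt φ (g x) x) (hnn : ∀ x ∈ Icc a b, 0 ≤ φ x) :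
    ENNReal.ofReal (4 * (√(φ b) - √(φ a)) ^ 2)
      ≤ ENNReal.ofReal (b - a) * weightedEnergy φ g (Ioc a b) := by
  by_cases hzero : ∃ z ∈ Icc a b, φ z = 0
  swap
  · push Not at hzero
    exact ofReal_four_mul_sq_sqrt_sub_le_of_pos hab hφ hφ' hnn fun x hx =>
      (hnn x (Ioo_subset_Icc_self hx)).lt_of_ne (hzero x (Ioo_subset_Icc_self hx)).symm
  have hφc : ContinuousOn φ (Icc a b) := uIcc_of_le hab ▸ hφ.continuousOn
  obtain ⟨α, β, haα, hαβ, hβb, hα, hβ, hαne, hβne⟩ := hφc.exists_extreme_zeros hzero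
  have piece : ∀ c d, a ≤ c → c ≤ d → d ≤ b → (∀ x ∈ Ioo c d, φ x ≠ 0) →
      ENNReal.ofReal (4 * (√(φ d) - √(φ c)) ^ 2)
        ≤ ENNReal.ofReal (b - a) * weightedEnergy φ g (Ioc c d) := by
    intro c d hac hcd hdb hne
    have hsub : Icc c d ⊆ Icc a b := Icc_subset_Icc hac hdb
    calc _ ≤ ENNReal.ofReal (d - c) * weightedEnergy φ g (Ioc c d) := by
          refine ofReal_four_mul_sq_sqrt_sub_le_of_pos hcd
            (hφ.mono (by simpa [uIcc_of_le hcd, uIcc_of_le hab] using hsub))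
            (hφ'.mono fun x hx hxcd => hx (Ioc_subset_Ioc hac hdb hxcd))
            (fun x hx => hnn x (hsub hx)) fun x hx => ?_
          exact (hnn x (hsub (Ioo_subset_Icc_self hx))).lt_of_ne (hne x hx).symm
      _ ≤ _ := by gcongr
  have h₁ := piece a α le_rfl haα (hαβ.trans hβb) hαne
  have h₂ := piece β b (haα.trans hαβ) hβb le_rfl hβne
  rw [hα, Real.sqrt_zero, zero_sub, neg_sq] at h₁
  rw [hβ, Real.sqrt_zero, sub_zero] at h₂
  calc ENNReal.ofReal (4 * (√(φ b) - √(φ a)) ^ 2)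
      ≤ ENNReal.ofReal (4 * √(φ a) ^ 2) + ENNReal.ofReal (4 * √(φ b) ^ 2) := by
        rw [← ENNReal.ofReal_add (by positivity) (by positivity)]
        gcongr
        nlinarith [Real.sqrt_nonneg (φ a), Real.sqrt_nonneg (φ b)]
    _ ≤ ENNReal.ofReal (b - a) * weightedEnergy φ g (Ioc a α ∪ Ioc β b) := by
        rw [weightedEnergy, lintegral_union measurableSet_Ioc (Ioc_disjoint_Ioc_of_le hαβ),
          mul_add]
        exact add_le_add h₁ h₂
    _ ≤ ENNReal.ofReal (b - a) * weightedEnergy φ g (Ioc a b) := by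
        gcongr
        exact weightedEnergy_mono (union_subset (Ioc_subset_Ioc_right (hαβ.trans hβb))
          (Ioc_subset_Ioc_left (haα.trans hαβ)))

theorem ofReal_four_mul_sq_sqrt_sub_le_of_integrableOn {c : ℝ} (hab : a ≤ b)
    (hg : IntegrableOn g (Icc a b)) (hnn : ∀ s ∈ Icc a b, 0 ≤ c + ∫ r in a..s, g r) :
    ENNReal.ofReal (4 * (√(c + ∫ r in a..b, g r) - √c) ^ 2)
      ≤ ENNReal.ofReal (b - a) * weightedEnergy (fun s => c + ∫ r in a..s, g r) g (Ioc a b) := by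
  have hg' : IntervalIntegrable g volume a b :=
    (intervalIntegrable_iff_integrableOn_Icc_of_le hab).2 hg
  have hderiv : ∀ᵐ x, x ∈ Ioc a b → HasDerivAt (fun s => c + ∫ r in a..s, g r) (g x) x := by
    filter_upwards [hg'.ae_hasDerivAt_integral] with x hx hxab
    exact (hx (uIcc_of_le hab ▸ Ioc_subset_Icc_self hxab) a left_mem_uIcc).const_add c
  have hφ : AbsolutelyContinuousOnInterval (fun s => c + ∫ r in a..s, g r) a b :=
    contDiffOn_const.absolutelyContinuousOnInterval.add
      (hg'.absolutelyContinuousOnInterval_intervalIntegral left_mem_uIcc)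
  simpa using ofReal_four_mul_sq_sqrt_sub_le hab hφ hderiv hnn

end EnergyBound

section Infima

variable {v₀ x : ℝ}

theorem exists_primitive_weightedEnergy_le (hv₀ : 0 ≤ v₀) (hx : 0 ≤ x) :
    ∃ g : ℝ → ℝ, IntegrableOn g (Icc 0 1) ∧
      (∀ s ∈ Icc (0 : ℝ) 1, 0 ≤ v₀ + ∫ r in (0 : ℝ)..s, g r) ∧
      v₀ + ∫ r in (0 : ℝ)..1, g r = x ∧
      weightedEnergy (fun s => v₀ + ∫ r in (0 : ℝ)..s, g r) g (Icc 0 1)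
        ≤ ENNReal.ofReal (4 * (√x - √v₀) ^ 2) := by
  set L := √x - √v₀
  set ψ : ℝ → ℝ := fun s => √v₀ + s * L
  have hψ : ∀ s, HasDerivAt (fun s => ψ s ^ 2) (2 * L * ψ s) s := fun s => by
    have hlin : HasDerivAt ψ L s := by
      simpa [ψ] using ((hasDerivAt_id s).mul_const L).const_add √v₀
    simpa [mul_comm, mul_left_comm] using hlin.fun_pow 2
  have hprim : ∀ s, v₀ + ∫ r in (0 : ℝ)..s, 2 * L * ψ r = ψ s ^ 2 := fun s => by
    rw [intervalIntegral.integral_eq_sub_of_hasDerivAt (fun r _ => hψ r)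
      ((by fun_prop : Continuous fun r => 2 * L * ψ r).intervalIntegrable _ _)]
    simp [ψ, Real.sq_sqrt hv₀]
  refine ⟨fun r => 2 * L * ψ r, (by fun_prop : Continuous _).integrableOn_Icc,
    fun s _ => hprim s ▸ sq_nonneg _, by rw [hprim]; simp [ψ, L, Real.sq_sqrt hx], ?_⟩
  simp only [weightedEnergy, hprim]
  calc _ ≤ ∫⁻ _ in Icc (0 : ℝ) 1, ENNReal.ofReal (4 * L ^ 2) := by
        refine lintegral_mono fun s => ENNReal.ofReal_le_ofReal ?_
        split_ifs with hs
        · rw [mul_pow, mul_pow, mul_div_assoc, div_self hs.ne', mul_one]; norm_num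
        · positivity
    _ = ENNReal.ofReal (4 * L ^ 2) := by simp [Real.volume_Icc]

theorem exists_memLp_lintegral_sq_le :
    ∃ h : ℝ → ℝ, MemLp h 2 (volume.restrict (Icc (0 : ℝ) 1)) ∧
      (∀ s ∈ Icc (0 : ℝ) 1, 0 ≤ √v₀ + ∫ r in (0 : ℝ)..s, h r) ∧
      √v₀ + ∫ r in (0 : ℝ)..1, h r = √x ∧
      ∫⁻ s in Icc (0 : ℝ) 1, ENNReal.ofReal (h s ^ 2) ≤ ENNReal.ofReal ((√x - √v₀) ^ 2) := by
  refine ⟨fun _ => √x - √v₀, memLp_const _, fun s hs => ?_, by simp, by simp [Real.volume_Icc]⟩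
  simp only [intervalIntegral.integral_const, sub_zero, smul_eq_mul]
  nlinarith [Real.sqrt_nonneg x, Real.sqrt_nonneg v₀, hs.1, hs.2]

theorem sInf_weightedEnergy_eq (hv₀ : 0 ≤ v₀) (hx : 0 ≤ x) :
    sInf {E : ℝ≥0∞ | ∃ g : ℝ → ℝ, IntegrableOn g (Icc 0 1) ∧
        (∀ s ∈ Icc (0 : ℝ) 1, 0 ≤ v₀ + ∫ r in (0 : ℝ)..s, g r) ∧
        v₀ + ∫ r in (0 : ℝ)..1, g r = x ∧
        E = weightedEnergy (fun s => v₀ + ∫ r in (0 : ℝ)..s, g r) g (Icc 0 1)}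
      = ENNReal.ofReal (4 * (√x - √v₀) ^ 2) := by
  refine le_antisymm ?_ (le_sInf ?_)
  · obtain ⟨g, hg, hnn, h1, hE⟩ := exists_primitive_weightedEnergy_le hv₀ hx
    exact sInf_le_of_le ⟨g, hg, hnn, h1, rfl⟩ hE
  · rintro _ ⟨g, hg, hnn, rfl, rfl⟩
    calc _ ≤ ENNReal.ofReal (1 - 0) * weightedEnergy (fun s => v₀ + ∫ r in (0 : ℝ)..s, g r) g
          (Ioc 0 1) := ofReal_four_mul_sq_sqrt_sub_le_of_integrableOn zero_le_one hg hnn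
      _ ≤ _ := by simpa using weightedEnergy_mono Ioc_subset_Icc_self

theorem sInf_lintegral_sq_eq :
    sInf {E : ℝ≥0∞ | ∃ h : ℝ → ℝ, MemLp h 2 (volume.restrict (Icc (0 : ℝ) 1)) ∧
        (∀ s ∈ Icc (0 : ℝ) 1, 0 ≤ √v₀ + ∫ r in (0 : ℝ)..s, h r) ∧
        √v₀ + ∫ r in (0 : ℝ)..1, h r = √x ∧
        E = ∫⁻ s in Icc (0 : ℝ) 1, ENNReal.ofReal (h s ^ 2)}
      = ENNReal.ofReal ((√x - √v₀) ^ 2) := by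
  refine le_antisymm ?_ (le_sInf ?_)
  · obtain ⟨h, hh, hnn, h1, hE⟩ := exists_memLp_lintegral_sq_le (v₀ := v₀) (x := x)
    exact sInf_le_of_le ⟨h, hh, hnn, h1, rfl⟩ hE
  · rintro _ ⟨h, hh, -, h1, rfl⟩
    calc ENNReal.ofReal ((√x - √v₀) ^ 2) = ENNReal.ofReal ((∫ r in (0 : ℝ)..1, h r) ^ 2) := by
          rw [← h1, add_sub_cancel_left]
      _ ≤ ENNReal.ofReal (1 - 0) * ∫⁻ s in Ioc (0 : ℝ) 1, ENNReal.ofReal (h s ^ 2) :=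
          intervalIntegral.ofReal_sq_integral_le zero_le_one
            (hh.1.mono_measure (Measure.restrict_mono Ioc_subset_Icc_self le_rfl))
      _ ≤ _ := by simpa using lintegral_mono_set Ioc_subset_Icc_self

end Infima

theorem energy_infimum_change_of_variables_general
    (v₀ : ℝ) (hv₀ : 0 < v₀) (x : ℝ) (hx : 0 ≤ x) :
    sInf {E : ℝ≥0∞ | ∃ g : ℝ → ℝ, IntegrableOn g (Set.Icc 0 1) ∧
        (∀ s ∈ Set.Icc (0 : ℝ) 1, 0 ≤ v₀ + ∫ r in (0 : ℝ)..s, g r) ∧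
        (v₀ + ∫ r in (0 : ℝ)..1, g r) = x ∧
        E = ∫⁻ s in Set.Icc (0 : ℝ) 1,
              ENNReal.ofReal
                (if 0 < v₀ + ∫ r in (0 : ℝ)..s, g r
                  then g s ^ 2 / (v₀ + ∫ r in (0 : ℝ)..s, g r) else 0)}
      = 4 * sInf {E : ℝ≥0∞ | ∃ h : ℝ → ℝ,
          MemLp h 2 (volume.restrict (Set.Icc (0 : ℝ) 1)) ∧
          (∀ s ∈ Set.Icc (0 : ℝ) 1, 0 ≤ Real.sqrt v₀ + ∫ r in (0 : ℝ)..s, h r) ∧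
          (Real.sqrt v₀ + ∫ r in (0 : ℝ)..1, h r) = Real.sqrt x ∧
          E = ∫⁻ s in Set.Icc (0 : ℝ) 1, ENNReal.ofReal (h s ^ 2)} := by
  calc _ = ENNReal.ofReal (4 * (√x - √v₀) ^ 2) := sInf_weightedEnergy_eq hv₀.le hx
    _ = 4 * ENNReal.ofReal ((√x - √v₀) ^ 2) := by
        rw [ENNReal.ofReal_mul (by norm_num), ENNReal.ofReal_ofNat]
    _ = _ := by rw [sInf_lintegral_sq_eq]

/-- Change of variables `ψ = √φ`: for `x ≥ 0`, the minimal Dirichlet-type energy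
`∫₀¹ φ'(s)²/φ(s) 1_{φ(s)>0} ds` over nonnegative absolutely continuous `φ` with
`φ(0) = v₀`, `φ(1) = x`, equals `4` times the minimal energy `∫₀¹ ψ'(s)² ds` over
nonnegative absolutely continuous `ψ` with `ψ(0) = √v₀`, `ψ(1) = √x`. -/
theorem energy_infimum_change_of_variables
    (ξ v₀ : ℝ) (hξ : 0 < ξ) (hv₀ : 0 < v₀) (x : ℝ) (hx : 0 ≤ x) :
    sInf {E : ℝ≥0∞ | ∃ g : ℝ → ℝ, IntegrableOn g (Set.Icc 0 1) ∧
        (∀ s ∈ Set.Icc (0 : ℝ) 1, 0 ≤ v₀ + ∫ r in (0 : ℝ)..s, g r) ∧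
        (v₀ + ∫ r in (0 : ℝ)..1, g r) = x ∧
        E = ∫⁻ s in Set.Icc (0 : ℝ) 1,
              ENNReal.ofReal
                (if 0 < v₀ + ∫ r in (0 : ℝ)..s, g r
                  then g s ^ 2 / (v₀ + ∫ r in (0 : ℝ)..s, g r) else 0)}
      = 4 * sInf {E : ℝ≥0∞ | ∃ h : ℝ → ℝ,
          MemLp h 2 (volume.restrict (Set.Icc (0 : ℝ) 1)) ∧
          (∀ s ∈ Set.Icc (0 : ℝ) 1, 0 ≤ Real.sqrt v₀ + ∫ r in (0 : ℝ)..s, h r) ∧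
          (Real.sqrt v₀ + ∫ r in (0 : ℝ)..1, h r) = Real.sqrt x ∧
          E = ∫⁻ s in Set.Icc (0 : ℝ) 1, ENNReal.ofReal (h s ^ 2)} :=
  energy_infimum_change_of_variables_general v₀ hv₀ x hx
end

section
/- Let v₀ ≥ 0 and let g : [0,1] → ℝ be integrable such that φ(s) := v₀ + ∫₀^s g(r) dr is nonnegative on [0,1] and ∫₀¹ (g(s)²/φ(s)) 1_{φ(s)>0} ds < ∞. Then the function ψ := √φ is absolutely continuous: there exists a square-integrable h : [0,1] → ℝ with ψ(s) = √v₀ + ∫₀^s h(r) dr for all s ∈ [0,1], and moreover ∫₀¹ h(s)² ds = (1/4) ∫₀¹ (g(s)²/φ(s)) 1_{φ(s)>0} ds. -/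
/-!
The square root is not Lipschitz at `0`, so the chain rule for absolutely continuous functions
is applied to the smooth approximations `(x² + ε)^{1/4}` of `√|x|` instead. Their derivatives
vanish at `0` (so nothing is contributed where `φ = 0`) and are dominated by `1/(2√x)` on
`(0, ∞)`; the finite energy makes `g/(2√φ) 1_{φ>0}` square integrable, hence an integrable
majorant, and dominated convergence as `ε → 0` gives `√φ(s) = √v₀ + ∫₀^s g/(2√φ) 1_{φ>0}`.
The energy identity then holds pointwise.
-/

open MeasureTheory Filter Topology Set

variable {a b : ℝ}

theorem LipschitzWith.comp_absolutelyContinuousOnInterval {X Y : Type*} [PseudoMetricSpace X]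
    [PseudoMetricSpace Y] {f : X → Y} {K : NNReal} (hf : LipschitzWith K f) {g : ℝ → X}
    (hg : AbsolutelyContinuousOnInterval g a b) :
    AbsolutelyContinuousOnInterval (f ∘ g) a b := by
  refine squeeze_zero (fun E ↦ Finset.sum_nonneg fun _ _ ↦ dist_nonneg) (fun E ↦ ?_)
    (by simpa using Tendsto.const_mul (K : ℝ) hg)
  rw [Finset.mul_sum]
  gcongr
  exact hf.dist_le_mul _ _

theorem AbsolutelyContinuousOnInterval.integral_comp_mul_deriv_of_lipschitzWith
    {f f' Φ : ℝ → ℝ} {K : NNReal} (hf : LipschitzWith K f) (hf' : ∀ y, HasDerivAt f (f' y) y)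
    (hΦ : AbsolutelyContinuousOnInterval Φ a b) :
    ∫ x in a..b, f' (Φ x) * deriv Φ x = f (Φ b) - f (Φ a) := by
  refine Eq.trans ?_ (hf.comp_absolutelyContinuousOnInterval hΦ).integral_deriv_eq_sub
  refine intervalIntegral.integral_congr_ae ?_
  filter_upwards [hΦ.ae_differentiableAt] with x hx hxab
  exact ((hf' (Φ x)).comp x (hx (uIoc_subset_uIcc hxab)).hasDerivAt).deriv.symm

noncomputable def sqrtDeriv (y : ℝ) : ℝ := if 0 < y then (2 * √y)⁻¹ else 0

noncomputable def smoothSqrt (ε x : ℝ) : ℝ := √(√(x ^ 2 + ε))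

noncomputable def smoothSqrtDeriv (ε x : ℝ) : ℝ := x / (2 * √(x ^ 2 + ε) * √(√(x ^ 2 + ε)))

section smoothSqrt

variable {ε : ℝ}

theorem hasDerivAt_smoothSqrt (hε : 0 < ε) (x : ℝ) :
    HasDerivAt (smoothSqrt ε) (smoothSqrtDeriv ε x) x := by
  have hu : 0 < √(x ^ 2 + ε) := Real.sqrt_pos.2 (by positivity)
  have hsq := ((hasDerivAt_pow 2 x).add_const ε).sqrt (by positivity) |>.sqrt hu.ne'
  refine hsq.congr_deriv ?_
  norm_num [smoothSqrtDeriv]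
  field_simp

theorem continuous_smoothSqrtDeriv (hε : 0 < ε) : Continuous (smoothSqrtDeriv ε) :=
  continuous_id.div (by fun_prop) fun x ↦ by positivity

theorem abs_smoothSqrtDeriv_le (hε : 0 < ε) (x : ℝ) :
    |smoothSqrtDeriv ε x| ≤ (2 * √√ε)⁻¹ := by
  have hεv : √√ε ≤ √√(x ^ 2 + ε) := Real.sqrt_le_sqrt (Real.sqrt_le_sqrt (by nlinarith))
  rw [smoothSqrtDeriv, abs_div,
    abs_of_pos (a := 2 * √(x ^ 2 + ε) * √√(x ^ 2 + ε)) (by positivity)]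
  calc |x| / (2 * √(x ^ 2 + ε) * √√(x ^ 2 + ε))
      ≤ √(x ^ 2 + ε) / (2 * √(x ^ 2 + ε) * √√(x ^ 2 + ε)) := by
        gcongr; exact Real.abs_le_sqrt (by linarith)
    _ = (2 * √√(x ^ 2 + ε))⁻¹ := by field_simp
    _ ≤ (2 * √√ε)⁻¹ := by gcongr

theorem exists_lipschitzWith_smoothSqrt (hε : 0 < ε) : ∃ K, LipschitzWith K (smoothSqrt ε) := by
  refine ⟨(2 * √√ε)⁻¹.toNNReal, lipschitzWith_of_nnnorm_deriv_le
    (fun x ↦ (hasDerivAt_smoothSqrt hε x).differentiableAt) fun x ↦ ?_⟩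
  rw [(hasDerivAt_smoothSqrt hε x).deriv, ← NNReal.coe_le_coe, coe_nnnorm, Real.norm_eq_abs,
    Real.coe_toNNReal _ (by positivity)]
  exact abs_smoothSqrtDeriv_le hε x

theorem abs_smoothSqrtDeriv_le_sqrtDeriv (hε : 0 < ε) {x : ℝ} (hx : 0 ≤ x) :
    |smoothSqrtDeriv ε x| ≤ sqrtDeriv x := by
  rcases hx.eq_or_lt with rfl | hx
  · simp [smoothSqrtDeriv, sqrtDeriv]
  have hxu : x ≤ √(x ^ 2 + ε) := Real.le_sqrt_of_sq_le (by linarith)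
  have hxv : √x ≤ √√(x ^ 2 + ε) := Real.sqrt_le_sqrt hxu
  rw [sqrtDeriv, if_pos hx, smoothSqrtDeriv, abs_of_pos (by positivity)]
  calc x / (2 * √(x ^ 2 + ε) * √√(x ^ 2 + ε)) ≤ x / (2 * x * √x) := by gcongr
    _ = (2 * √x)⁻¹ := by field_simp

end smoothSqrt

theorem tendsto_smoothSqrt {x : ℝ} (hx : 0 ≤ x) :
    Tendsto (fun ε ↦ smoothSqrt ε x) (𝓝 0) (𝓝 √x) := by
  have : Continuous fun ε ↦ smoothSqrt ε x := by unfold smoothSqrt; fun_prop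
  simpa [smoothSqrt, Real.sqrt_sq hx] using this.tendsto 0

theorem tendsto_smoothSqrtDeriv {x : ℝ} (hx : 0 ≤ x) :
    Tendsto (fun ε ↦ smoothSqrtDeriv ε x) (𝓝 0) (𝓝 (sqrtDeriv x)) := by
  rcases hx.eq_or_lt with rfl | hx
  · simp [smoothSqrtDeriv, sqrtDeriv]
  have hc : ContinuousAt (fun ε ↦ smoothSqrtDeriv ε x) 0 :=
    continuousAt_const.div (by fun_prop) (by rw [add_zero, Real.sqrt_sq hx.le]; positivity)
  convert hc.tendsto using 2
  simp only [smoothSqrtDeriv, sqrtDeriv, if_pos hx, add_zero, Real.sqrt_sq hx.le]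
  field_simp

theorem AbsolutelyContinuousOnInterval.integral_sqrtDeriv_mul_deriv {Φ : ℝ → ℝ}
    (hΦ : AbsolutelyContinuousOnInterval Φ a b) (hΦ_nonneg : ∀ x ∈ uIcc a b, 0 ≤ Φ x)
    (hint : IntervalIntegrable (fun x ↦ sqrtDeriv (Φ x) * deriv Φ x) volume a b) :
    ∫ x in a..b, sqrtDeriv (Φ x) * deriv Φ x = √(Φ b) - √(Φ a) := by
  have hΦ_meas : AEStronglyMeasurable Φ (volume.restrict (uIoc a b)) :=
    (hΦ.continuousOn.mono uIoc_subset_uIcc).aestronglyMeasurable measurableSet_uIoc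
  have hsmooth : ∀ ε > 0, ∫ x in a..b, smoothSqrtDeriv ε (Φ x) * deriv Φ x
      = smoothSqrt ε (Φ b) - smoothSqrt ε (Φ a) := fun ε hε ↦
    have ⟨_, hK⟩ := exists_lipschitzWith_smoothSqrt hε
    hΦ.integral_comp_mul_deriv_of_lipschitzWith hK (hasDerivAt_smoothSqrt hε)
  have hlim : Tendsto (fun ε ↦ ∫ x in a..b, smoothSqrtDeriv ε (Φ x) * deriv Φ x) (𝓝[>] 0)
      (𝓝 (∫ x in a..b, sqrtDeriv (Φ x) * deriv Φ x)) := by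
    refine intervalIntegral.tendsto_integral_filter_of_dominated_convergence
      (fun x ↦ ‖sqrtDeriv (Φ x) * deriv Φ x‖) ?_ ?_ hint.norm ?_
    · filter_upwards [self_mem_nhdsWithin] with ε hε
      exact ((continuous_smoothSqrtDeriv hε).comp_aestronglyMeasurable hΦ_meas).mul
        (measurable_deriv Φ).aestronglyMeasurable
    · filter_upwards [self_mem_nhdsWithin] with ε hε
      refine ae_of_all _ fun x hx ↦ ?_
      rw [norm_mul, norm_mul, Real.norm_eq_abs, Real.norm_eq_abs]
      gcongr
      exact (abs_smoothSqrtDeriv_le_sqrtDeriv hε (hΦ_nonneg x (uIoc_subset_uIcc hx))).trans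
        (le_abs_self _)
    · refine ae_of_all _ fun x hx ↦ ?_
      exact ((tendsto_smoothSqrtDeriv (hΦ_nonneg x (uIoc_subset_uIcc hx))).mono_left
        nhdsWithin_le_nhds).mul_const _
  have hlim' : Tendsto (fun ε ↦ smoothSqrt ε (Φ b) - smoothSqrt ε (Φ a)) (𝓝[>] 0)
      (𝓝 (√(Φ b) - √(Φ a))) :=
    ((tendsto_smoothSqrt (hΦ_nonneg b right_mem_uIcc)).sub
      (tendsto_smoothSqrt (hΦ_nonneg a left_mem_uIcc))).mono_left nhdsWithin_le_nhds
  exact tendsto_nhds_unique hlim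
    (hlim'.congr' (eventually_nhdsWithin_of_forall fun ε hε ↦ (hsmooth ε hε).symm))

theorem sqrt_add_integral_eq {c : ℝ} {G : ℝ → ℝ} (hG : IntervalIntegrable G volume a b)
    (hnonneg : ∀ x ∈ uIcc a b, 0 ≤ c + ∫ t in a..x, G t)
    (hint : IntervalIntegrable (fun x ↦ G x * sqrtDeriv (c + ∫ t in a..x, G t)) volume a b) :
    √(c + ∫ t in a..b, G t) = √c + ∫ x in a..b, G x * sqrtDeriv (c + ∫ t in a..x, G t) := by
  set Φ : ℝ → ℝ := fun x ↦ c + ∫ t in a..x, G t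
  have hΦ : AbsolutelyContinuousOnInterval Φ a b :=
    ((LipschitzWith.const c).lipschitzOnWith.absolutelyContinuousOnInterval).fun_add
      (hG.absolutelyContinuousOnInterval_intervalIntegral left_mem_uIcc)
  have hderiv : ∀ᵐ x, x ∈ uIoc a b → sqrtDeriv (Φ x) * deriv Φ x = G x * sqrtDeriv (Φ x) := by
    filter_upwards [hG.ae_hasDerivAt_integral] with x hx hxab
    rw [((hx (uIoc_subset_uIcc hxab) a left_mem_uIcc).const_add c).deriv, mul_comm]
  have hFTC := hΦ.integral_sqrtDeriv_mul_deriv hnonneg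
    (hint.congr_ae (((ae_restrict_iff' measurableSet_uIoc).2 hderiv).mono fun _ h ↦ h.symm))
  rw [intervalIntegral.integral_congr_ae hderiv] at hFTC
  simp only [Φ, intervalIntegral.integral_same, add_zero] at hFTC
  linarith

theorem measurable_sqrtDeriv : Measurable sqrtDeriv :=
  Measurable.ite measurableSet_Ioi (by fun_prop) measurable_const

theorem sq_mul_sqrtDeriv (x y : ℝ) :
    (x * sqrtDeriv y) ^ 2 = 1 / 4 * if 0 < y then x ^ 2 / y else 0 := by
  unfold sqrtDeriv
  split_ifs with hy
  · rw [mul_pow, inv_pow, mul_pow, Real.sq_sqrt hy.le]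
    ring
  · simp

theorem sqrt_of_finite_energy_path_is_AC_general
    (v₀ : ℝ) (g : ℝ → ℝ) (hg : IntegrableOn g (Set.Icc 0 1))
    (hφ : ∀ s ∈ Set.Icc (0 : ℝ) 1, 0 ≤ v₀ + ∫ r in (0 : ℝ)..s, g r)
    (hE : (∫⁻ s in Set.Icc (0 : ℝ) 1,
        ENNReal.ofReal
          (if 0 < v₀ + ∫ r in (0 : ℝ)..s, g r
            then g s ^ 2 / (v₀ + ∫ r in (0 : ℝ)..s, g r) else 0)) < ⊤) :
    ∃ h : ℝ → ℝ, MemLp h 2 (volume.restrict (Set.Icc (0 : ℝ) 1)) ∧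
      (∀ s ∈ Set.Icc (0 : ℝ) 1,
        Real.sqrt (v₀ + ∫ r in (0 : ℝ)..s, g r)
          = Real.sqrt v₀ + ∫ r in (0 : ℝ)..s, h r) ∧
      (∫⁻ s in Set.Icc (0 : ℝ) 1, ENNReal.ofReal (h s ^ 2))
        = ENNReal.ofReal (1 / 4) *
          ∫⁻ s in Set.Icc (0 : ℝ) 1,
            ENNReal.ofReal
              (if 0 < v₀ + ∫ r in (0 : ℝ)..s, g r
                then g s ^ 2 / (v₀ + ∫ r in (0 : ℝ)..s, g r) else 0) := by
  set φ : ℝ → ℝ := fun s ↦ v₀ + ∫ r in (0 : ℝ)..s, g r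
  set h : ℝ → ℝ := fun s ↦ g s * sqrtDeriv (φ s)
  have henergy : (∫⁻ s in Icc (0 : ℝ) 1, ENNReal.ofReal (h s ^ 2)) = ENNReal.ofReal (1 / 4) *
      ∫⁻ s in Icc (0 : ℝ) 1, ENNReal.ofReal (if 0 < φ s then g s ^ 2 / φ s else 0) := by
    simp_rw [h, sq_mul_sqrtDeriv, ENNReal.ofReal_mul (by norm_num : (0 : ℝ) ≤ 1 / 4)]
    exact lintegral_const_mul' _ _ ENNReal.ofReal_ne_top
  have hI : uIcc (0 : ℝ) 1 = Icc 0 1 := uIcc_of_le zero_le_one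
  have hφ_cont : ContinuousOn φ (Icc 0 1) :=
    continuousOn_const.add (hI ▸ intervalIntegral.continuousOn_primitive_interval (hI ▸ hg))
  have hmeas : AEStronglyMeasurable h (volume.restrict (Icc 0 1)) :=
    hg.aestronglyMeasurable.mul (measurable_sqrtDeriv.comp_aemeasurable
      (hφ_cont.aestronglyMeasurable measurableSet_Icc).aemeasurable).aestronglyMeasurable
  have hmem : MemLp h 2 (volume.restrict (Icc 0 1)) := by
    refine (memLp_two_iff_integrable_sq hmeas).2 ⟨hmeas.pow 2, ?_⟩
    rw [hasFiniteIntegral_iff_ofReal (ae_of_all _ fun x ↦ sq_nonneg (h x)), henergy]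
    exact ENNReal.mul_lt_top ENNReal.ofReal_lt_top hE
  refine ⟨h, hmem, fun s hs ↦ ?_, henergy⟩
  have hsub : uIcc 0 s ⊆ Icc 0 1 := by rw [uIcc_of_le hs.1]; exact Icc_subset_Icc_right hs.2
  exact sqrt_add_integral_eq (hg.mono_set hsub).intervalIntegrable (fun x hx ↦ hφ x (hsub hx))
    (IntegrableOn.mono_set (hmem.integrable one_le_two) hsub).intervalIntegrable

/-- Superposition principle: if `φ(s) = v₀ + ∫₀^s g` is nonnegative on `[0,1]` with finite
energy `∫₀¹ g²/φ 1_{φ>0} < ∞`, then `ψ = √φ` is absolutely continuous, with square-integrable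
derivative `h`, and `∫₀¹ h² = (1/4) ∫₀¹ g²/φ 1_{φ>0}`. -/
theorem sqrt_of_finite_energy_path_is_AC
    (v₀ : ℝ) (hv₀ : 0 ≤ v₀) (g : ℝ → ℝ) (hg : IntegrableOn g (Set.Icc 0 1))
    (hφ : ∀ s ∈ Set.Icc (0 : ℝ) 1, 0 ≤ v₀ + ∫ r in (0 : ℝ)..s, g r)
    (hE : (∫⁻ s in Set.Icc (0 : ℝ) 1,
        ENNReal.ofReal
          (if 0 < v₀ + ∫ r in (0 : ℝ)..s, g r
            then g s ^ 2 / (v₀ + ∫ r in (0 : ℝ)..s, g r) else 0)) < ⊤) :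
    ∃ h : ℝ → ℝ, MemLp h 2 (volume.restrict (Set.Icc (0 : ℝ) 1)) ∧
      (∀ s ∈ Set.Icc (0 : ℝ) 1,
        Real.sqrt (v₀ + ∫ r in (0 : ℝ)..s, g r)
          = Real.sqrt v₀ + ∫ r in (0 : ℝ)..s, h r) ∧
      (∫⁻ s in Set.Icc (0 : ℝ) 1, ENNReal.ofReal (h s ^ 2))
        = ENNReal.ofReal (1 / 4) *
          ∫⁻ s in Set.Icc (0 : ℝ) 1,
            ENNReal.ofReal
              (if 0 < v₀ + ∫ r in (0 : ℝ)..s, g r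
                then g s ^ 2 / (v₀ + ∫ r in (0 : ℝ)..s, g r) else 0) :=
  sqrt_of_finite_energy_path_is_AC_general v₀ g hg hφ hE
end

section
/- Define the rescaled cumulant generating function Λ_V(u,t) := t · log ∫ e^{u z / t} γ_t(dz) (valued in (−∞,∞]). Then: (i) for every u < 2/ξ², the integral ∫ e^{uz/t} γ_t(dz) is finite for every t > 0 and lim_{t→0⁺} Λ_V(u,t) = 0; (ii) for every u > 2/ξ², there exists t₀ > 0 such that ∫ e^{uz/t} γ_t(dz) = +∞ for all 0 < t < t₀. -/
open MeasureTheory Real Set Filter Topology ProbabilityTheory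
open scoped ENNReal

lemma gamma_mgf_of_lt {μ r θ : ℝ} (hμ : 0 < μ) (hr : 0 < r) (hθ : θ < r) :
    ∫⁻ z, ENNReal.ofReal (Real.exp (θ * z)) ∂(gammaMeasure μ r)
      = ENNReal.ofReal ((r / (r - θ)) ^ μ) := by
  have hrθ : 0 < r - θ := by linarith
  have hmeas : Measurable fun z : ℝ => ENNReal.ofReal (Real.exp (θ * z)) :=
    (Real.measurable_exp.comp (measurable_id.const_mul θ)).ennreal_ofReal
  have hpdf : Measurable (gammaPDF μ r) := (measurable_gammaPDFReal μ r).ennreal_ofReal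
  rw [gammaMeasure, lintegral_withDensity_eq_lintegral_mul _ hpdf hmeas]
  have key : ∀ z : ℝ, (gammaPDF μ r * fun z => ENNReal.ofReal (Real.exp (θ * z))) z
      = ENNReal.ofReal ((r / (r - θ)) ^ μ) * gammaPDF μ (r - θ) z := by
    intro z
    simp only [Pi.mul_apply]
    rcases lt_or_ge z 0 with hz | hz
    · rw [gammaPDF_of_neg hz, gammaPDF_of_neg hz, zero_mul, mul_zero]
    · rw [gammaPDF_of_nonneg hz, gammaPDF_of_nonneg hz,
        ← ENNReal.ofReal_mul (by positivity), ← ENNReal.ofReal_mul (by positivity)]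
      congr 1
      have he : Real.exp (-(r * z)) * Real.exp (θ * z) = Real.exp (-((r - θ) * z)) := by
        rw [← Real.exp_add]; ring_nf
      have hd : (r / (r - θ)) ^ μ = r ^ μ / (r - θ) ^ μ := div_rpow hr.le hrθ.le μ
      have h1 : (0:ℝ) < (r - θ) ^ μ := rpow_pos_of_pos hrθ μ
      have h2 : (0:ℝ) < Real.Gamma μ := Real.Gamma_pos_of_pos hμ
      rw [hd, ← he]
      field_simp
  rw [lintegral_congr key, lintegral_const_mul _ (show Measurable (gammaPDF μ (r-θ)) from (measurable_gammaPDFReal μ (r - θ)).ennreal_ofReal),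
    lintegral_gammaPDF_eq_one hμ hrθ, mul_one]

lemma gamma_mgf_of_ge {μ r θ : ℝ} (hμ : 1 ≤ μ) (hr : 0 < r) (hθ : r ≤ θ) :
    ∫⁻ z, ENNReal.ofReal (Real.exp (θ * z)) ∂(gammaMeasure μ r) = ⊤ := by
  have hmeas : Measurable fun z : ℝ => ENNReal.ofReal (Real.exp (θ * z)) :=
    (Real.measurable_exp.comp (measurable_id.const_mul θ)).ennreal_ofReal
  have hpdf : Measurable (gammaPDF μ r) := (measurable_gammaPDFReal μ r).ennreal_ofReal
  rw [gammaMeasure, lintegral_withDensity_eq_lintegral_mul _ hpdf hmeas]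
  have h2 : (0:ℝ) < Real.Gamma μ := Real.Gamma_pos_of_pos (by linarith)
  set C : ℝ := r ^ μ / Real.Gamma μ with hC
  have hCpos : 0 < C := by positivity
  rw [eq_top_iff]
  calc (⊤:ℝ≥0∞) = ENNReal.ofReal C * volume (Ici (1:ℝ)) := by
        rw [Real.volume_Ici, ENNReal.mul_top (by simp [ENNReal.ofReal_eq_zero, not_le, hCpos])]
    _ = ∫⁻ _ in Ici (1:ℝ), ENNReal.ofReal C ∂volume := (setLIntegral_const _ _).symm
    _ ≤ ∫⁻ z in Ici (1:ℝ), (gammaPDF μ r * fun z => ENNReal.ofReal (Real.exp (θ * z))) z ∂volume := by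
        refine setLIntegral_mono (hpdf.mul hmeas) ?_
        intro z hz
        have hz1 : (1:ℝ) ≤ z := hz
        have hz0 : (0:ℝ) ≤ z := by linarith
        simp only [Pi.mul_apply]
        rw [gammaPDF_of_nonneg hz0, ← ENNReal.ofReal_mul (by positivity)]
        apply ENNReal.ofReal_le_ofReal
        have hzp : (1:ℝ) ≤ z ^ (μ - 1) := Real.one_le_rpow hz1 (by linarith)
        have hexp : (1:ℝ) ≤ Real.exp (-(r * z)) * Real.exp (θ * z) := by
          rw [← Real.exp_add]
          rw [show -(r*z) + θ*z = (θ - r)*z by ring]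
          exact Real.one_le_exp (by nlinarith)
        calc C = C * 1 * 1 := by ring
          _ ≤ C * z ^ (μ - 1) * (Real.exp (-(r * z)) * Real.exp (θ * z)) := by
              apply mul_le_mul _ hexp (by norm_num) (by positivity)
              exact mul_le_mul le_rfl hzp (by norm_num) hCpos.le
          _ = C * z ^ (μ - 1) * Real.exp (-(r * z)) * Real.exp (θ * z) := by ring
    _ ≤ ∫⁻ z, (gammaPDF μ r * fun z => ENNReal.ofReal (Real.exp (θ * z))) z ∂volume :=
        setLIntegral_le_lintegral _ _

section helpers
variable {ξ b : ℝ}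

lemma aux_exp_lt_one (hb : b < 0) {t : ℝ} (ht : 0 < t) : Real.exp (b * t) < 1 :=
  Real.exp_lt_one_iff.mpr (by nlinarith)

lemma aux_glb (hξ : 0 < ξ) (hb : b < 0) {t : ℝ} (ht : 0 < t) :
    2 / ξ ^ 2 ≤ t * (-2 * b / (ξ ^ 2 * (1 - Real.exp (b * t)))) := by
  have hE := aux_exp_lt_one hb ht
  have hden : 0 < ξ ^ 2 * (1 - Real.exp (b * t)) := mul_pos (pow_pos hξ 2) (by linarith)
  have hξ2 : (0:ℝ) < ξ ^ 2 := by positivity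
  rw [mul_div_assoc' t _ _, div_le_div_iff₀ hξ2 hden]
  have h1 : b * t + 1 ≤ Real.exp (b * t) := Real.add_one_le_exp _
  nlinarith [pow_pos hξ 2]

lemma aux_tendsto (hξ : 0 < ξ) (hb : b < 0) :
    Tendsto (fun t : ℝ => t * (-2 * b / (ξ ^ 2 * (1 - Real.exp (b * t)))))
      (𝓝[>] (0:ℝ)) (𝓝 (2 / ξ ^ 2)) := by
  have hslope : Tendsto (fun x : ℝ => (Real.exp x - 1) / x) (𝓝[≠] (0:ℝ)) (𝓝 1) := by
    have h := hasDerivAt_iff_tendsto_slope.mp (Real.hasDerivAt_exp 0)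
    simp only [Real.exp_zero, slope_def_field] at h
    refine h.congr fun x => ?_
    simp [slope, Real.exp_zero]
    ring
  have hbt : Tendsto (fun t : ℝ => b * t) (𝓝[>] (0:ℝ)) (𝓝[≠] (0:ℝ)) := by
    rw [tendsto_nhdsWithin_iff]
    constructor
    · have : Tendsto (fun t : ℝ => b * t) (𝓝 (0:ℝ)) (𝓝 (b * 0)) :=
        (tendsto_id.const_mul b)
      simpa using this.mono_left nhdsWithin_le_nhds
    · filter_upwards [self_mem_nhdsWithin] with t (ht : 0 < t)
      have : b * t < 0 := by nlinarith
      simp [this.ne]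
  have hmain : Tendsto (fun t : ℝ => (Real.exp (b * t) - 1) / (b * t)) (𝓝[>] (0:ℝ)) (𝓝 1) :=
    hslope.comp hbt
  have hb' : b ≠ 0 := hb.ne
  have hξ2 : (0:ℝ) < ξ ^ 2 := by positivity
  have hden : Tendsto (fun t : ℝ => ξ ^ 2 * ((1 - Real.exp (b * t)) / t)) (𝓝[>] (0:ℝ))
      (𝓝 (ξ ^ 2 * (-b))) := by
    have : Tendsto (fun t : ℝ => (-b) * ((Real.exp (b * t) - 1) / (b * t))) (𝓝[>] (0:ℝ))
        (𝓝 ((-b) * 1)) := hmain.const_mul _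
    rw [show ξ ^ 2 * (-b) = ξ ^ 2 * ((-b) * 1) by ring]
    refine ((this.congr' ?_).const_mul (ξ ^ 2))
    filter_upwards [self_mem_nhdsWithin] with t (ht : 0 < t)
    field_simp
    ring
  have hlim : Tendsto (fun t : ℝ => -2 * b / (ξ ^ 2 * ((1 - Real.exp (b * t)) / t)))
      (𝓝[>] (0:ℝ)) (𝓝 (-2 * b / (ξ ^ 2 * (-b)))) :=
    tendsto_const_nhds.div hden (by nlinarith [sq_nonneg ξ, pow_pos hξ 2])
  have heq : (-2 * b / (ξ ^ 2 * (-b))) = 2 / ξ ^ 2 := by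
    field_simp
  rw [heq] at hlim
  refine hlim.congr' ?_
  filter_upwards [self_mem_nhdsWithin] with t (ht : 0 < t)
  have hE := aux_exp_lt_one hb ht
  have h1 : (1:ℝ) - Real.exp (b * t) ≠ 0 := by nlinarith
  field_simp
end helpers

/-- Limiting rescaled cumulant generating function of the Gamma laws `γ_t`:
for `u < 2/ξ²` the mgf `∫ e^{uz/t} γ_t(dz)` is finite for every `t > 0` and
`Λ_V(u,t) = t log ∫ e^{uz/t} γ_t(dz) → 0` as `t → 0⁺`; for `u > 2/ξ²` the mgf is
infinite for all small enough `t > 0`. -/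
theorem gamma_rescaled_cgf_limit
    (a ξ b : ℝ) (ha : 0 < a) (hξ : 0 < ξ) (hb : b < 0)
    (μ : ℝ) (hμ_def : μ = 2 * a / ξ ^ 2) (hμ : 1 < μ)
    (lam : ℝ → ℝ) (hlam : ∀ t, lam t = -2 * b / (ξ ^ 2 * (1 - Real.exp (b * t))))
    (γ : ℝ → Measure ℝ)
    (hγ : ∀ t, 0 < t → γ t = ProbabilityTheory.gammaMeasure μ (lam t)) :
    (∀ u : ℝ, u < 2 / ξ ^ 2 →
      (∀ t : ℝ, 0 < t → (∫⁻ z, ENNReal.ofReal (Real.exp (u * z / t)) ∂(γ t)) < ⊤)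
      ∧ Tendsto
          (fun t : ℝ =>
            t * Real.log (∫⁻ z, ENNReal.ofReal (Real.exp (u * z / t)) ∂(γ t)).toReal)
          (𝓝[>] (0 : ℝ)) (𝓝 0))
    ∧ (∀ u : ℝ, 2 / ξ ^ 2 < u →
      ∃ t₀ > (0 : ℝ), ∀ t : ℝ, 0 < t → t < t₀ →
        (∫⁻ z, ENNReal.ofReal (Real.exp (u * z / t)) ∂(γ t)) = ⊤) := by
  have hξ2 : (0:ℝ) < ξ ^ 2 := by positivity
  have hμ0 : (0:ℝ) < μ := by linarith
  have hc : (0:ℝ) < 2 / ξ ^ 2 := by positivity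
  have hlam_pos : ∀ t : ℝ, 0 < t → 0 < lam t := by
    intro t ht
    rw [hlam]
    have hE := aux_exp_lt_one hb ht
    exact div_pos (by linarith) (mul_pos (pow_pos hξ 2) (by linarith))
  have hglb : ∀ t : ℝ, 0 < t → 2 / ξ ^ 2 ≤ t * lam t := by
    intro t ht; rw [hlam]; exact aux_glb hξ hb ht
  have htend : Tendsto (fun t => t * lam t) (𝓝[>] (0:ℝ)) (𝓝 (2 / ξ ^ 2)) :=
    (aux_tendsto hξ hb).congr fun t => by rw [hlam]
  have hint : ∀ u t : ℝ, 0 < t → (∫⁻ z, ENNReal.ofReal (Real.exp (u * z / t)) ∂(γ t))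
      = ∫⁻ z, ENNReal.ofReal (Real.exp ((u / t) * z)) ∂(gammaMeasure μ (lam t)) := by
    intro u t ht
    rw [hγ t ht]
    exact lintegral_congr fun z => by rw [mul_div_right_comm]
  constructor
  · intro u hu
    have hfin : ∀ t : ℝ, 0 < t → (∫⁻ z, ENNReal.ofReal (Real.exp (u * z / t)) ∂(γ t))
        = ENNReal.ofReal ((lam t / (lam t - u / t)) ^ μ) := by
      intro t ht
      rw [hint u t ht]
      refine gamma_mgf_of_lt hμ0 (hlam_pos t ht) ?_
      rw [div_lt_iff₀ ht]
      calc u < 2 / ξ ^ 2 := hu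
        _ ≤ t * lam t := hglb t ht
        _ = lam t * t := mul_comm _ _
    refine ⟨fun t ht => by rw [hfin t ht]; exact ENNReal.ofReal_lt_top, ?_⟩
    have hcu : (0:ℝ) < 2 / ξ ^ 2 - u := by linarith
    have h1 : Tendsto (fun t => t * lam t / (t * lam t - u)) (𝓝[>] (0:ℝ))
        (𝓝 ((2 / ξ ^ 2) / (2 / ξ ^ 2 - u))) :=
      htend.div (htend.sub tendsto_const_nhds) hcu.ne'
    have hL : Tendsto (fun t => μ * Real.log (t * lam t / (t * lam t - u))) (𝓝[>] (0:ℝ))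
        (𝓝 (μ * Real.log ((2 / ξ ^ 2) / (2 / ξ ^ 2 - u)))) :=
      (h1.log (div_pos hc hcu).ne').const_mul μ
    have h0 : Tendsto (fun t : ℝ => t) (𝓝[>] (0:ℝ)) (𝓝 0) :=
      tendsto_id.mono_left nhdsWithin_le_nhds
    have hmul := h0.mul hL
    rw [zero_mul] at hmul
    refine hmul.congr' ?_
    filter_upwards [self_mem_nhdsWithin] with t (ht : 0 < t)
    have hg : (0:ℝ) < t * lam t := lt_of_lt_of_le hc (hglb t ht)
    have hgu : (0:ℝ) < t * lam t - u := by have := hglb t ht; linarith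
    have hbase : (0:ℝ) < lam t - u / t := by
      rw [sub_pos, div_lt_iff₀ ht]
      calc u < 2 / ξ ^ 2 := hu
        _ ≤ t * lam t := hglb t ht
        _ = lam t * t := mul_comm _ _
    have hratio : lam t / (lam t - u / t) = t * lam t / (t * lam t - u) := by
      rw [div_eq_div_iff hbase.ne' hgu.ne']
      field_simp
    rw [hfin t ht, ENNReal.toReal_ofReal (rpow_nonneg (div_nonneg (hlam_pos t ht).le hbase.le) μ),
      Real.log_rpow (div_pos (hlam_pos t ht) hbase), hratio]
  · intro u hu
    have hev : ∀ᶠ t in 𝓝[>] (0:ℝ), t * lam t < u := htend.eventually_lt_const hu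
    obtain ⟨t₀, ht₀, hsub⟩ := mem_nhdsGT_iff_exists_Ioc_subset.mp hev
    refine ⟨t₀, ht₀, fun t ht htt => ?_⟩
    have hgt : t * lam t < u := hsub ⟨ht, htt.le⟩
    rw [hint u t ht]
    refine gamma_mgf_of_ge hμ.le (hlam_pos t ht) ?_
    rw [le_div_iff₀ ht]
    nlinarith
end

section
/- Viewed as functions of ρ on (−1,1) (with ξ > 0 fixed): ρ ↦ u_+(ρ) is strictly decreasing and maps (−1,1) bijectively onto (2/ξ, +∞), and ρ ↦ u_−(ρ) is strictly decreasing and maps (−1,1) bijectively onto (−∞, −2/ξ). -/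
open Real

section AuxUPlusMinus

open Set Filter Topology

/-- On `(0, π)` we have `θ cos θ < sin θ`. -/
private lemma uaux_theta_cos_lt_sin {θ : ℝ} (h1 : 0 < θ) (h2 : θ < π) :
    θ * Real.cos θ < Real.sin θ := by
  have key : StrictMonoOn (fun x : ℝ => Real.sin x - x * Real.cos x) (Set.Icc 0 π) := by
    apply strictMonoOn_of_deriv_pos (convex_Icc 0 π)
    · fun_prop
    · intro x hx
      rw [interior_Icc] at hx
      have hd : HasDerivAt (fun x : ℝ => Real.sin x - x * Real.cos x)
          (Real.cos x - (1 * Real.cos x + x * (-Real.sin x))) x :=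
        (Real.hasDerivAt_sin x).sub ((hasDerivAt_id x).mul (Real.hasDerivAt_cos x))
      rw [hd.deriv]
      have := Real.sin_pos_of_pos_of_lt_pi hx.1 hx.2
      nlinarith [mul_pos hx.1 this]
  have := key (Set.left_mem_Icc.2 (le_of_lt Real.pi_pos)) ⟨le_of_lt h1, le_of_lt h2⟩ h1
  simp at this
  linarith

/-- The auxiliary function `θ ↦ θ / sin θ`. -/
private noncomputable def uauxG (θ : ℝ) : ℝ := θ / Real.sin θ

private lemma uauxG_cont : ContinuousOn uauxG (Set.Ioo 0 π) := by
  apply ContinuousOn.div continuousOn_id Real.continuousOn_sin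
  intro x hx
  exact (Real.sin_pos_of_pos_of_lt_pi hx.1 hx.2).ne'

private lemma uauxG_mono : StrictMonoOn uauxG (Set.Ioo 0 π) := by
  apply strictMonoOn_of_deriv_pos (convex_Ioo 0 π) uauxG_cont
  intro x hx
  rw [interior_Ioo] at hx
  have hs := Real.sin_pos_of_pos_of_lt_pi hx.1 hx.2
  have hd : HasDerivAt uauxG ((1 * Real.sin x - x * Real.cos x) / (Real.sin x) ^ 2) x :=
    (hasDerivAt_id x).div (Real.hasDerivAt_sin x) hs.ne'
  rw [hd.deriv]
  have := uaux_theta_cos_lt_sin hx.1 hx.2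
  have h2 : (0:ℝ) < (Real.sin x) ^ 2 := by positivity
  apply div_pos (by linarith) h2

private lemma uauxG_gt_one {θ : ℝ} (h : θ ∈ Set.Ioo 0 π) : 1 < uauxG θ := by
  have hs := Real.sin_pos_of_pos_of_lt_pi h.1 h.2
  rw [uauxG, lt_div_iff₀ hs, one_mul]
  exact Real.sin_lt h.1

private lemma uauxG_tendsto_one : Tendsto uauxG (𝓝[>] (0:ℝ)) (𝓝 1) := by
  have h1 : Tendsto (fun t : ℝ => t⁻¹ • (Real.sin (0 + t) - Real.sin 0)) (𝓝[>] (0:ℝ))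
      (𝓝 (Real.cos 0)) := (Real.hasDerivAt_sin 0).tendsto_slope_zero_right
  simp only [zero_add, Real.sin_zero, sub_zero, smul_eq_mul, Real.cos_zero] at h1
  have h2 := h1.inv₀ one_ne_zero
  rw [inv_one] at h2
  refine h2.congr fun t => ?_
  rw [mul_inv, inv_inv, uauxG, div_eq_mul_inv, mul_comm]

private lemma uauxG_tendsto_top : Tendsto uauxG (𝓝[Set.Ioo 0 π] π) atTop := by
  have hsin : Tendsto Real.sin (𝓝[Set.Ioo 0 π] π) (𝓝[>] 0) := by
    rw [tendsto_nhdsWithin_iff]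
    constructor
    · have := Real.continuous_sin.tendsto π
      rw [Real.sin_pi] at this
      exact this.mono_left nhdsWithin_le_nhds
    · filter_upwards [self_mem_nhdsWithin] with x hx
      exact Real.sin_pos_of_pos_of_lt_pi hx.1 hx.2
  have hinv : Tendsto (fun θ => (Real.sin θ)⁻¹) (𝓝[Set.Ioo 0 π] π) atTop :=
    tendsto_inv_nhdsGT_zero.comp hsin
  have hid : Tendsto (fun θ : ℝ => θ) (𝓝[Set.Ioo 0 π] π) (𝓝 π) :=
    tendsto_id.mono_left nhdsWithin_le_nhds
  have := Filter.Tendsto.pos_mul_atTop Real.pi_pos hid hinv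
  exact this.congr fun t => (div_eq_mul_inv _ _).symm

private instance : Filter.NeBot (𝓝[Set.Ioo 0 π] π) := by
  apply mem_closure_iff_nhdsWithin_neBot.mp
  rw [closure_Ioo Real.pi_pos.ne]
  exact Set.right_mem_Icc.2 Real.pi_pos.le

private lemma uauxG_surj : Set.SurjOn uauxG (Set.Ioo 0 π) (Set.Ioi 1) := by
  intro t ht
  simp only [Set.mem_Ioi] at ht
  have hIooMem : Set.Ioo (0:ℝ) π ∈ 𝓝[>] (0:ℝ) := by
    rw [show Set.Ioo (0:ℝ) π = Set.Ioi 0 ∩ Set.Iio π from rfl]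
    exact Filter.inter_mem self_mem_nhdsWithin (nhdsWithin_le_nhds (Iio_mem_nhds Real.pi_pos))
  have ha : ∃ a, a ∈ Set.Ioo (0:ℝ) π ∧ uauxG a < t := by
    have h1 : ∀ᶠ θ in 𝓝[>] (0:ℝ), uauxG θ < t := uauxG_tendsto_one.eventually_lt_const ht
    have h2 : ∀ᶠ θ in 𝓝[>] (0:ℝ), θ ∈ Set.Ioo (0:ℝ) π := hIooMem
    obtain ⟨a, ha1, ha2⟩ := (h1.and h2).exists
    exact ⟨a, ha2, ha1⟩
  obtain ⟨a, haI, hat⟩ := ha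
  have hb : ∃ b, b ∈ Set.Ioo (0:ℝ) π ∧ t < uauxG b := by
    have h1 : ∀ᶠ θ in 𝓝[Set.Ioo 0 π] π, t < uauxG θ := uauxG_tendsto_top.eventually_gt_atTop t
    have h2 : ∀ᶠ θ in 𝓝[Set.Ioo 0 π] π, θ ∈ Set.Ioo (0:ℝ) π := self_mem_nhdsWithin
    obtain ⟨b, hb1, hb2⟩ := (h1.and h2).exists
    exact ⟨b, hb2, hb1⟩
  obtain ⟨b, hbI, hbt⟩ := hb
  have hab : a < b := by
    by_contra hcon
    push_neg at hcon
    rcases eq_or_lt_of_le hcon with hcon | hcon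
    · rw [hcon] at hbt; linarith
    · have := uauxG_mono hbI haI hcon; linarith
  have hsub : Set.Icc a b ⊆ Set.Ioo 0 π := Set.Icc_subset_Ioo haI.1 hbI.2
  have := intermediate_value_Icc hab.le (uauxG_cont.mono hsub)
  obtain ⟨θ, hθ, hθt⟩ := this ⟨hat.le, hbt.le⟩
  exact ⟨θ, hsub hθ, hθt⟩

/-- The common closed-form function `F ξ ρ = (2/ξ) · arccos ρ / √(1-ρ²)`. -/
private noncomputable def uauxF (ξ ρ : ℝ) : ℝ :=
  2 / ξ * (Real.arccos ρ / Real.sqrt (1 - ρ ^ 2))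

private lemma uaux_arccos_mem {ρ : ℝ} (h : ρ ∈ Set.Ioo (-1:ℝ) 1) :
    Real.arccos ρ ∈ Set.Ioo 0 π := by
  refine ⟨Real.arccos_pos.2 h.2, ?_⟩
  have h1 : Real.arccos (-(-ρ)) = π - Real.arccos (-ρ) := Real.arccos_neg (-ρ)
  rw [neg_neg] at h1
  have h2 : 0 < Real.arccos (-ρ) := Real.arccos_pos.2 (by linarith [h.1])
  linarith

private lemma uauxF_eq {ξ : ℝ} (ρ : ℝ) : uauxF ξ ρ = 2 / ξ * uauxG (Real.arccos ρ) := by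
  rw [uauxF, uauxG, Real.sin_arccos]

private lemma uauxF_anti {ξ : ℝ} (hξ : 0 < ξ) :
    StrictAntiOn (uauxF ξ) (Set.Ioo (-1:ℝ) 1) := by
  intro a ha b hb hab
  rw [uauxF_eq, uauxF_eq]
  have h1 : Real.arccos b < Real.arccos a :=
    Real.strictAntiOn_arccos ⟨ha.1.le, ha.2.le⟩ ⟨hb.1.le, hb.2.le⟩ hab
  have h2 := uauxG_mono (uaux_arccos_mem hb) (uaux_arccos_mem ha) h1
  have h3 : (0:ℝ) < 2 / ξ := by positivity
  exact mul_lt_mul_of_pos_left h2 h3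

private lemma uauxF_bij {ξ : ℝ} (hξ : 0 < ξ) :
    Set.BijOn (uauxF ξ) (Set.Ioo (-1:ℝ) 1) (Set.Ioi (2 / ξ)) := by
  refine ⟨?_, (uauxF_anti hξ).injOn, ?_⟩
  · intro ρ hρ
    rw [Set.mem_Ioi, uauxF_eq]
    have h1 := uauxG_gt_one (uaux_arccos_mem hρ)
    have h3 : (0:ℝ) < 2 / ξ := by positivity
    calc 2 / ξ = 2 / ξ * 1 := (mul_one _).symm
    _ < 2 / ξ * uauxG (Real.arccos ρ) := mul_lt_mul_of_pos_left h1 h3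
  · intro y hy
    rw [Set.mem_Ioi] at hy
    have hξ' : ξ ≠ 0 := hξ.ne'
    have ht : 1 < y * ξ / 2 := by
      rw [div_lt_iff₀ hξ] at hy
      linarith
    obtain ⟨θ, hθ, hθy⟩ := uauxG_surj (Set.mem_Ioi.2 ht)
    refine ⟨Real.cos θ, ⟨?_, ?_⟩, ?_⟩
    · have := Real.strictAntiOn_cos ⟨hθ.1.le, hθ.2.le⟩ (Set.right_mem_Icc.2 Real.pi_pos.le) hθ.2
      rw [Real.cos_pi] at this; linarith
    · have := Real.strictAntiOn_cos (Set.left_mem_Icc.2 Real.pi_pos.le) ⟨hθ.1.le, hθ.2.le⟩ hθ.1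
      rw [Real.cos_zero] at this; linarith
    · rw [uauxF_eq, Real.arccos_cos hθ.1.le hθ.2.le, hθy]
      field_simp

private lemma uaux_arctan_neg_case {ρ : ℝ} (h : ρ < 0) :
    Real.arctan (Real.sqrt (1 - ρ ^ 2) / ρ) = Real.arccos ρ - π := by
  have hx : 0 < -ρ := by linarith
  have key : Real.arccos (-ρ) = Real.arctan (Real.sqrt (1 - (-ρ) ^ 2) / (-ρ)) :=
    Real.arccos_eq_arctan hx
  rw [neg_sq] at key
  rw [div_neg, Real.arctan_neg] at key
  have h2 := Real.arccos_neg ρ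
  rw [h2] at key
  linarith [key]

private lemma uaux_sqrt_pos_of_mem {ρ : ℝ} (h : ρ ∈ Set.Ioo (-1:ℝ) 1) :
    0 < Real.sqrt (1 - ρ ^ 2) := by
  apply Real.sqrt_pos.2
  nlinarith [h.1, h.2]

private lemma uaux_up_rw {ξ ρ : ℝ} (hξ : 0 < ξ) (h : ρ ∈ Set.Ioo (-1:ℝ) 1) :
    (if 0 < ρ then 2 / (ξ * Real.sqrt (1 - ρ ^ 2)) * Real.arctan (Real.sqrt (1 - ρ ^ 2) / ρ)
      else if ρ = 0 then π / ξ
      else 2 / (ξ * Real.sqrt (1 - ρ ^ 2)) * (Real.arctan (Real.sqrt (1 - ρ ^ 2) / ρ) + π))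
    = uauxF ξ ρ := by
  have hs := uaux_sqrt_pos_of_mem h
  have hξ' := hξ.ne'
  rcases lt_trichotomy ρ 0 with hρ | hρ | hρ
  · rw [if_neg (by linarith), if_neg hρ.ne, uaux_arctan_neg_case hρ, uauxF]
    field_simp
    try ring
  · subst hρ
    rw [if_neg (lt_irrefl 0), if_pos rfl, uauxF, Real.arccos_zero]
    norm_num
    try field_simp
    try ring
  · rw [if_pos hρ, ← Real.arccos_eq_arctan hρ, uauxF]
    field_simp
    try ring

private lemma uaux_um_rw {ξ ρ : ℝ} (hξ : 0 < ξ) (h : ρ ∈ Set.Ioo (-1:ℝ) 1) :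
    (if ρ < 0 then 2 / (ξ * Real.sqrt (1 - ρ ^ 2)) * Real.arctan (Real.sqrt (1 - ρ ^ 2) / ρ)
      else if ρ = 0 then -π / ξ
      else 2 / (ξ * Real.sqrt (1 - ρ ^ 2)) * (Real.arctan (Real.sqrt (1 - ρ ^ 2) / ρ) - π))
    = -uauxF ξ (-ρ) := by
  have hs := uaux_sqrt_pos_of_mem h
  have hξ' := hξ.ne'
  have hF : uauxF ξ (-ρ) = 2 / ξ * ((π - Real.arccos ρ) / Real.sqrt (1 - ρ ^ 2)) := by
    rw [uauxF, Real.arccos_neg, neg_sq]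
  rcases lt_trichotomy ρ 0 with hρ | hρ | hρ
  · rw [if_pos hρ, uaux_arctan_neg_case hρ, hF]
    field_simp
    try ring
  · subst hρ
    rw [if_neg (lt_irrefl 0), if_pos rfl, hF, Real.arccos_zero]
    norm_num
    try field_simp
    try ring
  · rw [if_neg (by linarith), if_neg hρ.ne', ← Real.arccos_eq_arctan hρ, hF]
    field_simp
    try ring

end AuxUPlusMinus

/-- As functions of `ρ ∈ (−1,1)`, `u_+` is strictly decreasing and maps `(−1,1)` bijectively
onto `(2/ξ, ∞)`, while `u_−` is strictly decreasing and maps `(−1,1)` bijectively onto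
`(−∞, −2/ξ)`. -/
theorem u_plus_minus_monotone_bijective
    (ξ : ℝ) (hξ : 0 < ξ)
    (um up : ℝ → ℝ)
    (hum : ∀ ρ ∈ Set.Ioo (-1 : ℝ) 1,
      um ρ = if ρ < 0 then 2 / (ξ * Real.sqrt (1 - ρ ^ 2)) * Real.arctan (Real.sqrt (1 - ρ ^ 2) / ρ)
        else if ρ = 0 then -π / ξ
        else 2 / (ξ * Real.sqrt (1 - ρ ^ 2)) * (Real.arctan (Real.sqrt (1 - ρ ^ 2) / ρ) - π))
    (hup : ∀ ρ ∈ Set.Ioo (-1 : ℝ) 1,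
      up ρ = if 0 < ρ then 2 / (ξ * Real.sqrt (1 - ρ ^ 2)) * Real.arctan (Real.sqrt (1 - ρ ^ 2) / ρ)
        else if ρ = 0 then π / ξ
        else 2 / (ξ * Real.sqrt (1 - ρ ^ 2)) * (Real.arctan (Real.sqrt (1 - ρ ^ 2) / ρ) + π)) :
    StrictAntiOn up (Set.Ioo (-1 : ℝ) 1)
    ∧ Set.BijOn up (Set.Ioo (-1 : ℝ) 1) (Set.Ioi (2 / ξ))
    ∧ StrictAntiOn um (Set.Ioo (-1 : ℝ) 1)
    ∧ Set.BijOn um (Set.Ioo (-1 : ℝ) 1) (Set.Iio (-2 / ξ)) := by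
  have hupF : ∀ ρ ∈ Set.Ioo (-1:ℝ) 1, up ρ = uauxF ξ ρ := fun ρ hρ => by
    rw [hup ρ hρ]; exact uaux_up_rw hξ hρ
  have humF : ∀ ρ ∈ Set.Ioo (-1:ℝ) 1, um ρ = -uauxF ξ (-ρ) := fun ρ hρ => by
    rw [hum ρ hρ]; exact uaux_um_rw hξ hρ
  have hnegmem : ∀ ρ : ℝ, ρ ∈ Set.Ioo (-1:ℝ) 1 → -ρ ∈ Set.Ioo (-1:ℝ) 1 := by
    intro ρ hρ; exact ⟨by linarith [hρ.2], by linarith [hρ.1]⟩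
  have humAnti : StrictAntiOn um (Set.Ioo (-1:ℝ) 1) := by
    intro a ha b hb hab
    rw [humF a ha, humF b hb]
    have := uauxF_anti hξ (hnegmem b hb) (hnegmem a ha) (by linarith)
    linarith
  refine ⟨?_, ?_, humAnti, ?_⟩
  · intro a ha b hb hab
    rw [hupF a ha, hupF b hb]
    exact uauxF_anti hξ ha hb hab
  · exact (uauxF_bij hξ).congr fun ρ hρ => (hupF ρ hρ).symm
  · refine ⟨?_, humAnti.injOn, ?_⟩
    · intro ρ hρ
      rw [humF ρ hρ, Set.mem_Iio]
      have := (uauxF_bij hξ).mapsTo (hnegmem ρ hρ)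
      rw [Set.mem_Ioi] at this
      rw [neg_div]
      linarith
    · intro y hy
      rw [Set.mem_Iio, neg_div] at hy
      have hy' : -y ∈ Set.Ioi (2 / ξ) := Set.mem_Ioi.2 (by linarith)
      obtain ⟨ρ, hρ, hFρ⟩ := (uauxF_bij hξ).surjOn hy'
      refine ⟨-ρ, hnegmem ρ hρ, ?_⟩
      rw [humF (-ρ) (hnegmem ρ hρ), neg_neg, hFρ, neg_neg]
end

section
/- Fix u ∈ (u_−, u_+) with u ≠ 0. Then there exists t₀ > 0 such that for all 0 < t < t₀ one has D_t(u) := (bt + ρξu)² + u(t − u)ξ² < 0, and, defining for such t the real number f_t(u) := cos(√(−D_t(u))/2) − ((bt + ρξu)/√(−D_t(u)))·sin(√(−D_t(u))/2), the expansion f_t(u) = f₀(u) + f₁(u)·t + O(t²) holds as t → 0⁺, where f₁(u) := (ρ(ξ + 2bρ)/(4ρ̄²))·cos(ρ̄ξu/2) + ((ξ + 2bρ)/(4ρ̄) − (ξρ + 2b)/(2uξρ̄³))·sin(ρ̄ξu/2). -/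
/-!
Since `-D_0(u) = (ρ̄ξu)² > 0`, the radicand stays negative near `t = 0`, where `f` is therefore
`C²`, and Taylor's formula gives `f_t = f(0) + f'(0) t + O(t²)`. The expression
`cos (r/2) - (p/r) sin (r/2)` is even in `r`, so `√(-D_t(u))` may be replaced by the smooth
branch of the square root equal to `ρ̄ξu` at `t = 0`; this gives `f(0) = f₀` directly, and
differentiating gives `f'(0) = f₁` once `ρ² + ρ̄² = 1` is used.
-/

open Real Filter Topology Asymptotics Metric

theorem ContDiffAt.isBigO_sub_sub_smul_deriv {E : Type*} [NormedAddCommGroup E]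
    [NormedSpace ℝ E] {f : ℝ → E} {x₀ : ℝ} (hf : ContDiffAt ℝ 2 f x₀) :
    (fun t => f t - f x₀ - (t - x₀) • deriv f x₀) =O[𝓝 x₀] fun t => (t - x₀) ^ 2 := by
  have hdiff : ∀ᶠ t in 𝓝 x₀, DifferentiableAt ℝ f t :=
    (hf.eventually (by simp)).mono fun t ht => ht.differentiableAt (by norm_num)
  have hderiv : (fun t => deriv f t - deriv f x₀) =O[𝓝 x₀] fun t => t - x₀ :=
    ((hf.derivWithin (m := 1) (by norm_num)).differentiableAt one_ne_zero).isBigO_sub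
  obtain ⟨C, hC0, hC⟩ := hderiv.exists_pos
  obtain ⟨ε, hε, hball⟩ := eventually_nhds_iff_ball.mp (hdiff.and hC.bound)
  refine IsBigO.of_bound C (eventually_nhds_iff_ball.mpr ⟨ε, hε, fun t ht => ?_⟩)
  have hsub : closedBall x₀ ‖t - x₀‖ ⊆ ball x₀ ε :=
    closedBall_subset_ball (mem_ball_iff_norm.mp ht)
  -- mean value theorem for `s ↦ f s - (s - x₀) • f'(x₀)`, whose derivative is `O(‖t - x₀‖)`
  -- on `closedBall x₀ ‖t - x₀‖`
  have hmvt := (convex_closedBall x₀ ‖t - x₀‖).norm_image_sub_le_of_norm_hasDerivWithin_le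
    (f := fun s => f s - (s - x₀) • deriv f x₀) (f' := fun s => deriv f s - deriv f x₀)
    (C := C * ‖t - x₀‖) (fun s hs => ?_) (fun s hs => ?_) (mem_closedBall_self (norm_nonneg _))
    (mem_closedBall_iff_norm.mpr le_rfl)
  · rw [sub_right_comm, sq, norm_mul, ← mul_assoc]
    simpa using hmvt
  · have := (hball s (hsub hs)).1.hasDerivAt.fun_sub
      (((hasDerivAt_id s).sub_const x₀).smul_const (deriv f x₀))
    simpa using this.hasDerivWithinAt
  · calc ‖deriv f s - deriv f x₀‖ ≤ C * ‖s - x₀‖ := (hball s (hsub hs)).2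
      _ ≤ C * ‖t - x₀‖ := by
        gcongr
        exact mem_closedBall_iff_norm.mp hs

/-- With `r = √(-D_t(u))` and `p = bt + ρξu` this is the real form `f_t(u)`. -/
noncomputable def fXReal (r p : ℝ) : ℝ := cos (r / 2) - p / r * sin (r / 2)

theorem fXReal_neg (r p : ℝ) : fXReal (-r) p = fXReal r p := by
  simp only [fXReal, neg_div, cos_neg, sin_neg, div_neg, neg_mul_neg]

theorem fXReal_abs (r p : ℝ) : fXReal |r| p = fXReal r p := by
  rcases abs_choice r with h | h <;> rw [h]
  exact fXReal_neg r p

theorem HasDerivAt.fXReal {r p : ℝ → ℝ} {r' p' t : ℝ} (hr : HasDerivAt r r' t)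
    (hp : HasDerivAt p p' t) (hrt : r t ≠ 0) :
    HasDerivAt (fun s => fXReal (r s) (p s))
      (-Real.sin (r t / 2) * (r' / 2) - ((p' * r t - p t * r') / r t ^ 2 * Real.sin (r t / 2)
        + p t / r t * (Real.cos (r t / 2) * (r' / 2)))) t :=
  (hr.div_const 2).cos.sub ((hp.div hr hrt).mul (hr.div_const 2).sin)

theorem ContDiffAt.fXReal {n : WithTop ℕ∞} {r p : ℝ → ℝ} {t : ℝ} (hr : ContDiffAt ℝ n r t)
    (hp : ContDiffAt ℝ n p t) (hrt : r t ≠ 0) : ContDiffAt ℝ n (fun s => fXReal (r s) (p s)) t :=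
  (hr.div_const 2).cos.sub ((hp.div hr hrt).mul (hr.div_const 2).sin)

theorem Real.sqrt_eq_abs_mul_sqrt_div_sq {a x : ℝ} (hx : x ≠ 0) : √a = |x * √(a / x ^ 2)| := by
  rw [abs_mul, abs_of_nonneg (sqrt_nonneg _), ← sqrt_sq_eq_abs, ← sqrt_mul (sq_nonneg x),
    mul_div_cancel₀ _ (pow_ne_zero 2 hx)]

theorem contDiffAt_fXReal_sqrt {n : WithTop ℕ∞} {g p : ℝ → ℝ} {t : ℝ} (hg : ContDiffAt ℝ n g t)
    (hp : ContDiffAt ℝ n p t) (hgt : 0 < g t) :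
    ContDiffAt ℝ n (fun s => fXReal (√(g s)) (p s)) t :=
  ((contDiffAt_sqrt hgt.ne').comp t hg).fXReal hp (sqrt_pos.mpr hgt).ne'

theorem hasDerivAt_fXReal_sqrt {g p : ℝ → ℝ} {g' p' x t : ℝ} (hg : HasDerivAt g g' t)
    (hp : HasDerivAt p p' t) (hgt : g t = x ^ 2) (hx : x ≠ 0) :
    HasDerivAt (fun s => fXReal (√(g s)) (p s))
      (-sin (x / 2) * (g' / (2 * x) / 2) - ((p' * x - p t * (g' / (2 * x))) / x ^ 2 * sin (x / 2)
        + p t / x * (cos (x / 2) * (g' / (2 * x) / 2)))) t := by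
  have hx2 : x ^ 2 ≠ 0 := pow_ne_zero 2 hx
  have hrt : x * √(g t / x ^ 2) = x := by rw [hgt, div_self hx2, sqrt_one, mul_one]
  -- the branch of `√g` through `x`; by `fXReal_abs` it may replace `√g`
  have hr : HasDerivAt (fun s => x * √(g s / x ^ 2)) (g' / (2 * x)) t := by
    refine (((hg.div_const (x ^ 2)).sqrt (by rw [hgt, div_self hx2]; exact one_ne_zero)).const_mul
      x).congr_deriv ?_
    rw [hgt, div_self hx2, sqrt_one]
    field_simp
  have := hr.fXReal hp (by rw [hrt]; exact hx)
  rw [hrt] at this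
  convert this using 1
  exact funext fun s => by rw [sqrt_eq_abs_mul_sqrt_div_sq hx, fXReal_abs]

theorem hasDerivAt_radicand (b ρ ξ u t : ℝ) :
    HasDerivAt (fun s => (b * s + ρ * ξ * u) ^ 2 + u * (s - u) * ξ ^ 2)
      (2 * (b * t + ρ * ξ * u) * b + u * ξ ^ 2) t := by
  have hp := ((hasDerivAt_id' t).const_mul b).add_const (ρ * ξ * u)
  refine ((hp.fun_pow 2).fun_add
    ((((hasDerivAt_id' t).sub_const u).const_mul u).mul_const (ξ ^ 2))).congr_deriv ?_
  norm_num

theorem fX_small_time_expansion_general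
    (ξ b ρ : ℝ) (hξ : 0 < ξ) (hρ : ρ ∈ Set.Ioo (-1 : ℝ) 1)
    (ρbar : ℝ) (hρbar : ρbar = Real.sqrt (1 - ρ ^ 2))
    (u : ℝ) (hu0 : u ≠ 0)
    (D : ℝ → ℝ) (hD : ∀ t, D t = (b * t + ρ * ξ * u) ^ 2 + u * (t - u) * ξ ^ 2)
    (f : ℝ → ℝ)
    (hf : ∀ t, f t = Real.cos (Real.sqrt (-D t) / 2)
        - (b * t + ρ * ξ * u) / Real.sqrt (-D t) * Real.sin (Real.sqrt (-D t) / 2))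
    (f₀ f₁ : ℝ)
    (hf₀ : f₀ = Real.cos (ρbar * ξ * u / 2) - ρ / ρbar * Real.sin (ρbar * ξ * u / 2))
    (hf₁ : f₁ = ρ * (ξ + 2 * b * ρ) / (4 * ρbar ^ 2) * Real.cos (ρbar * ξ * u / 2)
        + ((ξ + 2 * b * ρ) / (4 * ρbar) - (ξ * ρ + 2 * b) / (2 * u * ξ * ρbar ^ 3))
          * Real.sin (ρbar * ξ * u / 2)) :
    ∃ t₀ > (0 : ℝ), ∃ C > (0 : ℝ), ∀ t, 0 < t → t < t₀ →
      D t < 0 ∧ |f t - f₀ - f₁ * t| ≤ C * t ^ 2 := by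
  have hρbar_sq : ρbar ^ 2 = 1 - ρ ^ 2 := by
    rw [hρbar]; exact sq_sqrt (by nlinarith [hρ.1, hρ.2])
  have hρbar0 : ρbar ≠ 0 := fun h => by nlinarith [hρ.1, hρ.2]
  have hx : ρbar * ξ * u ≠ 0 := by positivity
  have hD0 : -D 0 = (ρbar * ξ * u) ^ 2 := by rw [hD]; linear_combination (-(ξ * u) ^ 2) * hρbar_sq
  have hfeq : f = fun t => fXReal (√(-D t)) (b * t + ρ * ξ * u) := funext hf
  have hDeq : D = fun t => (b * t + ρ * ξ * u) ^ 2 + u * (t - u) * ξ ^ 2 := funext hD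
  have hDc : ContDiff ℝ 2 D := by rw [hDeq]; fun_prop
  have hDneg : ∀ᶠ t in 𝓝 0, D t < 0 := hDc.continuous.continuousAt.eventually_lt
    continuousAt_const (by nlinarith [hD0, sq_pos_of_ne_zero hx])
  have hsmooth : ContDiffAt ℝ 2 f 0 :=
    hfeq ▸ contDiffAt_fXReal_sqrt hDc.neg.contDiffAt (by fun_prop) (by rw [hD0]; positivity)
  have hf₀' : f 0 = f₀ := by
    simp only [hfeq, hf₀, hD0, sqrt_sq_eq_abs, fXReal_abs, mul_zero, zero_add]
    rw [fXReal, mul_assoc ρ, mul_assoc ρbar, mul_div_mul_right _ _ (mul_ne_zero hξ.ne' hu0)]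
  have hf₁' : HasDerivAt f f₁ 0 := by
    have hp := ((hasDerivAt_id' (0 : ℝ)).const_mul b).add_const (ρ * ξ * u)
    refine hfeq ▸ (hasDerivAt_fXReal_sqrt (hDeq ▸ hasDerivAt_radicand b ρ ξ u 0).fun_neg hp hD0
      hx).congr_deriv ?_
    rw [hf₁]
    field_simp
    linear_combination (-16 * ξ ^ 2 * u ^ 2 * b * sin (ρbar * ξ * u / 2)) * hρbar_sq
  obtain ⟨C, hC, hbound⟩ := hsmooth.isBigO_sub_sub_smul_deriv.exists_pos
  obtain ⟨ε, hε, h⟩ := Metric.eventually_nhds_iff.mp (hDneg.and hbound.bound)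
  refine ⟨ε, hε, C, hC, fun t ht0 htε => ?_⟩
  obtain ⟨hDt, hbt⟩ := h (by rwa [Real.dist_0_eq_abs, abs_of_pos ht0])
  refine ⟨hDt, ?_⟩
  simpa [hf₀', hf₁'.deriv, mul_comm t, abs_of_nonneg (sq_nonneg t)] using hbt

/-- Small-time expansion of `f_t^X(u)`: for fixed `u ∈ (u_−, u_+) \ {0}`, the radicand
`D_t(u) = (bt + ρξu)² + u(t−u)ξ²` is negative for small `t`, and the (real, trigonometric
form of the) function `f_t(u)` admits the expansion `f_t(u) = f₀(u) + f₁(u) t + O(t²)`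
as `t → 0⁺`. -/
theorem fX_small_time_expansion
    (ξ b ρ : ℝ) (hξ : 0 < ξ) (hb : b < 0) (hρ : ρ ∈ Set.Ioo (-1 : ℝ) 1)
    (ρbar : ℝ) (hρbar : ρbar = Real.sqrt (1 - ρ ^ 2))
    (um up : ℝ)
    (hum : um = if ρ < 0 then 2 / (ξ * ρbar) * Real.arctan (ρbar / ρ)
        else if ρ = 0 then -π / ξ
        else 2 / (ξ * ρbar) * (Real.arctan (ρbar / ρ) - π))
    (hup : up = if 0 < ρ then 2 / (ξ * ρbar) * Real.arctan (ρbar / ρ)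
        else if ρ = 0 then π / ξ
        else 2 / (ξ * ρbar) * (Real.arctan (ρbar / ρ) + π))
    (u : ℝ) (hu : u ∈ Set.Ioo um up) (hu0 : u ≠ 0)
    (D : ℝ → ℝ) (hD : ∀ t, D t = (b * t + ρ * ξ * u) ^ 2 + u * (t - u) * ξ ^ 2)
    (f : ℝ → ℝ)
    (hf : ∀ t, f t = Real.cos (Real.sqrt (-D t) / 2)
        - (b * t + ρ * ξ * u) / Real.sqrt (-D t) * Real.sin (Real.sqrt (-D t) / 2))
    (f₀ f₁ : ℝ)
    (hf₀ : f₀ = Real.cos (ρbar * ξ * u / 2) - ρ / ρbar * Real.sin (ρbar * ξ * u / 2))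
    (hf₁ : f₁ = ρ * (ξ + 2 * b * ρ) / (4 * ρbar ^ 2) * Real.cos (ρbar * ξ * u / 2)
        + ((ξ + 2 * b * ρ) / (4 * ρbar) - (ξ * ρ + 2 * b) / (2 * u * ξ * ρbar ^ 3))
          * Real.sin (ρbar * ξ * u / 2)) :
    ∃ t₀ > (0 : ℝ), ∃ C > (0 : ℝ), ∀ t, 0 < t → t < t₀ →
      D t < 0 ∧ |f t - f₀ - f₁ * t| ≤ C * t ^ 2 :=
  fX_small_time_expansion_general ξ b ρ hξ hρ ρbar hρbar u hu0 D hD f hf f₀ f₁ hf₀ hf₁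
end

section
/- Fix x > 0 and let u*(x,t) := (2t/ξ²)·(b/(e^{bt} − 1) − a/x). Then there exists a constant C > 0 such that, as t → 0⁺, exp(−x·u*(x,t)/t + Λ_V(u*(x,t), t)/t) = C · t^{−μ} · exp(−2x/(ξ² t)) · (1 + O(t)), where Λ_V(u,t) := −μ t · log(1 − u/(t λ_t)). -/
/-!
Write `s = b t` and `q(s) = s / (eˢ - 1)`. Then `1 - u*/(t λ_t) = (a/x) t / q(s)` and
`-x u*/t = μ - (2x/ξ²) q(s)/t`, so the exponent equals
`log C - μ log t - 2x/(ξ² t) + g(t)` with `C = exp(μ - μ log(a/x) + x b/ξ²)` and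
`g = μ log q(s) - (2x/ξ²)(q(s) - 1 + s/2)/t`. Since `q(s) = 1 - s/2 + O(s²)`, `g = O(t)`, and
`exp g = 1 + O(t)`.
-/

open Real

lemma Real.abs_exp_add_sub_exp_le {z h : ℝ} (hh : |h| ≤ 1) :
    |exp (z + h) - exp z| ≤ 2 * |h| * exp z := by
  rw [exp_add, ← mul_sub_one, abs_mul, abs_of_pos (exp_pos z), mul_comm]
  gcongr
  exact abs_exp_sub_one_le hh

lemma Real.abs_log_le_two_mul_abs_sub_one {y : ℝ} (hy : 1 / 2 ≤ y) :
    |log y| ≤ 2 * |y - 1| := by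
  have hy0 : 0 < y := by linarith
  have hlower : 1 - y⁻¹ ≤ log y := one_sub_inv_le_log_of_pos hy0
  have hupper : log y ≤ y - 1 := log_le_sub_one_of_pos hy0
  have hinv : 1 - y⁻¹ = (y - 1) / y := by field_simp
  rw [abs_le]
  constructor
  · rw [hinv] at hlower
    have : -(2 * |y - 1|) ≤ (y - 1) / y := by
      rw [le_div_iff₀ hy0]
      cases abs_cases (y - 1) <;> nlinarith
    linarith
  · linarith [le_abs_self (y - 1), abs_nonneg (y - 1)]

lemma Real.abs_exp_sub_one_div_sub_one_le {s : ℝ} (hs0 : s ≠ 0) (hs : |s| ≤ 1) :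
    |(exp s - 1) / s - 1| ≤ |s| := by
  have habs : 0 < |s| := abs_pos.mpr hs0
  rw [div_sub_one hs0, abs_div, div_le_iff₀ habs, ← sq, sq_abs]
  exact abs_exp_sub_one_sub_id_le hs

lemma Real.abs_div_two_le_abs_exp_sub_one {s : ℝ} (hs : |s| ≤ 1 / 2) :
    |s| / 2 ≤ |exp s - 1| := by
  have h := abs_exp_sub_one_sub_id_le (hs.trans (by norm_num))
  have hsq : s ^ 2 ≤ |s| / 2 := by
    rw [← sq_abs]; nlinarith [abs_nonneg s]
  linarith [abs_sub_abs_le_abs_sub s (exp s - 1), abs_sub_comm s (exp s - 1)]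

lemma Real.abs_log_div_exp_sub_one_le {s : ℝ} (hs0 : s ≠ 0) (hs : |s| ≤ 1 / 2) :
    |log (s / (exp s - 1))| ≤ 2 * |s| := by
  have hf := abs_exp_sub_one_div_sub_one_le hs0 (hs.trans (by norm_num))
  rw [← inv_div, log_inv, abs_neg]
  calc |log ((exp s - 1) / s)| ≤ 2 * |(exp s - 1) / s - 1| :=
        abs_log_le_two_mul_abs_sub_one (by linarith [(abs_le.mp hf).1])
    _ ≤ 2 * |s| := by gcongr

lemma Real.abs_exp_sub_taylor_two_le {s : ℝ} (hs : |s| ≤ 1) :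
    |exp s - (1 + s + s ^ 2 / 2)| ≤ |s| ^ 3 := by
  have h := exp_bound hs (n := 3) (by norm_num)
  norm_num [Finset.sum_range_succ, Nat.factorial] at h
  calc _ ≤ |s| ^ 3 * (2 / 9) := h
    _ ≤ |s| ^ 3 := by nlinarith [pow_nonneg (abs_nonneg s) 3]

lemma Real.abs_div_exp_sub_one_sub_le {s : ℝ} (hs0 : s ≠ 0) (hs : |s| ≤ 1 / 2) :
    |s / (exp s - 1) - (1 - s / 2)| ≤ 3 * s ^ 2 := by
  have hE := abs_div_two_le_abs_exp_sub_one hs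
  have hE0 : exp s - 1 ≠ 0 := sub_ne_zero.mpr (by simpa using hs0)
  obtain ⟨R, hexp, hR⟩ : ∃ R, exp s = 1 + s + s ^ 2 / 2 + R ∧ |R| ≤ |s| ^ 3 :=
    ⟨_, by ring, abs_exp_sub_taylor_two_le (hs.trans (by norm_num))⟩
  have hnum_le : |s - (exp s - 1) * (1 - s / 2)| ≤ 3 / 2 * |s| ^ 3 := by
    have hsR : |s * R / 2| ≤ |s| ^ 3 / 4 := by
      rw [abs_div, abs_mul, abs_two]
      calc |s| * |R| / 2 ≤ 1 / 2 * |s| ^ 3 / 2 := by gcongr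
        _ = |s| ^ 3 / 4 := by ring
    have hs3 : |s ^ 3 / 4| = |s| ^ 3 / 4 := by
      rw [abs_div, abs_pow, abs_of_pos (by norm_num : (0 : ℝ) < 4)]
    calc _ = |-R + s ^ 3 / 4 + s * R / 2| := by rw [hexp]; congr 1; ring
      _ ≤ |-R| + |s ^ 3 / 4| + |s * R / 2| := abs_add_three _ _ _
      _ ≤ 3 / 2 * |s| ^ 3 := by rw [abs_neg, hs3]; linarith
  have habs : 0 < |s| := abs_pos.mpr hs0
  rw [div_sub' hE0, abs_div]
  calc _ ≤ 3 / 2 * |s| ^ 3 / (|s| / 2) := by gcongr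
    _ = 3 * s ^ 2 := by field_simp; rw [sq_abs]

lemma one_sub_ustar_div_eq {a ξ b x t u lam : ℝ} (hξ : ξ ≠ 0) (hb : b ≠ 0) (hx : x ≠ 0)
    (ht : t ≠ 0) (hE : exp (b * t) - 1 ≠ 0)
    (hu : u = 2 * t / ξ ^ 2 * (b / (exp (b * t) - 1) - a / x))
    (hlam : lam = -2 * b / (ξ ^ 2 * (1 - exp (b * t)))) :
    1 - u / (t * lam) = a / x * t / (b * t / (exp (b * t) - 1)) := by
  subst hu hlam
  generalize exp (b * t) = e at hE ⊢
  have hE' : 1 - e ≠ 0 := by rwa [← neg_sub, neg_ne_zero]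
  field_simp
  ring

lemma saddlepoint_exponent_eq {a ξ b x t μ u lam : ℝ} (ha : 0 < a) (hξ : ξ ≠ 0)
    (hb : b ≠ 0) (hx : 0 < x) (ht : 0 < t) (hμ : μ = 2 * a / ξ ^ 2)
    (hu : u = 2 * t / ξ ^ 2 * (b / (exp (b * t) - 1) - a / x))
    (hlam : lam = -2 * b / (ξ ^ 2 * (1 - exp (b * t)))) :
    -(x * u) / t + -μ * t * log (1 - u / (t * lam)) / t
      = μ - μ * log (a / x) + x * b / ξ ^ 2 + log t * (-μ) + -(2 * x) / (ξ ^ 2 * t)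
        + (μ * log (b * t / (exp (b * t) - 1))
          - 2 * x / ξ ^ 2 * (b * t / (exp (b * t) - 1) - (1 - b * t / 2)) / t) := by
  have hbt : b * t ≠ 0 := mul_ne_zero hb ht.ne'
  have hE : exp (b * t) - 1 ≠ 0 := sub_ne_zero.mpr (by simpa using hbt)
  have hq : b * t / (exp (b * t) - 1) ≠ 0 := div_ne_zero hbt hE
  rw [one_sub_ustar_div_eq hξ hb hx.ne' ht.ne' hE hu hlam, log_div (by positivity) hq,
    log_mul (by positivity) ht.ne', hu, hμ]
  field_simp
  ring

lemma abs_saddlepoint_remainder_le {μ K b t : ℝ} (hμ : 0 ≤ μ) (hK : 0 ≤ K) (hb : b ≠ 0)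
    (ht : 0 < t) (hbt : |b * t| ≤ 1 / 2) :
    |μ * log (b * t / (exp (b * t) - 1)) - K * (b * t / (exp (b * t) - 1) - (1 - b * t / 2)) / t|
      ≤ (3 * K * b ^ 2 + 2 * μ * |b|) * t := by
  have hbt0 : b * t ≠ 0 := mul_ne_zero hb ht.ne'
  have hlog := abs_log_div_exp_sub_one_le hbt0 hbt
  have hq := abs_div_exp_sub_one_sub_le hbt0 hbt
  rw [abs_mul, abs_of_pos ht] at hlog
  calc _ ≤ |μ * log (b * t / (exp (b * t) - 1))|
        + |K * (b * t / (exp (b * t) - 1) - (1 - b * t / 2)) / t| := abs_sub _ _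
    _ ≤ μ * (2 * (|b| * t)) + K * (3 * (b * t) ^ 2) / t := by
        rw [abs_mul, abs_div, abs_mul, abs_of_nonneg hμ, abs_of_pos ht, abs_of_nonneg hK]
        gcongr
    _ = (3 * K * b ^ 2 + 2 * μ * |b|) * t := by field_simp; ring

theorem gamma_saddlepoint_prefactor_asymptotics_general
    (a ξ b : ℝ) (ha : 0 < a) (hξ : 0 < ξ) (hb : b < 0)
    (μ : ℝ) (hμ_def : μ = 2 * a / ξ ^ 2)
    (lam : ℝ → ℝ) (hlam : ∀ t, lam t = -2 * b / (ξ ^ 2 * (1 - Real.exp (b * t))))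
    (Λ : ℝ → ℝ → ℝ)
    (hΛ : ∀ t, 0 < t → ∀ u, Λ u t = -μ * t * Real.log (1 - u / (t * lam t)))
    (ustar : ℝ → ℝ → ℝ)
    (hustar : ∀ x t, ustar x t = 2 * t / ξ ^ 2 * (b / (Real.exp (b * t) - 1) - a / x))
    (x : ℝ) (hx : 0 < x) :
    ∃ C > (0 : ℝ), ∃ C' > (0 : ℝ), ∃ t₀ > (0 : ℝ), ∀ t, 0 < t → t < t₀ →
      |Real.exp (-(x * ustar x t) / t + Λ (ustar x t) t / t)
          - C * t ^ (-μ) * Real.exp (-(2 * x) / (ξ ^ 2 * t))|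
        ≤ C' * t * (C * t ^ (-μ) * Real.exp (-(2 * x) / (ξ ^ 2 * t))) := by
  have hμ0 : 0 < μ := hμ_def ▸ by positivity
  have hb_abs : 0 < |b| := abs_pos.mpr hb.ne
  set M := 3 * (2 * x / ξ ^ 2) * b ^ 2 + 2 * μ * |b|
  have hM0 : 0 < M := by positivity
  refine ⟨exp (μ - μ * log (a / x) + x * b / ξ ^ 2), exp_pos _, 2 * M, by positivity,
    min (1 / (2 * |b|)) (1 / M), by positivity, fun t ht ht₀ => ?_⟩
  have hbt : |b * t| ≤ 1 / 2 := by
    have := (lt_div_iff₀' (by positivity)).mp (ht₀.trans_le (min_le_left _ _))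
    rw [abs_mul, abs_of_pos ht]; linarith
  have hMt : M * t ≤ 1 := by
    have := (lt_div_iff₀' hM0).mp (ht₀.trans_le (min_le_right _ _))
    linarith
  have hg :=
    abs_saddlepoint_remainder_le hμ0.le (by positivity : 0 ≤ 2 * x / ξ ^ 2) hb.ne ht hbt
  rw [hΛ t ht, saddlepoint_exponent_eq ha hξ.ne' hb.ne hx ht hμ_def (hustar x t) (hlam t),
    rpow_def_of_pos ht, ← exp_add, ← exp_add]
  calc _ ≤ 2 * |_| * _ := abs_exp_add_sub_exp_le (hg.trans hMt)
    _ ≤ 2 * (M * t) * _ := by gcongr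
    _ = _ := by ring

/-- Sharp asymptotics of the saddlepoint prefactor: for fixed `x > 0` there is a constant
`C > 0` such that `exp(−x u*(x,t)/t + Λ_V(u*(x,t),t)/t) = C t^{−μ} e^{−2x/(ξ²t)} (1 + O(t))`
as `t → 0⁺`. -/
theorem gamma_saddlepoint_prefactor_asymptotics
    (a ξ b : ℝ) (ha : 0 < a) (hξ : 0 < ξ) (hb : b < 0)
    (μ : ℝ) (hμ_def : μ = 2 * a / ξ ^ 2) (hμ : 1 < μ)
    (lam : ℝ → ℝ) (hlam : ∀ t, lam t = -2 * b / (ξ ^ 2 * (1 - Real.exp (b * t))))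
    (Λ : ℝ → ℝ → ℝ)
    (hΛ : ∀ t, 0 < t → ∀ u, Λ u t = -μ * t * Real.log (1 - u / (t * lam t)))
    (ustar : ℝ → ℝ → ℝ)
    (hustar : ∀ x t, ustar x t = 2 * t / ξ ^ 2 * (b / (Real.exp (b * t) - 1) - a / x))
    (x : ℝ) (hx : 0 < x) :
    ∃ C > (0 : ℝ), ∃ C' > (0 : ℝ), ∃ t₀ > (0 : ℝ), ∀ t, 0 < t → t < t₀ →
      |Real.exp (-(x * ustar x t) / t + Λ (ustar x t) t / t)
          - C * t ^ (-μ) * Real.exp (-(2 * x) / (ξ ^ 2 * t))|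
        ≤ C' * t * (C * t ^ (-μ) * Real.exp (-(2 * x) / (ξ ^ 2 * t))) :=
  gamma_saddlepoint_prefactor_asymptotics_general a ξ b ha hξ hb μ hμ_def lam hlam Λ hΛ ustar hustar
    x hx
end

section
/- Fix x > 0. For t > 0 let u*(x,t) := (2t/ξ²)·(b/(e^{bt} − 1) − a/x) and d_t := ξ² t (1 − e^{bt}) / (2bt + u*(x,t)·ξ²(1 − e^{bt})). Then, as t → 0⁺, ∫_{−∞}^{∞} | e^{−iux} (1 + iu d_t)^{−μ} | / | u*(x,t)/t + iu | du = O(t); in particular this integral is finite for all sufficiently small t > 0. (Here (1 + iu d_t)^{−μ} is the principal branch complex power, and its modulus equals (1 + u² d_t²)^{−μ/2}.) -/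
open Real MeasureTheory
open scoped ENNReal

/-!
With the given `u*` the denominator of `d_t` collapses to `-2ta(1 - e^{bt})/x`, so
`d_t = -ξ²x/(2a)` does not depend on `t`, and `|(1 + iu d_t)^{-μ}| = (1 + (d_t u)²)^{-μ/2}` is a
fixed integrable function because `μ > 1`. On the other hand `1 - e^{bt} ≤ -bt` gives
`u*(x,t)/t ≥ 1/(ξ²t)` once `t ≤ x/(2a)`, and `|u*/t + iu| ≥ u*/t`; so the integrand is at most
`ξ²t` times that fixed function.
-/

/-- The tilting parameter `u*(x,t)`. -/
noncomputable def tiltParam (a ξ b x t : ℝ) : ℝ :=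
  2 * t / ξ ^ 2 * (b / (exp (b * t) - 1) - a / x)

/-- The parameter `d_t` of the tilted characteristic function `(1 + iu d_t)^{-μ}`. -/
noncomputable def tiltedScale (a ξ b x t : ℝ) : ℝ :=
  ξ ^ 2 * t * (1 - exp (b * t)) / (2 * b * t + tiltParam a ξ b x t * ξ ^ 2 * (1 - exp (b * t)))

theorem tiltedScale_eq {a ξ b x t : ℝ} (ha : a ≠ 0) (hξ : ξ ≠ 0) (hb : b ≠ 0) (hx : x ≠ 0)
    (ht : t ≠ 0) : tiltedScale a ξ b x t = -(ξ ^ 2 * x / (2 * a)) := by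
  have hE : exp (b * t) ≠ 1 := by rw [Ne, exp_eq_one_iff]; exact mul_ne_zero hb ht
  unfold tiltedScale tiltParam
  generalize exp (b * t) = E at hE ⊢
  have h1 : E - 1 ≠ 0 := sub_ne_zero.mpr hE
  have h2 : 1 - E ≠ 0 := sub_ne_zero.mpr hE.symm
  have hden : 2 * b * t + 2 * t / ξ ^ 2 * (b / (E - 1) - a / x) * ξ ^ 2 * (1 - E)
      = -(2 * t * a * (1 - E) / x) := by
    field_simp
    ring
  rw [hden, div_neg, neg_inj]
  field_simp

theorem one_le_div_exp_sub_one {y : ℝ} (hy : y < 0) : 1 ≤ y / (exp y - 1) := by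
  have hE : exp y - 1 < 0 := by linarith [exp_lt_one_iff.mpr hy]
  rw [le_div_iff_of_neg hE]
  linarith [add_one_le_exp y]

theorem inv_le_tiltParam_div {a ξ b x t : ℝ} (ha : 0 < a) (hξ : ξ ≠ 0) (hb : b < 0) (hx : 0 < x)
    (ht : 0 < t) (htx : t ≤ x / (2 * a)) : (ξ ^ 2 * t)⁻¹ ≤ tiltParam a ξ b x t / t := by
  have hexp : t⁻¹ ≤ b / (exp (b * t) - 1) := by
    rw [inv_le_iff_one_le_mul₀' ht, ← mul_div_assoc, mul_comm t]
    exact one_le_div_exp_sub_one (mul_neg_of_neg_of_pos hb ht)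
  have hax : a / x ≤ (2 * t)⁻¹ := by
    rw [div_le_iff₀ hx, ← div_eq_inv_mul, le_div_iff₀ (by positivity)]
    rw [le_div_iff₀ (by positivity)] at htx
    linarith
  calc (ξ ^ 2 * t)⁻¹ = 2 / ξ ^ 2 * (t⁻¹ - (2 * t)⁻¹) := by field_simp; ring
    _ ≤ 2 / ξ ^ 2 * (b / (exp (b * t) - 1) - a / x) := by gcongr
    _ = tiltParam a ξ b x t / t := by unfold tiltParam; field_simp

theorem Complex.norm_one_add_I_mul_cpow_neg (y s : ℝ) :
    ‖(1 + Complex.I * y) ^ (-(s : ℂ))‖ = (1 + y ^ 2) ^ (-s / 2) := by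
  have hbase : ‖1 + Complex.I * y‖ = √(1 + y ^ 2) := by
    simpa [mul_comm] using Complex.norm_add_mul_I 1 y
  rw [← Complex.ofReal_neg, Complex.norm_cpow_real, hbase, sqrt_eq_rpow,
    ← rpow_mul (by positivity)]
  ring_nf

theorem Complex.le_norm_ofReal_add_I_mul (v y : ℝ) : v ≤ ‖(v : ℂ) + Complex.I * y‖ := by
  simpa using Complex.re_le_norm ((v : ℂ) + Complex.I * y)

theorem norm_exp_mul_cpow_div_le (x d s y : ℝ) {v : ℝ} (hv : 0 < v) :
    ‖Complex.exp (-(Complex.I * y * x)) * (1 + Complex.I * y * d) ^ (-(s : ℂ))‖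
        / ‖(v : ℂ) + Complex.I * y‖
      ≤ v⁻¹ * (1 + (d * y) ^ 2) ^ (-s / 2) := by
  have hexp : ‖Complex.exp (-(Complex.I * y * x))‖ = 1 := by
    simpa [mul_assoc] using Complex.norm_exp_I_mul_ofReal (-(y * x))
  have hbase : Complex.I * y * d = Complex.I * ↑(d * y) := by push_cast; ring
  rw [norm_mul, hexp, one_mul, hbase, Complex.norm_one_add_I_mul_cpow_neg, div_eq_inv_mul]
  gcongr
  exact Complex.le_norm_ofReal_add_I_mul v y

theorem integrable_one_add_mul_sq_rpow_neg {c s : ℝ} (hc : c ≠ 0) (hs : 1 < s) :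
    Integrable fun u : ℝ => (1 + (c * u) ^ 2) ^ (-s / 2) := by
  have h : Integrable fun y : ℝ => (1 + ‖y‖ ^ 2) ^ (-s / 2) :=
    integrable_rpow_neg_one_add_norm_sq (by simpa using hs)
  simpa [norm_mul, mul_pow] using (integrable_comp_mul_left_iff _ hc).2 h

theorem lintegral_ofReal_le_of_le_const_mul {α : Type*} [MeasurableSpace α] {ν : Measure α}
    {f g : α → ℝ} {c : ℝ} (hc : 0 ≤ c) (hg : Integrable g ν) (hg0 : 0 ≤ᵐ[ν] g)
    (hfg : ∀ᵐ u ∂ν, f u ≤ c * g u) :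
    ∫⁻ u, ENNReal.ofReal (f u) ∂ν ≤ ENNReal.ofReal (c * ∫ u, g u ∂ν) := by
  calc ∫⁻ u, ENNReal.ofReal (f u) ∂ν ≤ ∫⁻ u, ENNReal.ofReal (c * g u) ∂ν :=
        lintegral_mono_ae (hfg.mono fun u hu => ENNReal.ofReal_le_ofReal hu)
    _ = ENNReal.ofReal (c * ∫ u, g u ∂ν) := by
        rw [← integral_const_mul, ofReal_integral_eq_lintegral_ofReal (hg.const_mul c)
          (hg0.mono fun u hu => mul_nonneg hc hu)]

theorem tilted_characteristic_function_L1_bound_general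
    (a ξ b : ℝ) (ha : 0 < a) (hξ : 0 < ξ) (hb : b < 0)
    (μ : ℝ) (hμ : 1 < μ)
    (ustar : ℝ → ℝ → ℝ)
    (hustar : ∀ x t, ustar x t = 2 * t / ξ ^ 2 * (b / (Real.exp (b * t) - 1) - a / x))
    (d : ℝ → ℝ → ℝ)
    (hd : ∀ x t, d x t = ξ ^ 2 * t * (1 - Real.exp (b * t))
        / (2 * b * t + ustar x t * ξ ^ 2 * (1 - Real.exp (b * t))))
    (x : ℝ) (hx : 0 < x) :
    ∃ C > (0 : ℝ), ∃ t₀ > (0 : ℝ), ∀ t, 0 < t → t < t₀ →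
      (∫⁻ u : ℝ, ENNReal.ofReal
          (‖Complex.exp (-(Complex.I * u * x))
              * (1 + Complex.I * u * d x t) ^ (-(μ : ℂ))‖
            / ‖((ustar x t / t : ℝ) + Complex.I * u : ℂ)‖))
        ≤ ENNReal.ofReal (C * t) := by
  obtain rfl : ustar = tiltParam a ξ b := funext fun x => funext (hustar x)
  obtain rfl : d = tiltedScale a ξ b := funext fun x => funext (hd x)
  set c := ξ ^ 2 * x / (2 * a)
  set g : ℝ → ℝ := fun u => (1 + (c * u) ^ 2) ^ (-μ / 2)
  have hg : Integrable g := integrable_one_add_mul_sq_rpow_neg (by positivity) hμ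
  have hg0 : 0 ≤ g := fun u => rpow_nonneg (by positivity) _
  have hI : 0 ≤ ∫ u, g u := integral_nonneg hg0
  refine ⟨ξ ^ 2 * (∫ u, g u) + 1, by positivity, x / (2 * a), by positivity, fun t ht htx => ?_⟩
  have hv := inv_le_tiltParam_div ha hξ.ne' hb hx ht htx.le
  have hscale : tiltedScale a ξ b x t = -c := tiltedScale_eq ha.ne' hξ.ne' hb.ne hx.ne' ht.ne'
  calc _ ≤ ENNReal.ofReal (ξ ^ 2 * t * ∫ u, g u) := by
        refine lintegral_ofReal_le_of_le_const_mul (by positivity) hg (.of_forall hg0)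
          (.of_forall fun u => ?_)
        refine (norm_exp_mul_cpow_div_le _ _ _ _ (lt_of_lt_of_le (by positivity) hv)).trans ?_
        rw [hscale, neg_mul, neg_sq]
        gcongr
        exact inv_le_of_inv_le₀ (by positivity) hv
    _ ≤ ENNReal.ofReal ((ξ ^ 2 * (∫ u, g u) + 1) * t) := by
        refine ENNReal.ofReal_le_ofReal ?_
        nlinarith

/-- `L¹` bound for the tilted characteristic function: for fixed `x > 0`,
`∫_ℝ |e^{−iux}(1 + iu d_t)^{−μ}| / |u*(x,t)/t + iu| du = O(t)` as `t → 0⁺`;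
in particular the integral is finite for all small enough `t > 0`. -/
theorem tilted_characteristic_function_L1_bound
    (a ξ b : ℝ) (ha : 0 < a) (hξ : 0 < ξ) (hb : b < 0)
    (μ : ℝ) (hμ_def : μ = 2 * a / ξ ^ 2) (hμ : 1 < μ)
    (ustar : ℝ → ℝ → ℝ)
    (hustar : ∀ x t, ustar x t = 2 * t / ξ ^ 2 * (b / (Real.exp (b * t) - 1) - a / x))
    (d : ℝ → ℝ → ℝ)
    (hd : ∀ x t, d x t = ξ ^ 2 * t * (1 - Real.exp (b * t))
        / (2 * b * t + ustar x t * ξ ^ 2 * (1 - Real.exp (b * t))))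
    (x : ℝ) (hx : 0 < x) :
    ∃ C > (0 : ℝ), ∃ t₀ > (0 : ℝ), ∀ t, 0 < t → t < t₀ →
      (∫⁻ u : ℝ, ENNReal.ofReal
          (‖Complex.exp (-(Complex.I * u * x))
              * (1 + Complex.I * u * d x t) ^ (-(μ : ℂ))‖
            / ‖((ustar x t / t : ℝ) + Complex.I * u : ℂ)‖))
        ≤ ENNReal.ofReal (C * t) :=
  tilted_characteristic_function_L1_bound_general a ξ b ha hξ hb μ hμ ustar hustar d hd x hx
end

section
/- For each n ≥ 1 let ν_n be the exponential distribution with rate n. Then for every Borel set A ⊆ ℝ one has −inf_{x ∈ interior(A)} Λ*(x) ≤ liminf_{n→∞} (1/n)·log ν_n(A) ≤ limsup_{n→∞} (1/n)·log ν_n(A) ≤ −inf_{x ∈ closure(A)} Λ*(x), where Λ*(x) := x for x ≥ 0 and Λ*(x) := +∞ for x < 0 (with the convention inf ∅ = +∞). -/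
/-!
The exponential law with rate `n` gives `Ici x` mass `e^{-nx}` for `x ≥ 0` and the negative
half-line mass `0`. If `A` contains an interval `[x, u)` with `x ≥ 0`, then
`ν_n(A) ≥ e^{-nx} - e^{-nu} ≥ (1 - e^{-(u-x)}) e^{-nx}`, so the exponential rate of `ν_n(A)` is
at least `-x`. If every nonnegative point of `A` is at least `c`, then `A ⊆ (-∞, 0) ∪ [c, ∞)`
and `ν_n(A) ≤ e^{-nc}`, so the rate is at most `-c`.
-/

open Real MeasureTheory Filter Topology Set ProbabilityTheory
open scoped ENNReal

namespace ProbabilityTheory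

variable {r : ℝ}

lemma expMeasure_Iic (hr : 0 < r) (x : ℝ) :
    expMeasure r (Iic x) = ENNReal.ofReal (if 0 ≤ x then 1 - exp (-(r * x)) else 0) := by
  rw [expMeasure, gammaMeasure, withDensity_apply _ measurableSet_Iic]
  exact lintegral_exponentialPDF_eq_antiDeriv hr x

lemma expMeasure_Iio (hr : 0 < r) (x : ℝ) :
    expMeasure r (Iio x) = ENNReal.ofReal (if 0 ≤ x then 1 - exp (-(r * x)) else 0) := by
  rw [← expMeasure_Iic hr x, expMeasure, gammaMeasure,
    withDensity_apply _ measurableSet_Iio, withDensity_apply _ measurableSet_Iic]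
  exact setLIntegral_congr Iio_ae_eq_Iic

lemma expMeasure_Iio_zero (hr : 0 < r) : expMeasure r (Iio 0) = 0 := by
  simp [expMeasure_Iio hr]

lemma expMeasure_Ici (hr : 0 < r) {x : ℝ} (hx : 0 ≤ x) :
    expMeasure r (Ici x) = ENNReal.ofReal (exp (-(r * x))) := by
  have := isProbabilityMeasure_expMeasure hr
  have hexp_le_one : exp (-(r * x)) ≤ 1 := exp_le_one_iff.2 (by nlinarith)
  rw [← compl_Iio, measure_compl measurableSet_Iio (measure_ne_top _ _), measure_univ,
    expMeasure_Iio hr, if_pos hx, ENNReal.ofReal_sub _ (exp_pos _).le, ENNReal.ofReal_one,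
    ENNReal.sub_sub_cancel ENNReal.one_ne_top (ENNReal.ofReal_le_one.2 hexp_le_one)]

lemma expMeasure_Ici_le (hr : 0 < r) (x : ℝ) :
    expMeasure r (Ici x) ≤ ENNReal.ofReal (exp (-(r * x))) := by
  rcases le_or_gt 0 x with hx | hx
  · exact (expMeasure_Ici hr hx).le
  · have := isProbabilityMeasure_expMeasure hr
    calc expMeasure r (Ici x) ≤ 1 := prob_le_one
      _ ≤ ENNReal.ofReal (exp (-(r * x))) :=
        ENNReal.one_le_ofReal.2 (one_le_exp (by nlinarith))

lemma expMeasure_Ico (hr : 0 < r) {x y : ℝ} (hx : 0 ≤ x) (hxy : x ≤ y) :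
    expMeasure r (Ico x y) = ENNReal.ofReal (exp (-(r * x)) - exp (-(r * y))) := by
  have := isProbabilityMeasure_expMeasure hr
  rw [← Ici_sdiff_Ici, measure_sdiff (Ici_subset_Ici.2 hxy) measurableSet_Ici.nullMeasurableSet
    (measure_ne_top _ _), expMeasure_Ici hr hx, expMeasure_Ici hr (hx.trans hxy),
    ENNReal.ofReal_sub _ (exp_pos _).le]

lemma ofReal_mul_exp_le_expMeasure_Ico (hr : 1 ≤ r) {x u : ℝ} (hx : 0 ≤ x) (hxu : x < u) :
    ENNReal.ofReal ((1 - exp (-(u - x))) * exp (-(r * x))) ≤ expMeasure r (Ico x u) := by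
  rw [expMeasure_Ico (by linarith) hx hxu.le]
  refine ENNReal.ofReal_le_ofReal ?_
  have hsplit : exp (-(r * u)) = exp (-(r * (u - x))) * exp (-(r * x)) := by
    rw [← exp_add]; ring_nf
  have hdecay : exp (-(r * (u - x))) ≤ exp (-(u - x)) :=
    exp_le_exp.2 (by nlinarith)
  rw [hsplit]
  nlinarith [exp_pos (-(r * x))]

end ProbabilityTheory

noncomputable def scaledLog (n : ℕ) (a : ℝ≥0∞) : EReal :=
  ((1 : ℝ) / n : ℝ) * ENNReal.log a

lemma scaledLog_mono (n : ℕ) : Monotone (scaledLog n) := fun _ _ hab =>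
  mul_le_mul_of_nonneg_left (ENNReal.log_monotone hab) (EReal.coe_nonneg.2 (by positivity))

lemma scaledLog_ofReal_exp (n : ℕ) (y : ℝ) :
    scaledLog n (ENNReal.ofReal (exp y)) = ((y / n : ℝ) : EReal) := by
  rw [scaledLog, ENNReal.log_ofReal_of_pos (exp_pos y), Real.log_exp, ← EReal.coe_mul,
    one_div_mul_eq_div]

lemma le_liminf_scaledLog {u : ℕ → ℝ≥0∞} {C x : ℝ} (hC : 0 < C)
    (hu : ∀ᶠ n : ℕ in atTop, ENNReal.ofReal (C * exp (-(n * x))) ≤ u n) :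
    ((-x : ℝ) : EReal) ≤ liminf (fun n => scaledLog n (u n)) atTop := by
  have hrate : Tendsto (fun n : ℕ => (((log C - n * x) / n : ℝ) : EReal)) atTop
      (𝓝 ((-x : ℝ) : EReal)) := by
    refine EReal.tendsto_coe.2 ?_
    have hlim : Tendsto (fun n : ℕ => log C / n - x) atTop (𝓝 (0 - x)) :=
      (tendsto_const_div_atTop_nhds_zero_nat _).sub_const x
    rw [zero_sub] at hlim
    refine hlim.congr' ?_
    filter_upwards [eventually_ne_atTop 0] with n hn
    field_simp
  rw [← hrate.liminf_eq]
  refine liminf_le_liminf ?_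
  filter_upwards [hu] with n hn
  rw [← scaledLog_ofReal_exp, sub_eq_add_neg, exp_add, exp_log hC]
  exact scaledLog_mono n hn

lemma limsup_scaledLog_le {u : ℕ → ℝ≥0∞} {c : ℝ}
    (hu : ∀ᶠ n : ℕ in atTop, u n ≤ ENNReal.ofReal (exp (-(n * c)))) :
    limsup (fun n => scaledLog n (u n)) atTop ≤ ((-c : ℝ) : EReal) := by
  refine limsup_le_of_le (by isBoundedDefault) ?_
  filter_upwards [hu, eventually_ne_atTop 0] with n hn hn0
  calc scaledLog n (u n) ≤ scaledLog n (ENNReal.ofReal (exp (-(n * c)))) := scaledLog_mono n hn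
    _ = ((-c : ℝ) : EReal) := by
      rw [scaledLog_ofReal_exp]
      field_simp

theorem exponential_LDP_general
    (ν : ℕ → Measure ℝ)
    (hν : ∀ n : ℕ, 1 ≤ n → ν n = ProbabilityTheory.expMeasure n)
    (Λstar : ℝ → EReal)
    (hΛstar : ∀ x, Λstar x = if 0 ≤ x then (x : EReal) else ⊤)
    (A : Set ℝ) :
    -(⨅ x ∈ interior A, Λstar x)
        ≤ liminf (fun n : ℕ => ((1 : ℝ) / n : ℝ) * ENNReal.log (ν n A)) atTop
    ∧ liminf (fun n : ℕ => ((1 : ℝ) / n : ℝ) * ENNReal.log (ν n A)) atTop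
        ≤ limsup (fun n : ℕ => ((1 : ℝ) / n : ℝ) * ENNReal.log (ν n A)) atTop
    ∧ limsup (fun n : ℕ => ((1 : ℝ) / n : ℝ) * ENNReal.log (ν n A)) atTop
        ≤ -(⨅ x ∈ closure A, Λstar x) := by
  refine ⟨?_, liminf_le_limsup, ?_⟩
  · rw [EReal.neg_le]
    refine le_iInf₂ fun x hx => ?_
    rw [hΛstar]
    split_ifs with hx0
    · obtain ⟨u, hxu, hIco⟩ := exists_Ico_subset_of_mem_nhds (mem_interior_iff_mem_nhds.1 hx)
        ⟨x + 1, lt_add_one x⟩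
      rw [EReal.neg_le, ← EReal.coe_neg]
      refine le_liminf_scaledLog (C := 1 - exp (-(u - x))) (sub_pos.2 (exp_lt_one_iff.2 (by linarith))) ?_
      filter_upwards [eventually_ge_atTop 1] with n hn
      rw [hν n hn]
      exact (ofReal_mul_exp_le_expMeasure_Ico (by exact_mod_cast hn) hx0 hxu).trans
        (measure_mono hIco)
    · exact le_top
  · refine EReal.le_of_forall_lt_iff_le.1 fun z hz => ?_
    have hcover : A ⊆ Iio 0 ∪ Ici (-z) := fun a ha => by
      refine (lt_or_ge a 0).imp id fun ha0 => le_of_lt (EReal.coe_lt_coe_iff.1 ?_)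
      calc ((-z : ℝ) : EReal) < ⨅ x ∈ closure A, Λstar x := EReal.neg_lt_comm.1 hz
        _ ≤ Λstar a := iInf₂_le a (subset_closure ha)
        _ = a := by rw [hΛstar, if_pos ha0]
    rw [← neg_neg z]
    refine limsup_scaledLog_le ?_
    filter_upwards [eventually_ge_atTop 1] with n hn
    have hn' : (0 : ℝ) < n := by exact_mod_cast hn
    rw [hν n hn]
    calc expMeasure n A ≤ expMeasure n (Iio 0) + expMeasure n (Ici (-z)) :=
          (measure_mono hcover).trans (measure_union_le _ _)
      _ ≤ _ := by rw [expMeasure_Iio_zero hn', zero_add]; exact expMeasure_Ici_le hn' _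

/-- Large deviations principle for exponential laws `ν_n` with rate `n`, with the
non-strictly-convex rate function `Λ*(x) = x` for `x ≥ 0` and `+∞` for `x < 0`. -/
theorem exponential_LDP
    (ν : ℕ → Measure ℝ)
    (hν : ∀ n : ℕ, 1 ≤ n → ν n = ProbabilityTheory.expMeasure n)
    (Λstar : ℝ → EReal)
    (hΛstar : ∀ x, Λstar x = if 0 ≤ x then (x : EReal) else ⊤)
    (A : Set ℝ) (hA : MeasurableSet A) :
    -(⨅ x ∈ interior A, Λstar x)
        ≤ liminf (fun n : ℕ => ((1 : ℝ) / n : ℝ) * ENNReal.log (ν n A)) atTop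
    ∧ liminf (fun n : ℕ => ((1 : ℝ) / n : ℝ) * ENNReal.log (ν n A)) atTop
        ≤ limsup (fun n : ℕ => ((1 : ℝ) / n : ℝ) * ENNReal.log (ν n A)) atTop
    ∧ limsup (fun n : ℕ => ((1 : ℝ) / n : ℝ) * ENNReal.log (ν n A)) atTop
        ≤ -(⨅ x ∈ closure A, Λstar x) :=
  exponential_LDP_general ν hν Λstar hΛstar A
end
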